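/- arXiv:1611.09828 — 4 statements merged into one kernel-verified Lean document; each statement's English description precedes it below -/
import Mathlib

section
/- The number of cup diagrams in C_KL(m) equals 2^{m-1}. -/
open scoped Classical

namespace CupDiagrams

variable {m : ℕ}

/-- Vertex `i` carries a ray: it is not an endpoint of any cup. -/
def IsRay (cup : Finset (Fin m × Fin m)) (i : Fin m) : Prop :=
  ∀ p ∈ cup, p.1 ≠ i ∧ p.2 ≠ i

/-- `(cup, cupMarked, rayMarked)` is a marked cup diagram on `m` vertices in `C_KL(m)`:
cups `(i,j)` with `i < j`, pairwise disjoint and crossingless, no ray nested inside a cup;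
markers only on components accessible from the left (a marked cup is not nested inside
another cup and has no ray to its left; a marked ray is the leftmost ray); and the number
of marked rays plus the number of unmarked cups is even. -/
def IsKL (cup cupMarked : Finset (Fin m × Fin m)) (rayMarked : Finset (Fin m)) : Prop :=
  (∀ p ∈ cup, p.1 < p.2) ∧
  (∀ p ∈ cup, ∀ q ∈ cup, p ≠ q →
      p.1 ≠ q.1 ∧ p.1 ≠ q.2 ∧ p.2 ≠ q.1 ∧ p.2 ≠ q.2) ∧
  (∀ p ∈ cup, ∀ q ∈ cup, ¬(p.1 < q.1 ∧ q.1 < p.2 ∧ p.2 < q.2)) ∧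
  (∀ p ∈ cup, ∀ i : Fin m, IsRay cup i → ¬(p.1 < i ∧ i < p.2)) ∧
  cupMarked ⊆ cup ∧
  (∀ p ∈ cupMarked, (∀ q ∈ cup, ¬(q.1 < p.1 ∧ p.2 < q.2)) ∧
      (∀ i : Fin m, IsRay cup i → ¬(i < p.1))) ∧
  (∀ i ∈ rayMarked, IsRay cup i ∧ ∀ j : Fin m, IsRay cup j → ¬(j < i)) ∧
  Even (rayMarked.card + (cup \ cupMarked).card)

end CupDiagrams

open CupDiagrams



namespace CKL
open Finset

noncomputable def ht (T : Finset ℕ) : ℕ → ℤ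
  | 0 => 0
  | t+1 => ht T t + (if t ∈ T then -1 else 1)

lemma ht_succ (T : Finset ℕ) (t : ℕ) :
    ht T (t+1) = ht T t + (if t ∈ T then -1 else 1) := rfl

lemma ht_mem {T : Finset ℕ} {t : ℕ} (h : t ∈ T) : ht T (t+1) = ht T t - 1 := by
  rw [ht_succ, if_pos h]; ring

lemma ht_not_mem {T : Finset ℕ} {t : ℕ} (h : t ∉ T) : ht T (t+1) = ht T t + 1 := by
  rw [ht_succ, if_neg h]

lemma mem_of_ht_lt {T : Finset ℕ} {t : ℕ} (h : ht T (t+1) < ht T t) : t ∈ T := by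
  by_contra hc
  rw [ht_not_mem hc] at h
  omega

lemma not_mem_of_ht_lt {T : Finset ℕ} {t : ℕ} (h : ht T t < ht T (t+1)) : t ∉ T := by
  intro hc
  rw [ht_mem hc] at h
  omega

/-- A position-pair is a matched (unmarked-cup) pair. -/
def pc (T : Finset ℕ) (i j : ℕ) : Prop :=
  i < j ∧ i ∉ T ∧ j ∈ T ∧ ht T (j+1) = ht T i ∧ ∀ t, i < t → t ≤ j → ht T i < ht T t

/-- Discrete IVT / first-hitting lemma. -/
lemma hit {T : Finset ℕ} {a b : ℕ} {c : ℤ} (hab : a ≤ b) (ha : c < ht T a)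
    (hb : ht T b ≤ c) :
    ∃ t, a ≤ t ∧ t < b ∧ ht T (t+1) = c ∧ ∀ s, a ≤ s → s ≤ t → c < ht T s := by
  have hne : a ≠ b := by rintro rfl; omega
  have hab' : a < b := lt_of_le_of_ne hab hne
  have hnonempty : ∃ u, u ∈ (Finset.range (b+1)).filter (fun u => a < u ∧ ht T u ≤ c) := by
    exact ⟨b, by simp [hab', hb]⟩
  set S := (Finset.range (b+1)).filter (fun u => a < u ∧ ht T u ≤ c) with hS
  have hSne : S.Nonempty := hnonempty
  set u0 := S.min' hSne with hu0
  have hu0mem : u0 ∈ S := S.min'_mem hSne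
  simp only [hS, Finset.mem_filter, Finset.mem_range] at hu0mem
  obtain ⟨hu0b, hau0, hu0c⟩ := hu0mem
  have hmin : ∀ s, a < s → s < u0 → c < ht T s := by
    intro s has hsu
    by_contra hc
    push_neg at hc
    have : s ∈ S := by
      simp only [hS, Finset.mem_filter, Finset.mem_range]
      exact ⟨by omega, has, hc⟩
    have := S.min'_le s this
    omega
  have hu0pos : 0 < u0 := by omega
  set t := u0 - 1 with htdef
  have ht1 : u0 = t + 1 := by omega
  have hta : a ≤ t := by omega
  have hprior : c < ht T t := by
    rcases Nat.eq_or_lt_of_le hta with h | h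
    · rw [← h]; exact ha
    · exact hmin t h (by omega)
  have hstep : ht T (t+1) = ht T t + (if t ∈ T then -1 else 1) := rfl
  have heq : ht T (t+1) = c := by
    have h2 : ht T t - 1 ≤ ht T (t+1) := by
      rw [hstep]; split <;> omega
    rw [← ht1] at h2 ⊢
    omega
  refine ⟨t, hta, by omega, heq, ?_⟩
  intro s has hst
  rcases Nat.eq_or_lt_of_le has with h | h
  · rw [← h]; exact ha
  · exact hmin s h (by omega)

lemma pc_left_unique {T : Finset ℕ} {i i' j : ℕ} (h : pc T i j) (h' : pc T i' j) :
    i = i' := by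
  by_contra hne
  rcases Nat.lt_or_ge i i' with hlt | hge
  · have h1 := h.2.2.2.2 i' hlt (le_of_lt h'.1)
    have h2 := h'.2.2.2.1
    have h3 := h.2.2.2.1
    omega
  · have hlt : i' < i := by omega
    have h1 := h'.2.2.2.2 i hlt (le_of_lt h.1)
    have h2 := h'.2.2.2.1
    have h3 := h.2.2.2.1
    omega

lemma pc_right_unique {T : Finset ℕ} {i j j' : ℕ} (h : pc T i j) (h' : pc T i j') :
    j = j' := by
  by_contra hne
  have hij := h.1
  have hij' := h'.1
  rcases Nat.lt_or_ge j j' with hlt | hge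
  · have h1 := h'.2.2.2.2 (j+1) (by omega) (by omega)
    have h2 := h.2.2.2.1
    omega
  · have hlt : j' < j := by omega
    have h1 := h.2.2.2.2 (j'+1) (by omega) (by omega)
    have h2 := h'.2.2.2.1
    omega

/-- An unmatched `∧` position. -/
def unT (T : Finset ℕ) (j : ℕ) : Prop := j ∈ T ∧ ∀ i, ¬ pc T i j

lemma unT_char {T : Finset ℕ} {j : ℕ} (hj : j ∈ T) :
    unT T j ↔ ∀ t, t ≤ j → ht T (j+1) < ht T t := by
  constructor
  · intro hu
    by_contra hc
    push_neg at hc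
    obtain ⟨t0, ht0j, ht0⟩ := hc
    classical
    set i := Nat.findGreatest (fun s => ht T s ≤ ht T (j+1)) j with hi
    have hPi : ht T i ≤ ht T (j+1) :=
      Nat.findGreatest_spec (P := fun s => ht T s ≤ ht T (j+1)) ht0j ht0
    have hgr : ∀ s, i < s → s ≤ j → ht T (j+1) < ht T s := by
      intro s hs1 hs2
      have := Nat.findGreatest_is_greatest (P := fun s => ht T s ≤ ht T (j+1))
        (by rw [← hi]; exact hs1) hs2
      omega
    have hij : i < j := by
      rcases Nat.lt_or_ge i j with h | h
      · exact h
      · exfalso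
        have hij' : i ≤ j := Nat.findGreatest_le j
        have : i = j := le_antisymm hij' h
        rw [this] at hPi
        have := ht_mem hj
        omega
    have histep : ht T i + 1 ≤ ht T (i+1) ∨ ht T (i+1) = ht T i - 1 := by
      rw [ht_succ]; split <;> omega
    have h2 : ht T (j+1) < ht T (i+1) := hgr (i+1) (by omega) (by omega)
    have hiT : i ∉ T := by
      intro hc2
      have := ht_mem hc2
      omega
    have hieq : ht T i = ht T (j+1) := by
      have := ht_not_mem hiT
      omega
    have : pc T i j := ⟨hij, hiT, hj, by omega, by
      intro t h1 h2'
      have := hgr t h1 h2'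
      omega⟩
    exact hu.2 i this
  · intro hchar
    constructor
    · exact hj
    · intro i hpc
      have := hchar i (le_of_lt hpc.1)
      have := hpc.2.2.2.1
      omega

end CKL

namespace CKL
open Finset

/-- No unmatched `∨` occurs before an unmatched `∧`. -/
lemma unF_not_lt_unT {T : Finset ℕ} {i j : ℕ} (hi : i ∉ T) (hun : ∀ j', ¬ pc T i j')
    (hj : unT T j) : ¬ i < j := by
  intro hij
  have hc := (unT_char hj.1).mp hj
  have ha : ht T i < ht T (i+1) := by rw [ht_not_mem hi]; omega
  obtain ⟨t, h1, h2, h3, h4⟩ := hit (T := T) (a := i+1) (b := j+1) (c := ht T i)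
    (by omega) (by omega) (le_of_lt (hc i (by omega)))
  have htT : t ∈ T := mem_of_ht_lt (by rw [h3]; exact h4 t h1 le_rfl)
  exact hun t ⟨by omega, hi, htT, h3, fun s hs1 hs2 => h4 s (by omega) hs2⟩

lemma ht_diff (T : Finset ℕ) {a b : ℕ} (hab : a ≤ b) :
    ht T b - ht T a =
      (((Finset.Ico a b).filter (· ∉ T)).card : ℤ) -
        (((Finset.Ico a b).filter (· ∈ T)).card : ℤ) := by
  induction b, hab using Nat.le_induction with
  | base => simp
  | succ b hab ih =>
    have hins : Finset.Ico a (b+1) = insert b (Finset.Ico a b) := by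
      rw [Nat.Ico_succ_right_eq_insert_Ico hab]
    have hbn : b ∉ Finset.Ico a b := by simp
    rw [hins, Finset.filter_insert, Finset.filter_insert, ht_succ]
    by_cases hbT : b ∈ T
    · rw [if_pos hbT, if_neg (by simp [hbT]), if_pos hbT,
        Finset.card_insert_of_notMem (by simp [hbn])]
      push_cast
      omega
    · rw [if_neg hbT, if_pos (by simp [hbT]), if_neg hbT,
        Finset.card_insert_of_notMem (by simp [hbn])]
      push_cast
      omega

end CKL


section Skel
open Finset

namespace CKL

variable {m : ℕ}

/-- image of a `Fin m` finset in ℕ -/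
noncomputable def vset (T : Finset (Fin m)) : Finset ℕ := T.image Fin.val

lemma mem_vset {T : Finset (Fin m)} {x : Fin m} : x.val ∈ vset T ↔ x ∈ T := by
  simp [vset, Fin.val_injective.eq_iff]

lemma vset_lt {T : Finset (Fin m)} {x : ℕ} (h : x ∈ vset T) : x < m := by
  simp only [vset, mem_image] at h
  obtain ⟨i, _, rfl⟩ := h
  exact i.isLt

noncomputable def umc (T : Finset (Fin m)) : Finset (Fin m × Fin m) :=
  univ.filter (fun p => pc (vset T) p.1.val p.2.val)

noncomputable def Lset (T : Finset (Fin m)) : Finset (Fin m) :=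
  T.filter (fun j => ∀ i, ¬ pc (vset T) i j.val)

noncomputable def Kp (T : Finset (Fin m)) : Finset (Fin m × Fin m) :=
  univ.filter (fun p => p.1 ∈ Lset T ∧ p.2 ∈ Lset T ∧ p.1 < p.2 ∧
    (∀ x ∈ Lset T, ¬(p.1 < x ∧ x < p.2)) ∧ Even ((Lset T).filter (· < p.1)).card)

noncomputable def Rm (T : Finset (Fin m)) : Finset (Fin m) :=
  (Lset T).filter (fun r => (∀ x ∈ Lset T, x ≤ r) ∧ Even ((Lset T).filter (· < r)).card)

noncomputable def Tset (c k : Finset (Fin m × Fin m)) (r : Finset (Fin m)) :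
    Finset (Fin m) :=
  r ∪ k.biUnion (fun p => {p.1, p.2}) ∪ (c \ k).image Prod.snd

end CKL

open CupDiagrams CKL

namespace CKL
open Finset CupDiagrams

variable {m : ℕ}

lemma mem_umc {T : Finset (Fin m)} {p : Fin m × Fin m} :
    p ∈ umc T ↔ pc (vset T) p.1.val p.2.val := by simp [umc]

lemma mem_Lset {T : Finset (Fin m)} {j : Fin m} :
    j ∈ Lset T ↔ unT (vset T) j.val := by
  simp only [Lset, mem_filter, unT, mem_vset]

lemma mem_Kp {T : Finset (Fin m)} {p : Fin m × Fin m} :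
    p ∈ Kp T ↔ p.1 ∈ Lset T ∧ p.2 ∈ Lset T ∧ p.1 < p.2 ∧
      (∀ x ∈ Lset T, ¬(p.1 < x ∧ x < p.2)) ∧
      Even ((Lset T).filter (· < p.1)).card := by
  simp [Kp]

lemma mem_Rm {T : Finset (Fin m)} {x : Fin m} :
    x ∈ Rm T ↔ x ∈ Lset T ∧ (∀ y ∈ Lset T, y ≤ x) ∧
      Even ((Lset T).filter (· < x)).card := by
  simp [Rm]

lemma Lset_subset {T : Finset (Fin m)} : Lset T ⊆ T := filter_subset _ _

lemma umc_fst_not_mem {T : Finset (Fin m)} {p : Fin m × Fin m} (h : p ∈ umc T) :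
    p.1 ∉ T := fun hc => (mem_umc.mp h).2.1 (mem_vset.mpr hc)

lemma umc_snd_mem {T : Finset (Fin m)} {p : Fin m × Fin m} (h : p ∈ umc T) :
    p.2 ∈ T := mem_vset.mp (mem_umc.mp h).2.2.1

lemma umc_lt {T : Finset (Fin m)} {p : Fin m × Fin m} (h : p ∈ umc T) :
    p.1 < p.2 := (mem_umc.mp h).1

lemma not_mem_Kp_of_mem_umc {T : Finset (Fin m)} {p : Fin m × Fin m} (h : p ∈ umc T) :
    p ∉ Kp T := fun hc => umc_fst_not_mem h (Lset_subset (mem_Kp.mp hc).1)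

lemma filter_lt_split {L : Finset (Fin m)} {a w : Fin m} (ha : a ∈ L) (haw : a < w) :
    (L.filter (· < w)).card =
      (L.filter (· < a)).card + ((L.filter (fun x => a < x ∧ x < w)).card + 1) := by
  have hsets : L.filter (· < w) =
      insert a ((L.filter (· < a)) ∪ (L.filter (fun x => a < x ∧ x < w))) := by
    ext x
    simp only [mem_filter, mem_insert, mem_union]
    constructor
    · rintro ⟨hx, hxw⟩
      rcases lt_trichotomy x a with h | h | h
      · exact Or.inr (Or.inl ⟨hx, h⟩)
      · exact Or.inl h
      · exact Or.inr (Or.inr ⟨hx, h, hxw⟩)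
    · rintro (rfl | ⟨hx, h⟩ | ⟨hx, h1, h2⟩)
      exacts [⟨ha, haw⟩, ⟨hx, h.trans haw⟩, ⟨hx, h2⟩]
  have hdisj : Disjoint (L.filter (· < a)) (L.filter (fun x => a < x ∧ x < w)) := by
    rw [disjoint_left]
    intro x h1 h2
    simp only [mem_filter] at h1 h2
    exact absurd (h1.2.trans h2.2.1) (lt_irrefl _)
  have hnotmem : a ∉ (L.filter (· < a)) ∪ (L.filter (fun x => a < x ∧ x < w)) := by
    simp only [mem_union, mem_filter]
    rintro (⟨_, h⟩ | ⟨_, h, _⟩) <;> exact absurd h (lt_irrefl _)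
  rw [hsets, card_insert_of_notMem hnotmem, card_union_of_disjoint hdisj]
  ring

lemma Kp_left {T : Finset (Fin m)} {x : Fin m} (hx : x ∈ Lset T)
    (hev : Even ((Lset T).filter (· < x)).card) {y : Fin m} (hy : y ∈ Lset T)
    (hxy : x < y) : ∃ b, (x, b) ∈ Kp T := by
  have hne : ((Lset T).filter (fun z => x < z)).Nonempty := ⟨y, by simp [hy, hxy]⟩
  set b := ((Lset T).filter (fun z => x < z)).min' hne with hbdef
  have hbmem := Finset.min'_mem _ hne
  rw [mem_filter] at hbmem
  refine ⟨b, mem_Kp.mpr ⟨hx, hbmem.1, hbmem.2, ?_, hev⟩⟩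
  intro z hz ⟨h1, h2⟩
  have : b ≤ z := Finset.min'_le _ _ (by simp [hz, h1])
  exact absurd (this.trans_lt h2) (lt_irrefl _)

lemma Kp_right {T : Finset (Fin m)} {x : Fin m} (hx : x ∈ Lset T)
    (hodd : ¬ Even ((Lset T).filter (· < x)).card) : ∃ a, (a, x) ∈ Kp T := by
  have hne : ((Lset T).filter (· < x)).Nonempty := by
    rw [← card_pos]
    by_contra hc
    push_neg at hc
    interval_cases h : ((Lset T).filter (· < x)).card
    · exact hodd (by simp)
  set a := ((Lset T).filter (· < x)).max' hne with hadef
  have hamem := Finset.max'_mem _ hne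
  rw [mem_filter] at hamem
  have hbetween : ∀ z ∈ Lset T, ¬(a < z ∧ z < x) := by
    intro z hz ⟨h1, h2⟩
    have : z ≤ a := Finset.le_max' _ _ (by simp [hz, h2])
    exact absurd (this.trans_lt h1) (lt_irrefl _)
  have hsplit := filter_lt_split (L := Lset T) hamem.1 hamem.2
  have hempty : (Lset T).filter (fun z => a < z ∧ z < x) = ∅ := by
    rw [filter_eq_empty_iff]
    intro z hz
    exact hbetween z hz
  rw [hempty, card_empty] at hsplit
  have hev : Even ((Lset T).filter (· < a)).card := by
    rw [hsplit] at hodd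
    have hodd' : ¬ Even (((Lset T).filter (· < a)).card + 1) := by simpa using hodd
    rw [Nat.even_add_one] at hodd'
    exact not_not.mp hodd'
  exact ⟨a, mem_Kp.mpr ⟨hamem.1, hx, hamem.2, hbetween, hev⟩⟩

lemma Kp_snd_odd {T : Finset (Fin m)} {p : Fin m × Fin m} (h : p ∈ Kp T) :
    ¬ Even ((Lset T).filter (· < p.2)).card := by
  obtain ⟨h1, h2, h3, h4, h5⟩ := mem_Kp.mp h
  have hsplit := filter_lt_split (L := Lset T) h1 h3
  have hempty : (Lset T).filter (fun z => p.1 < z ∧ z < p.2) = ∅ := by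
    rw [filter_eq_empty_iff]
    intro z hz
    exact h4 z hz
  rw [hempty, card_empty] at hsplit
  rw [hsplit]
  have : ((Lset T).filter (· < p.1)).card + (0 + 1)
      = ((Lset T).filter (· < p.1)).card + 1 := by ring
  rw [this, Nat.even_add_one]
  exact not_not.mpr h5

lemma Lset_cases {T : Finset (Fin m)} {x : Fin m} (hx : x ∈ Lset T) :
    (∃ p ∈ Kp T, x = p.1 ∨ x = p.2) ∨ x ∈ Rm T := by
  by_cases hev : Even ((Lset T).filter (· < x)).card
  · by_cases hy : ∃ y ∈ Lset T, x < y
    · obtain ⟨y, hy, hxy⟩ := hy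
      obtain ⟨b, hb⟩ := Kp_left hx hev hy hxy
      exact Or.inl ⟨(x, b), hb, Or.inl rfl⟩
    · push_neg at hy
      exact Or.inr (mem_Rm.mpr ⟨hx, hy, hev⟩)
  · obtain ⟨a, ha⟩ := Kp_right hx hev
    exact Or.inl ⟨(a, x), ha, Or.inr rfl⟩

lemma Rm_not_Kp_end {T : Finset (Fin m)} {x : Fin m} (hx : x ∈ Rm T)
    {p : Fin m × Fin m} (hp : p ∈ Kp T) : x ≠ p.1 ∧ x ≠ p.2 := by
  obtain ⟨hxL, hmax, hev⟩ := mem_Rm.mp hx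
  obtain ⟨h1, h2, h3, h4, h5⟩ := mem_Kp.mp hp
  constructor
  · rintro rfl
    exact absurd ((hmax p.2 h2).trans_lt h3) (lt_irrefl _)
  · rintro rfl
    exact Kp_snd_odd hp hev

end CKL


variable {m : ℕ}


namespace CKL
open Finset CupDiagrams

variable {m : ℕ}

lemma Lset_ht {T : Finset (Fin m)} {x : Fin m} (hx : x ∈ Lset T) :
    ∀ t ≤ x.val, ht (vset T) (x.val + 1) < ht (vset T) t := by
  have h := mem_Lset.mp hx
  exact (unT_char h.1).mp h

lemma Lset_not_matched {T : Finset (Fin m)} {x : Fin m} (hx : x ∈ Lset T) :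
    ∀ i, ¬ pc (vset T) i x.val := (mem_Lset.mp hx).2

lemma not_Lset_inside_umc {T : Finset (Fin m)} {p : Fin m × Fin m} (hp : p ∈ umc T)
    {x : Fin m} (hx : x ∈ Lset T) : ¬(p.1 < x ∧ x < p.2) := by
  rintro ⟨h1, h2⟩
  have hpc := mem_umc.mp hp
  have ha := hpc.2.2.2.2 (x.val + 1) (by exact Nat.lt_succ_of_lt h1) (by exact h2)
  have hb := Lset_ht hx p.1.val (le_of_lt h1)
  omega

lemma umc_noncross {T : Finset (Fin m)} {p q : Fin m × Fin m} (hp : p ∈ umc T)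
    (hq : q ∈ umc T) : ¬(p.1 < q.1 ∧ q.1 < p.2 ∧ p.2 < q.2) := by
  rintro ⟨a, b, c⟩
  have hpc := mem_umc.mp hp
  have hqc := mem_umc.mp hq
  have h1 := hpc.2.2.2.2 q.1.val a (le_of_lt b)
  have h2 := hqc.2.2.2.2 (p.2.val + 1) (Nat.lt_succ_of_lt b) (by exact c)
  have h3 := hpc.2.2.2.1
  omega

lemma matchedF_inside_umc {T : Finset (Fin m)} {p : Fin m × Fin m} (hp : p ∈ umc T)
    {w : Fin m} (hw : w ∉ T) (h1 : p.1 < w) (h2 : w < p.2) :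
    ∃ t, pc (vset T) w.val t := by
  have hpc := mem_umc.mp hp
  have hwV : w.val ∉ vset T := fun hc => hw (mem_vset.mp hc)
  have hup : ht (vset T) (w.val + 1) = ht (vset T) w.val + 1 := ht_not_mem hwV
  have hhw : ht (vset T) p.1.val < ht (vset T) w.val :=
    hpc.2.2.2.2 w.val h1 (le_of_lt h2)
  have heq := hpc.2.2.2.1
  obtain ⟨t, ha, hb, hc, hd⟩ := hit (T := vset T) (a := w.val + 1) (b := p.2.val + 1)
    (c := ht (vset T) w.val) (by omega) (by omega) (by omega)
  have htV : t ∈ vset T := mem_of_ht_lt (by rw [hc]; exact hd t ha le_rfl)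
  exact ⟨t, by omega, hwV, htV, hc, fun s hs1 hs2 => hd s (by omega) hs2⟩

lemma unF_not_lt_Lset {T : Finset (Fin m)} {w : Fin m} (hw : w ∉ T)
    (hun : ∀ t, ¬ pc (vset T) w.val t) {x : Fin m} (hx : x ∈ Lset T) : ¬ w < x := by
  have hwV : w.val ∉ vset T := fun hc => hw (mem_vset.mp hc)
  have := unF_not_lt_unT hwV hun (mem_Lset.mp hx)
  intro hc
  exact this hc

lemma matched_pair {T : Finset (Fin m)} {i : ℕ} {t : Fin m} (h : pc (vset T) i t.val) :
    ((⟨i, lt_trans h.1 t.isLt⟩ : Fin m), t) ∈ umc T := mem_umc.mpr h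

lemma Kp_fst_inj {T : Finset (Fin m)} {p q : Fin m × Fin m} (hp : p ∈ Kp T)
    (hq : q ∈ Kp T) (h : p.1 = q.1) : p = q := by
  obtain ⟨p1, p2, p3, p4, p5⟩ := mem_Kp.mp hp
  obtain ⟨q1, q2, q3, q4, q5⟩ := mem_Kp.mp hq
  have h22 : p.2 = q.2 := by
    rcases lt_trichotomy p.2 q.2 with hlt | heq | hlt
    · exact absurd ⟨h ▸ p3, hlt⟩ (q4 p.2 p2)
    · exact heq
    · exact absurd ⟨h ▸ q3, hlt⟩ (p4 q.2 q2)
  exact Prod.ext h h22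

lemma Kp_snd_inj {T : Finset (Fin m)} {p q : Fin m × Fin m} (hp : p ∈ Kp T)
    (hq : q ∈ Kp T) (h : p.2 = q.2) : p = q := by
  obtain ⟨p1, p2, p3, p4, p5⟩ := mem_Kp.mp hp
  obtain ⟨q1, q2, q3, q4, q5⟩ := mem_Kp.mp hq
  have h11 : p.1 = q.1 := by
    rcases lt_trichotomy p.1 q.1 with hlt | heq | hlt
    · exact absurd ⟨hlt, h ▸ q3⟩ (p4 q.1 q1)
    · exact heq
    · exact absurd ⟨hlt, h.symm ▸ p3⟩ (q4 p.1 p1)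
  exact Prod.ext h11 h

lemma rayA {T : Finset (Fin m)} {w : Fin m} (hray : IsRay (umc T ∪ Kp T) w)
    (hw : w ∈ T) : w ∈ Rm T := by
  by_cases hm : ∃ i, pc (vset T) i w.val
  · obtain ⟨i, hi⟩ := hm
    exact absurd rfl (hray _ (Finset.mem_union_left _ (matched_pair hi))).2
  · have hwL : w ∈ Lset T := by
      rw [Lset, Finset.mem_filter]
      exact ⟨hw, fun i hi => hm ⟨i, hi⟩⟩
    rcases Lset_cases hwL with ⟨p, hp, hend⟩ | hRm
    · have := hray p (Finset.mem_union_right _ hp)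
      rcases hend with rfl | rfl
      · exact absurd rfl this.1
      · exact absurd rfl this.2
    · exact hRm

lemma rayB {T : Finset (Fin m)} {w : Fin m} (hray : IsRay (umc T ∪ Kp T) w)
    (hw : w ∉ T) : ∀ t, ¬ pc (vset T) w.val t := by
  intro t hpc
  have htm : t < m := vset_lt hpc.2.2.1
  have hpair : ((w, (⟨t, htm⟩ : Fin m)) : Fin m × Fin m) ∈ umc T := mem_umc.mpr hpc
  exact absurd rfl (hray _ (Finset.mem_union_left _ hpair)).1

lemma ray_not_lt_Lset {T : Finset (Fin m)} {w : Fin m}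
    (hray : IsRay (umc T ∪ Kp T) w) {x : Fin m} (hx : x ∈ Lset T) : ¬ w < x := by
  by_cases hw : w ∈ T
  · have hRm := rayA hray hw
    have := (mem_Rm.mp hRm).2.1 x hx
    exact fun hc => absurd (this.trans_lt hc) (lt_irrefl _)
  · exact unF_not_lt_Lset hw (rayB hray hw) hx

end CKL

theorem thmA {T : Finset (Fin m)} (hT : Even T.card) :
    IsKL (umc T ∪ Kp T) (Kp T) (Rm T) := by
  classical
  refine ⟨?_, ?_, ?_, ?_, ?_, ?_, ?_, ?_⟩
  · -- (1) p.1 < p.2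
    intro p hp
    rcases Finset.mem_union.mp hp with hp | hp
    · exact umc_lt hp
    · exact (mem_Kp.mp hp).2.2.1
  · -- (2) distinct endpoints
    intro p hp q hq hne
    rcases Finset.mem_union.mp hp with hp | hp <;>
      rcases Finset.mem_union.mp hq with hq | hq
    · -- um, um
      have hpc := mem_umc.mp hp
      have hqc := mem_umc.mp hq
      refine ⟨?_, ?_, ?_, ?_⟩
      · intro h
        apply hne
        have h2 : p.2.val = q.2.val := by
          apply pc_right_unique hpc
          rw [show p.1.val = q.1.val from congrArg Fin.val h]
          exact hqc
        exact Prod.ext h (Fin.val_injective h2)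
      · intro h
        exact hpc.2.1 (h ▸ hqc.2.2.1)
      · intro h
        exact hqc.2.1 (h.symm ▸ hpc.2.2.1)
      · intro h
        apply hne
        have h2 : p.1.val = q.1.val := by
          apply pc_left_unique hpc
          rw [show p.2.val = q.2.val from congrArg Fin.val h]
          exact hqc
        exact Prod.ext (Fin.val_injective h2) h
    · -- um p, Kp q
      have hpc := mem_umc.mp hp
      obtain ⟨q1, q2, _, _, _⟩ := mem_Kp.mp hq
      refine ⟨?_, ?_, ?_, ?_⟩
      · intro h
        exact hpc.2.1 (mem_vset.mpr (Lset_subset (h ▸ q1)))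
      · intro h
        exact hpc.2.1 (mem_vset.mpr (Lset_subset (h ▸ q2)))
      · intro h
        refine Lset_not_matched q1 p.1.val ?_
        have hv : p.2.val = q.1.val := congrArg Fin.val h
        rw [← hv]
        exact hpc
      · intro h
        refine Lset_not_matched q2 p.1.val ?_
        have hv : p.2.val = q.2.val := congrArg Fin.val h
        rw [← hv]
        exact hpc
    · -- Kp p, um q
      have hqc := mem_umc.mp hq
      obtain ⟨p1, p2, _, _, _⟩ := mem_Kp.mp hp
      refine ⟨?_, ?_, ?_, ?_⟩
      · intro h
        exact hqc.2.1 (mem_vset.mpr (Lset_subset (h.symm ▸ p1)))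
      · intro h
        refine Lset_not_matched p1 q.1.val ?_
        have hv : p.1.val = q.2.val := congrArg Fin.val h
        rw [hv]
        exact hqc
      · intro h
        exact hqc.2.1 (mem_vset.mpr (Lset_subset (h.symm ▸ p2)))
      · intro h
        refine Lset_not_matched p2 q.1.val ?_
        have hv : p.2.val = q.2.val := congrArg Fin.val h
        rw [hv]
        exact hqc
    · -- Kp, Kp
      refine ⟨?_, ?_, ?_, ?_⟩
      · intro h; exact hne (Kp_fst_inj hp hq h)
      · intro h
        exact Kp_snd_odd hq (h ▸ (mem_Kp.mp hp).2.2.2.2)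
      · intro h
        exact Kp_snd_odd hp (h.symm ▸ (mem_Kp.mp hq).2.2.2.2)
      · intro h; exact hne (Kp_snd_inj hp hq h)
  · -- (3) noncrossing
    intro p hp q hq
    rcases Finset.mem_union.mp hp with hp | hp <;>
      rcases Finset.mem_union.mp hq with hq | hq
    · exact umc_noncross hp hq
    · rintro ⟨a, b, c⟩
      exact not_Lset_inside_umc hp (mem_Kp.mp hq).1 ⟨a, b⟩
    · rintro ⟨a, b, c⟩
      exact not_Lset_inside_umc hq (mem_Kp.mp hp).2.1 ⟨b, c⟩
    · rintro ⟨a, b, c⟩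
      exact (mem_Kp.mp hp).2.2.2.1 q.1 (mem_Kp.mp hq).1 ⟨a, b⟩
  · -- (4) no ray inside a cup
    intro p hp w hray hin
    rcases Finset.mem_union.mp hp with hp | hp
    · by_cases hw : w ∈ T
      · exact not_Lset_inside_umc hp (mem_Rm.mp (rayA hray hw)).1 hin
      · obtain ⟨t, hpc⟩ := matchedF_inside_umc hp hw hin.1 hin.2
        exact rayB hray hw t hpc
    · by_cases hw : w ∈ T
      · exact (mem_Kp.mp hp).2.2.2.1 w (mem_Rm.mp (rayA hray hw)).1 hin
      · exact unF_not_lt_Lset hw (rayB hray hw) (mem_Kp.mp hp).2.1 hin.2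
  · -- (5) subset
    exact Finset.subset_union_right
  · -- (6) marked cup conditions
    intro p hp
    constructor
    · intro q hq
      rintro ⟨a, b⟩
      rcases Finset.mem_union.mp hq with hq | hq
      · exact not_Lset_inside_umc hq (mem_Kp.mp hp).1
          ⟨a, lt_trans (mem_Kp.mp hp).2.2.1 b⟩
      · exact (mem_Kp.mp hq).2.2.2.1 p.1 (mem_Kp.mp hp).1
          ⟨a, lt_trans (mem_Kp.mp hp).2.2.1 b⟩
    · intro w hray
      exact ray_not_lt_Lset hray (mem_Kp.mp hp).1
  · -- (7) marked ray conditions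
    intro x hx
    constructor
    · intro p hp
      rcases Finset.mem_union.mp hp with hp | hp
      · have hpc := mem_umc.mp hp
        constructor
        · intro h
          exact hpc.2.1 (mem_vset.mpr (Lset_subset (h ▸ (mem_Rm.mp hx).1)))
        · intro h
          exact Lset_not_matched (h ▸ (mem_Rm.mp hx).1) p.1.val (h ▸ hpc)
      · have := Rm_not_Kp_end hx hp
        exact ⟨fun h => this.1 h.symm, fun h => this.2 h.symm⟩
    · intro w hray
      exact ray_not_lt_Lset hray (Finset.mem_of_mem_filter x hx)
  · -- (8) parity
    have hUdiff : (umc T ∪ Kp T) \ Kp T = umc T := by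
      ext p
      simp only [Finset.mem_sdiff, Finset.mem_union]
      constructor
      · rintro ⟨h | h, hn⟩
        · exact h
        · exact absurd h hn
      · intro h
        exact ⟨Or.inl h, not_mem_Kp_of_mem_umc h⟩
    rw [hUdiff]
    have hmatch_card : (umc T).card = (T.filter (fun t => ∃ i, pc (vset T) i t.val)).card := by
      apply Finset.card_bij (fun p _ => p.2)
      · intro p hp
        rw [Finset.mem_filter]
        exact ⟨umc_snd_mem hp, p.1.val, mem_umc.mp hp⟩
      · intro p hp q hq h
        have hpc := mem_umc.mp hp
        have hqc := mem_umc.mp hq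
        have : p.1.val = q.1.val := by
          apply pc_left_unique hpc
          rw [show p.2.val = q.2.val from congrArg Fin.val h]
          exact hqc
        exact Prod.ext (Fin.val_injective this) h
      · intro t ht
        rw [Finset.mem_filter] at ht
        obtain ⟨htT, i, hi⟩ := ht
        exact ⟨_, matched_pair hi, rfl⟩
    have hLdef : Lset T = T.filter (fun t => ¬ ∃ i, pc (vset T) i t.val) := by
      rw [Lset]
      apply Finset.filter_congr
      intro t _
      push_neg
      rfl
    have hsplitT : (T.filter (fun t => ∃ i, pc (vset T) i t.val)).card + (Lset T).card
        = T.card := by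
      rw [hLdef]
      exact Finset.card_filter_add_card_filter_not _
    rw [Nat.even_iff] at hT ⊢
    by_cases hL : (Lset T).Nonempty
    · set M := (Lset T).max' hL with hMdef
      have hMmem := (Lset T).max'_mem hL
      have herase : (Lset T).filter (· < M) = (Lset T).erase M := by
        ext x
        simp only [Finset.mem_filter, Finset.mem_erase]
        constructor
        · rintro ⟨h1, h2⟩
          exact ⟨h2.ne, h1⟩
        · rintro ⟨h1, h2⟩
          exact ⟨h2, lt_of_le_of_ne (Finset.le_max' _ _ h2) h1⟩
      have hcarde : ((Lset T).filter (· < M)).card = (Lset T).card - 1 := by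
        rw [herase, Finset.card_erase_of_mem hMmem]
      have hRsub : Rm T ⊆ {M} := by
        intro x hx
        rw [Finset.mem_singleton]
        exact le_antisymm (Finset.le_max' _ _ (mem_Rm.mp hx).1)
          ((mem_Rm.mp hx).2.1 M hMmem)
      have hLpos : 1 ≤ (Lset T).card := Finset.card_pos.mpr hL
      by_cases hpar : Even ((Lset T).card - 1)
      · have hMR : M ∈ Rm T := mem_Rm.mpr
          ⟨hMmem, fun y hy => Finset.le_max' _ _ hy, by rw [hcarde]; exact hpar⟩
        have hReq : Rm T = {M} :=
          Finset.Subset.antisymm hRsub (Finset.singleton_subset_iff.mpr hMR)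
        rw [hReq, Finset.card_singleton]
        rw [Nat.even_iff] at hpar
        omega
      · have hReq : Rm T = ∅ := by
          rw [Finset.eq_empty_iff_forall_notMem]
          intro x hx
          have hxM : x = M := Finset.mem_singleton.mp (hRsub hx)
          apply hpar
          rw [← hcarde]
          exact hxM ▸ (mem_Rm.mp hx).2.2
        rw [hReq, Finset.card_empty]
        rw [Nat.not_even_iff] at hpar
        omega
    · have hLe : Lset T = ∅ := Finset.not_nonempty_iff_eq_empty.mp hL
      have hRe : Rm T = ∅ := by
        rw [Rm, hLe]
        rfl
      have hL0 : (Lset T).card = 0 := by rw [hLe]; rfl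
      have hR0 : (Rm T).card = 0 := by rw [hRe]; rfl
      omega

theorem thmB (T : Finset (Fin m)) : Tset (umc T ∪ Kp T) (Kp T) (Rm T) = T := by
  ext x
  simp only [Tset, Finset.mem_union, Finset.mem_biUnion, Finset.mem_image,
    Finset.mem_sdiff, Finset.mem_insert, Finset.mem_singleton]
  constructor
  · rintro ((hx | ⟨p, hp, hx⟩) | ⟨p, ⟨hp, _⟩, hx⟩)
    · exact Lset_subset (Finset.mem_of_mem_filter _ hx)
    · rcases hx with rfl | rfl
      · exact Lset_subset (CKL.mem_Kp.mp hp).1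
      · exact Lset_subset (CKL.mem_Kp.mp hp).2.1
    · rcases hp with hp | hp
      · exact hx ▸ umc_snd_mem hp
      · exact hx ▸ Lset_subset (CKL.mem_Kp.mp hp).2.1
  · intro hx
    by_cases hm : ∃ i, pc (vset T) i x.val
    · obtain ⟨i, hi⟩ := hm
      have him : i < m := lt_trans hi.1 (vset_lt hi.2.2.1)
      right
      refine ⟨(⟨i, him⟩, x), ⟨Or.inl (mem_umc.mpr hi), ?_⟩, rfl⟩
      intro hc
      exact umc_fst_not_mem (mem_umc.mpr hi) (Lset_subset (CKL.mem_Kp.mp hc).1)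
    · have hxL : x ∈ Lset T := by
        rw [Lset, Finset.mem_filter]
        exact ⟨hx, fun i hi => hm ⟨i, hi⟩⟩
      rcases Lset_cases hxL with ⟨p, hp, hend⟩ | hRm
      · left; right
        exact ⟨p, hp, by tauto⟩
      · left; left; exact hRm

-- chunk 1 for thmC, to be inserted before thmC
namespace CKL
open Finset CupDiagrams

variable {m : ℕ} {c k : Finset (Fin m × Fin m)} {r : Finset (Fin m)}

lemma mem_Tset {x : Fin m} :
    x ∈ Tset c k r ↔ x ∈ r ∨ (∃ p ∈ k, x = p.1 ∨ x = p.2) ∨ ∃ p ∈ c \ k, x = p.2 := by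
  simp only [Tset, Finset.mem_union, Finset.mem_biUnion, Finset.mem_image,
    Finset.mem_insert, Finset.mem_singleton]
  constructor
  · rintro ((h | ⟨p, hp, hx⟩) | ⟨p, hp, hx⟩)
    · exact Or.inl h
    · exact Or.inr (Or.inl ⟨p, hp, hx⟩)
    · exact Or.inr (Or.inr ⟨p, hp, hx.symm⟩)
  · rintro (h | ⟨p, hp, hx⟩ | ⟨p, hp, hx⟩)
    · exact Or.inl (Or.inl h)
    · exact Or.inl (Or.inr ⟨p, hp, hx⟩)
    · exact Or.inr ⟨p, hp, hx.symm⟩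

lemma fst_not_mem_Tset (h : IsKL c k r) {p : Fin m × Fin m} (hp : p ∈ c \ k) :
    p.1 ∉ Tset c k r := by
  obtain ⟨h1, h2, h3, h4, h5, h6, h7, h8⟩ := h
  intro hc
  rcases mem_Tset.mp hc with hx | ⟨q, hq, hx⟩ | ⟨q, hq, hx⟩
  · exact ((h7 _ hx).1 p (Finset.mem_sdiff.mp hp).1).1 rfl
  · have hne : p ≠ q := fun hc => (Finset.mem_sdiff.mp hp).2 (hc ▸ hq)
    have := h2 p (Finset.mem_sdiff.mp hp).1 q (h5 hq) hne
    rcases hx with hx | hx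
    · exact this.1 hx
    · exact this.2.1 hx
  · by_cases hpq : p = q
    · exact absurd (hpq ▸ hx : p.1 = p.2) (h1 p (Finset.mem_sdiff.mp hp).1).ne
    · exact (h2 p (Finset.mem_sdiff.mp hp).1 q (Finset.mem_sdiff.mp hq).1 hpq).2.1 hx

lemma ray_not_mem_Tset (h : IsKL c k r) {x : Fin m} (hray : IsRay c x) (hr : x ∉ r) :
    x ∉ Tset c k r := by
  obtain ⟨h1, h2, h3, h4, h5, h6, h7, h8⟩ := h
  intro hc
  rcases mem_Tset.mp hc with hx | ⟨q, hq, hx⟩ | ⟨q, hq, hx⟩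
  · exact hr hx
  · rcases hx with hx | hx
    · exact (hray q (h5 hq)).1 hx.symm
    · exact (hray q (h5 hq)).2 hx.symm
  · exact (hray q (Finset.mem_sdiff.mp hq).1).2 hx.symm

lemma not_mem_Tset_cases (h : IsKL c k r) {x : Fin m} (hx : x ∉ Tset c k r) :
    (IsRay c x ∧ x ∉ r) ∨ ∃ q ∈ c \ k, x = q.1 := by
  obtain ⟨h1, h2, h3, h4, h5, h6, h7, h8⟩ := h
  by_cases hray : IsRay c x
  · exact Or.inl ⟨hray, fun hc => hx (mem_Tset.mpr (Or.inl hc))⟩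
  · right
    rw [IsRay] at hray
    push_neg at hray
    obtain ⟨q, hq, hend⟩ := hray
    have hend' : x = q.1 ∨ x = q.2 := by
      by_cases h1' : q.1 = x
      · exact Or.inl h1'.symm
      · exact Or.inr (hend h1').symm
    by_cases hqk : q ∈ k
    · exact absurd (mem_Tset.mpr (Or.inr (Or.inl ⟨q, hqk, hend'⟩))) hx
    · rcases hend' with hx' | hx'
      · exact ⟨q, Finset.mem_sdiff.mpr ⟨hq, hqk⟩, hx'⟩
      · exact absurd (mem_Tset.mpr (Or.inr (Or.inr ⟨q, Finset.mem_sdiff.mpr ⟨hq, hqk⟩, hx'⟩)))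
          hx

/-- marked cups have pairwise disjoint intervals -/
lemma kdisj (h : IsKL c k r) {p q : Fin m × Fin m} (hp : p ∈ k) (hq : q ∈ k)
    (hne : p ≠ q) : q.2 < p.1 ∨ p.2 < q.1 := by
  obtain ⟨h1, h2, h3, h4, h5, h6, h7, h8⟩ := h
  obtain ⟨d1, d2, d3, d4⟩ := h2 p (h5 hp) q (h5 hq) hne
  have hp12 := h1 p (h5 hp)
  have hq12 := h1 q (h5 hq)
  rcases lt_trichotomy p.1 q.1 with hlt | heq | hlt
  · right
    rcases lt_trichotomy q.1 p.2 with hlt2 | heq2 | hlt2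
    · exfalso
      rcases lt_trichotomy q.2 p.2 with hlt3 | heq3 | hlt3
      · exact (h6 q hq).1 p (h5 hp) ⟨hlt, hlt3⟩
      · exact d4 heq3.symm
      · exact h3 p (h5 hp) q (h5 hq) ⟨hlt, hlt2, hlt3⟩
    · exact absurd heq2.symm d3
    · exact hlt2
  · exact absurd heq d1
  · left
    rcases lt_trichotomy p.1 q.2 with hlt2 | heq2 | hlt2
    · exfalso
      rcases lt_trichotomy p.2 q.2 with hlt3 | heq3 | hlt3
      · exact (h6 p hp).1 q (h5 hq) ⟨hlt, hlt3⟩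
      · exact d4 heq3
      · exact h3 q (h5 hq) p (h5 hp) ⟨hlt, hlt2, hlt3⟩
    · exact absurd heq2 d2
    · exact hlt2

/-- rays lie to the right of marked cups -/
lemma ray_gt_marked (h : IsKL c k r) {p : Fin m × Fin m} (hp : p ∈ k) {x : Fin m}
    (hray : IsRay c x) : p.2 < x := by
  obtain ⟨h1, h2, h3, h4, h5, h6, h7, h8⟩ := h
  have hn1 : ¬ x < p.1 := (h6 p hp).2 x hray
  have hn2 : ¬ (p.1 < x ∧ x < p.2) := h4 p (h5 hp) x hray
  have hne1 : p.1 ≠ x := (hray p (h5 hp)).1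
  have hne2 : p.2 ≠ x := (hray p (h5 hp)).2
  rcases lt_trichotomy x p.2 with hlt | heq | hlt
  · exfalso
    rcases lt_trichotomy x p.1 with ha | hb | hc
    · exact hn1 ha
    · exact hne1 hb.symm
    · exact hn2 ⟨hc, hlt⟩
  · exact absurd heq.symm hne2
  · exact hlt

lemma r_unique (h : IsKL c k r) {x y : Fin m} (hx : x ∈ r) (hy : y ∈ r) : x = y := by
  obtain ⟨h1, h2, h3, h4, h5, h6, h7, h8⟩ := h
  have hxr := h7 x hx
  have hyr := h7 y hy
  rcases lt_trichotomy x y with hlt | heq | hlt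
  · exact absurd hlt (hyr.2 x hxr.1)
  · exact heq
  · exact absurd hlt (hxr.2 y hyr.1)

end CKL



namespace CKL
open Finset CupDiagrams

variable {m : ℕ} {c k : Finset (Fin m × Fin m)} {r : Finset (Fin m)}

/-- every `∨` left of a special position has its partner `∧` strictly below it -/
lemma partner_below (h : IsKL c k r) {j : Fin m}
    (hj : j ∈ r ∨ ∃ p ∈ k, j = p.1 ∨ j = p.2) {x : Fin m} (hx : x ∉ Tset c k r)
    (hxj : x < j) : ∃ q ∈ c \ k, x = q.1 ∧ q.2 < j := by
  obtain ⟨h1, h2, h3, h4, h5, h6, h7, h8⟩ := h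
  rcases not_mem_Tset_cases ⟨h1, h2, h3, h4, h5, h6, h7, h8⟩ hx with ⟨hray, hr⟩ | ⟨q, hq, rfl⟩
  · exfalso
    rcases hj with hjr | ⟨p, hp, hjp⟩
    · exact (h7 j hjr).2 x hray hxj
    · have hgt := ray_gt_marked ⟨h1, h2, h3, h4, h5, h6, h7, h8⟩ hp hray
      have hp12 := h1 p (h5 hp)
      rcases hjp with rfl | rfl
      · exact absurd (hxj.trans (hp12.trans hgt)) (lt_irrefl _)
      · exact absurd (hxj.trans hgt) (lt_irrefl _)
  · have hqc := (Finset.mem_sdiff.mp hq).1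
    have hqk := (Finset.mem_sdiff.mp hq).2
    have hq12 := h1 q hqc
    refine ⟨q, hq, rfl, ?_⟩
    rcases hj with hjr | ⟨p, hp, hjp⟩
    · have hjray := (h7 j hjr).1
      have hne2 : q.2 ≠ j := (hjray q hqc).2
      rcases lt_trichotomy q.2 j with hlt | heq | hlt
      · exact hlt
      · exact absurd heq hne2
      · exact absurd ⟨hxj, hlt⟩ (h4 q hqc j hjray)
    · have hpc := h5 hp
      have hne : q ≠ p := fun hc => hqk (hc ▸ hp)
      obtain ⟨d1, d2, d3, d4⟩ := h2 q hqc p hpc hne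
      have hp12 := h1 p hpc
      rcases hjp with rfl | rfl
      · rcases lt_trichotomy q.2 p.1 with hlt | heq | hlt
        · exact hlt
        · exact absurd heq d3
        · exfalso
          rcases lt_trichotomy q.2 p.2 with hlt2 | heq2 | hlt2
          · exact h3 q hqc p hpc ⟨hxj, hlt, hlt2⟩
          · exact d4 heq2
          · exact (h6 p hp).1 q hqc ⟨hxj, hlt2⟩
      · rcases lt_trichotomy q.1 p.1 with hlt | heq | hlt
        · rcases lt_trichotomy q.2 p.1 with hlt2 | heq2 | hlt2
          · exact hlt2.trans hp12
          · exact absurd heq2 d3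
          · exfalso
            rcases lt_trichotomy q.2 p.2 with hlt3 | heq3 | hlt3
            · exact h3 q hqc p hpc ⟨hlt, hlt2, hlt3⟩
            · exact d4 heq3
            · exact (h6 p hp).1 q hqc ⟨hlt, hlt3⟩
        · exact absurd heq d1
        · rcases lt_trichotomy q.2 p.2 with hlt2 | heq2 | hlt2
          · exact hlt2
          · exact absurd heq2 d4
          · exact absurd ⟨hlt, hxj, hlt2⟩ (h3 p hpc q hqc)

/-- special positions (marked-cup endpoints and marked rays) are unmatched -/
lemma special_unmatched (h : IsKL c k r) {j : Fin m}
    (hj : j ∈ r ∨ ∃ p ∈ k, j = p.1 ∨ j = p.2) :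
    ∀ i, ¬ pc (vset (Tset c k r)) i j.val := by
  classical
  intro i hpc
  obtain ⟨hij, hiV, hjV, heq, hall⟩ := hpc
  have hdiff := ht_diff (vset (Tset c k r)) (a := i) (b := j.val + 1) (by omega)
  set V := vset (Tset c k r) with hV
  set F := (Finset.Ico i (j.val+1)).filter (· ∉ V) with hF
  set Tc := (Finset.Ico i (j.val+1)).filter (· ∈ V) with hTc
  have hjTc : j.val ∈ Tc := by
    rw [hTc, Finset.mem_filter, Finset.mem_Ico]
    exact ⟨⟨by omega, by omega⟩, hjV⟩
  have hP : ∀ x ∈ F, ∃ q, q ∈ c \ k ∧ q.1.val = x ∧ q.2 < j := by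
    intro x hxF
    rw [hF, Finset.mem_filter, Finset.mem_Ico] at hxF
    obtain ⟨⟨hx1, hx2⟩, hxV⟩ := hxF
    have hxj : x ≠ j.val := fun hc => hxV (hc ▸ hjV)
    have hxm : x < m := by omega
    have hvx : (⟨x, hxm⟩ : Fin m) ∉ Tset c k r := fun hc => hxV (mem_vset.mpr hc)
    obtain ⟨q, hq, hq1, hq2⟩ := partner_below h hj hvx (by
      rw [Fin.lt_def]
      show x < j.val
      omega)
    exact ⟨q, hq, by rw [← hq1], hq2⟩
  set f : ℕ → ℕ := fun x =>
    if hx : ∃ q, q ∈ c \ k ∧ q.1.val = x ∧ q.2 < j then (Classical.choose hx).2.val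
    else 0 with hf
  have hfval : ∀ x (hx : ∃ q, q ∈ c \ k ∧ q.1.val = x ∧ q.2 < j),
      f x = (Classical.choose hx).2.val := by
    intro x hx
    rw [hf]
    simp only [dif_pos hx]
  have hmaps : ∀ x ∈ F, f x ∈ Tc.erase j.val := by
    intro x hxF
    have hex := hP x hxF
    rw [hfval x hex]
    obtain ⟨hqm, hq1, hq2⟩ := Classical.choose_spec hex
    set q := Classical.choose hex with hqdef
    have hq12 : q.1 < q.2 := h.1 q (Finset.mem_sdiff.mp hqm).1
    have hq2W : q.2 ∈ Tset c k r := mem_Tset.mpr (Or.inr (Or.inr ⟨q, hqm, rfl⟩))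
    rw [hF, Finset.mem_filter, Finset.mem_Ico] at hxF
    rw [Finset.mem_erase, hTc, Finset.mem_filter, Finset.mem_Ico]
    have hlt : q.2.val < j.val := hq2
    have hlt2 : q.1.val < q.2.val := hq12
    refine ⟨by omega, ⟨by omega, by omega⟩, mem_vset.mpr hq2W⟩
  have hinj : Set.InjOn f F := by
    intro x hx y hy hxy
    have hex := hP x hx
    have hey := hP y hy
    rw [hfval x hex, hfval y hey] at hxy
    obtain ⟨hqmx, hqx1, _⟩ := Classical.choose_spec hex
    obtain ⟨hqmy, hqy1, _⟩ := Classical.choose_spec hey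
    have hqq : Classical.choose hex = Classical.choose hey := by
      by_contra hne
      exact (h.2.1 _ (Finset.mem_sdiff.mp hqmx).1 _ (Finset.mem_sdiff.mp hqmy).1
        hne).2.2.2 (Fin.val_injective hxy)
    rw [← hqx1, ← hqy1, hqq]
  have hcard : F.card ≤ (Tc.erase j.val).card :=
    Finset.card_le_card_of_injOn f hmaps hinj
  rw [Finset.card_erase_of_mem hjTc] at hcard
  have hTcpos : 1 ≤ Tc.card := Finset.card_pos.mpr ⟨j.val, hjTc⟩
  rw [heq] at hdiff
  omega

end CKL



namespace CKL
open Finset CupDiagrams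

variable {m : ℕ} {c k : Finset (Fin m × Fin m)} {r : Finset (Fin m)}

lemma interior_true (h : IsKL c k r) {p : Fin m × Fin m} (hp : p ∈ c \ k) {x : Fin m}
    (hx : x ∈ Tset c k r) (h1x : p.1 < x) (hx2 : x < p.2) :
    ∃ q ∈ c \ k, x = q.2 ∧ p.1 < q.1 ∧ q.1 < x := by
  obtain ⟨h1, h2, h3, h4, h5, h6, h7, h8⟩ := h
  have hpc := (Finset.mem_sdiff.mp hp).1
  rcases mem_Tset.mp hx with hxr | ⟨q', hq', hx'⟩ | ⟨q, hq, rfl⟩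
  · exact absurd ⟨h1x, hx2⟩ (h4 p hpc x (h7 x hxr).1)
  · exfalso
    have hq'c := h5 hq'
    have hne : q' ≠ p := fun hc => (Finset.mem_sdiff.mp hp).2 (hc ▸ hq')
    obtain ⟨d1, d2, d3, d4⟩ := h2 q' hq'c p hpc hne
    have hq'12 := h1 q' hq'c
    rcases hx' with rfl | rfl
    · rcases lt_trichotomy q'.2 p.2 with hlt | heq | hlt
      · exact (h6 q' hq').1 p hpc ⟨h1x, hlt⟩
      · exact d4 heq
      · exact h3 p hpc q' hq'c ⟨h1x, hx2, hlt⟩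
    · rcases lt_trichotomy q'.1 p.1 with hlt | heq | hlt
      · exact h3 q' hq'c p hpc ⟨hlt, h1x, hx2⟩
      · exact d1 heq
      · exact (h6 q' hq').1 p hpc ⟨hlt, hx2⟩
  · have hqc := (Finset.mem_sdiff.mp hq).1
    have hne : q ≠ p := by
      intro hc
      rw [hc] at hx2
      exact absurd hx2 (lt_irrefl _)
    obtain ⟨d1, d2, d3, d4⟩ := h2 q hqc p hpc hne
    have hq12 := h1 q hqc
    rcases lt_trichotomy q.1 p.1 with hlt | heq | hlt
    · exact absurd ⟨hlt, h1x, hx2⟩ (h3 q hqc p hpc)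
    · exact absurd heq d1
    · exact ⟨q, hq, rfl, hlt, hq12⟩

lemma interior_false (h : IsKL c k r) {p : Fin m × Fin m} (hp : p ∈ c \ k) {x : Fin m}
    (hx : x ∉ Tset c k r) (h1x : p.1 < x) (hx2 : x < p.2) :
    ∃ q ∈ c \ k, x = q.1 ∧ q.2 < p.2 ∧ x < q.2 := by
  obtain ⟨h1, h2, h3, h4, h5, h6, h7, h8⟩ := h
  have hpc := (Finset.mem_sdiff.mp hp).1
  rcases not_mem_Tset_cases ⟨h1, h2, h3, h4, h5, h6, h7, h8⟩ hx with ⟨hray, _⟩ | ⟨q, hq, rfl⟩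
  · exact absurd ⟨h1x, hx2⟩ (h4 p hpc x hray)
  · have hqc := (Finset.mem_sdiff.mp hq).1
    have hne : q ≠ p := by
      intro hc
      rw [hc] at h1x
      exact absurd h1x (lt_irrefl _)
    obtain ⟨d1, d2, d3, d4⟩ := h2 q hqc p hpc hne
    have hq12 := h1 q hqc
    rcases lt_trichotomy q.2 p.2 with hlt | heq | hlt
    · exact ⟨q, hq, rfl, hlt, hq12⟩
    · exact absurd heq d4
    · exact absurd ⟨h1x, hx2, hlt⟩ (h3 p hpc q hqc)

lemma cup_pc (h : IsKL c k r) {p : Fin m × Fin m} (hp : p ∈ c \ k) :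
    pc (vset (Tset c k r)) p.1.val p.2.val := by
  classical
  have hpc := (Finset.mem_sdiff.mp hp).1
  have hlt : p.1 < p.2 := h.1 p hpc
  have hiW : p.1 ∉ Tset c k r := fst_not_mem_Tset h hp
  have hiV : p.1.val ∉ vset (Tset c k r) := fun hc => hiW (mem_vset.mp hc)
  have hjW : p.2 ∈ Tset c k r := mem_Tset.mpr (Or.inr (Or.inr ⟨p, hp, rfl⟩))
  have hjV : p.2.val ∈ vset (Tset c k r) := mem_vset.mpr hjW
  have hup : ht (vset (Tset c k r)) (p.1.val + 1) = ht (vset (Tset c k r)) p.1.val + 1 :=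
    ht_not_mem hiV
  -- the ∀ part
  have hforall : ∀ t, p.1.val < t → t ≤ p.2.val →
      ht (vset (Tset c k r)) p.1.val < ht (vset (Tset c k r)) t := by
    intro t h1t ht2
    have hdiff := ht_diff (vset (Tset c k r)) (a := p.1.val + 1) (b := t) (by omega)
    set V := vset (Tset c k r) with hV
    set F := (Finset.Ico (p.1.val + 1) t).filter (· ∉ V) with hFd
    set Tc := (Finset.Ico (p.1.val + 1) t).filter (· ∈ V) with hTd
    have hQ : ∀ x ∈ Tc, ∃ q, q ∈ c \ k ∧ q.2.val = x ∧ p.1 < q.1 := by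
      intro x hxT
      rw [hTd, Finset.mem_filter, Finset.mem_Ico] at hxT
      obtain ⟨⟨hx1, hx2⟩, hxV⟩ := hxT
      have hxm : x < m := by
        have := p.2.isLt
        omega
      have hvx : (⟨x, hxm⟩ : Fin m) ∈ Tset c k r := mem_vset.mp hxV
      have hxlt2 : (⟨x, hxm⟩ : Fin m) < p.2 := by
        rw [Fin.lt_def]; show x < p.2.val
        have hne : x ≠ p.2.val → x < p.2.val := by omega
        rcases Nat.lt_or_ge x p.2.val with hc | hc
        · exact hc
        · have : x = p.2.val := by omega
          exact absurd this (by
            intro hix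
            exact absurd hix (by omega))
      obtain ⟨q, hq, hq2, hq1a, hq1b⟩ := interior_true h hp hvx
        (by rw [Fin.lt_def]; show p.1.val < x; omega) hxlt2
      exact ⟨q, hq, by rw [← hq2], hq1a⟩
    set g : ℕ → ℕ := fun x =>
      if hx : ∃ q, q ∈ c \ k ∧ q.2.val = x ∧ p.1 < q.1 then (Classical.choose hx).1.val
      else 0 with hg
    have hgval : ∀ x (hx : ∃ q, q ∈ c \ k ∧ q.2.val = x ∧ p.1 < q.1),
        g x = (Classical.choose hx).1.val := by
      intro x hx
      rw [hg]
      simp only [dif_pos hx]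
    have hmaps : ∀ x ∈ Tc, g x ∈ F := by
      intro x hxT
      have hex := hQ x hxT
      rw [hgval x hex]
      obtain ⟨hqm, hq2, hq1⟩ := Classical.choose_spec hex
      set q := Classical.choose hex
      have hq12 : q.1 < q.2 := h.1 q (Finset.mem_sdiff.mp hqm).1
      rw [hTd, Finset.mem_filter, Finset.mem_Ico] at hxT
      rw [hFd, Finset.mem_filter, Finset.mem_Ico]
      have hv1 : q.1.val < q.2.val := hq12
      have hv2 : p.1.val < q.1.val := hq1
      refine ⟨⟨by omega, by omega⟩, ?_⟩
      intro hc
      exact fst_not_mem_Tset h hqm (mem_vset.mp hc)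
    have hinj : Set.InjOn g Tc := by
      intro x hx y hy hxy
      have hex := hQ x hx
      have hey := hQ y hy
      rw [hgval x hex, hgval y hey] at hxy
      obtain ⟨hqmx, hqx2, _⟩ := Classical.choose_spec hex
      obtain ⟨hqmy, hqy2, _⟩ := Classical.choose_spec hey
      have hqq : Classical.choose hex = Classical.choose hey := by
        by_contra hne
        exact (h.2.1 _ (Finset.mem_sdiff.mp hqmx).1 _ (Finset.mem_sdiff.mp hqmy).1
          hne).1 (Fin.val_injective hxy)
      rw [← hqx2, ← hqy2, hqq]
    have hcard : Tc.card ≤ F.card := Finset.card_le_card_of_injOn g hmaps hinj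
    omega
  -- the balance part
  have hbal : ht (vset (Tset c k r)) (p.2.val + 1) = ht (vset (Tset c k r)) p.1.val := by
    have hdiff := ht_diff (vset (Tset c k r)) (a := p.1.val) (b := p.2.val + 1)
      (by have : p.1.val < p.2.val := hlt; omega)
    set V := vset (Tset c k r) with hV
    set N := (c \ k).filter (fun q => p.1 < q.1 ∧ q.2 < p.2) with hN
    have hvlt : p.1.val < p.2.val := hlt
    have hFeq : (Finset.Ico p.1.val (p.2.val + 1)).filter (· ∉ V)
        = insert p.1.val (N.image (fun q => q.1.val)) := by
      ext x
      simp only [Finset.mem_filter, Finset.mem_Ico, Finset.mem_insert, Finset.mem_image,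
        hN]
      constructor
      · rintro ⟨⟨hx1, hx2⟩, hxV⟩
        by_cases hxp1 : x = p.1.val
        · exact Or.inl hxp1
        · right
          have hxne2 : x ≠ p.2.val := fun hc => hxV (hc ▸ hjV)
          have hxm : x < m := by have := p.2.isLt; omega
          have hvx : (⟨x, hxm⟩ : Fin m) ∉ Tset c k r := fun hc => hxV (mem_vset.mpr hc)
          obtain ⟨q, hq, hq1, hq2a, hq2b⟩ := interior_false h hp hvx
            (by rw [Fin.lt_def]; show p.1.val < x; omega)
            (by rw [Fin.lt_def]; show x < p.2.val; omega)
          refine ⟨q, ⟨hq, ?_, hq2a⟩, by rw [← hq1]⟩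
          have : p.1.val < q.1.val := by
            have : q.1.val = x := by rw [← hq1]
            omega
          exact this
      · rintro (rfl | ⟨q, ⟨hq, hq1, hq2⟩, rfl⟩)
        · exact ⟨⟨le_rfl, by omega⟩, hiV⟩
        · have hv1 : p.1.val < q.1.val := hq1
          have hv2 : q.1.val < q.2.val := h.1 q (Finset.mem_sdiff.mp hq).1
          have hv3 : q.2.val < p.2.val := hq2
          exact ⟨⟨by omega, by omega⟩,
            fun hc => fst_not_mem_Tset h hq (mem_vset.mp hc)⟩
    have hTeq : (Finset.Ico p.1.val (p.2.val + 1)).filter (· ∈ V)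
        = insert p.2.val (N.image (fun q => q.2.val)) := by
      ext x
      simp only [Finset.mem_filter, Finset.mem_Ico, Finset.mem_insert, Finset.mem_image,
        hN]
      constructor
      · rintro ⟨⟨hx1, hx2⟩, hxV⟩
        by_cases hxp2 : x = p.2.val
        · exact Or.inl hxp2
        · right
          have hxne1 : x ≠ p.1.val := fun hc => hiV (hc ▸ hxV)
          have hxm : x < m := by have := p.2.isLt; omega
          have hvx : (⟨x, hxm⟩ : Fin m) ∈ Tset c k r := mem_vset.mp hxV
          obtain ⟨q, hq, hq2, hq1a, hq1b⟩ := interior_true h hp hvx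
            (by rw [Fin.lt_def]; show p.1.val < x; omega)
            (by rw [Fin.lt_def]; show x < p.2.val; omega)
          refine ⟨q, ⟨hq, hq1a, ?_⟩, by rw [← hq2]⟩
          have hxq : q.2.val = x := by rw [← hq2]
          rw [Fin.lt_def]
          omega
      · rintro (rfl | ⟨q, ⟨hq, hq1, hq2⟩, rfl⟩)
        · exact ⟨⟨by omega, by omega⟩, hjV⟩
        · have hv1 : p.1.val < q.1.val := hq1
          have hv2 : q.1.val < q.2.val := h.1 q (Finset.mem_sdiff.mp hq).1
          have hv3 : q.2.val < p.2.val := hq2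
          exact ⟨⟨by omega, by omega⟩,
            mem_vset.mpr (mem_Tset.mpr (Or.inr (Or.inr ⟨q, hq, rfl⟩)))⟩
    have hinj1 : Set.InjOn (fun q : Fin m × Fin m => q.1.val) N := by
      intro a ha b hb hab
      rw [hN, Finset.mem_coe, Finset.mem_filter] at ha hb
      by_contra hne
      exact (h.2.1 _ (Finset.mem_sdiff.mp ha.1).1 _ (Finset.mem_sdiff.mp hb.1).1
        hne).1 (Fin.val_injective hab)
    have hinj2 : Set.InjOn (fun q : Fin m × Fin m => q.2.val) N := by
      intro a ha b hb hab
      rw [hN, Finset.mem_coe, Finset.mem_filter] at ha hb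
      by_contra hne
      exact (h.2.1 _ (Finset.mem_sdiff.mp ha.1).1 _ (Finset.mem_sdiff.mp hb.1).1
        hne).2.2.2 (Fin.val_injective hab)
    have hfresh1 : p.1.val ∉ N.image (fun q => q.1.val) := by
      rw [Finset.mem_image]
      rintro ⟨q, hq, hqe⟩
      rw [hN, Finset.mem_filter] at hq
      have : p.1.val < q.1.val := hq.2.1
      omega
    have hfresh2 : p.2.val ∉ N.image (fun q => q.2.val) := by
      rw [Finset.mem_image]
      rintro ⟨q, hq, hqe⟩
      rw [hN, Finset.mem_filter] at hq
      have : q.2.val < p.2.val := hq.2.2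
      omega
    have hcF : ((Finset.Ico p.1.val (p.2.val + 1)).filter (· ∉ V)).card = N.card + 1 := by
      rw [hFeq, Finset.card_insert_of_notMem hfresh1, Finset.card_image_of_injOn hinj1]
    have hcT : ((Finset.Ico p.1.val (p.2.val + 1)).filter (· ∈ V)).card = N.card + 1 := by
      rw [hTeq, Finset.card_insert_of_notMem hfresh2, Finset.card_image_of_injOn hinj2]
    rw [hcF, hcT] at hdiff
    omega
  exact ⟨hlt, hiV, hjV, hbal, hforall⟩

end CKL



namespace CKL
open Finset CupDiagrams

variable {m : ℕ} {c k : Finset (Fin m × Fin m)} {r : Finset (Fin m)}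

lemma umc_eq (h : IsKL c k r) : umc (Tset c k r) = c \ k := by
  ext p
  rw [mem_umc]
  constructor
  · intro hpc'
    have hjW : p.2 ∈ Tset c k r := mem_vset.mp hpc'.2.2.1
    rcases mem_Tset.mp hjW with hx | ⟨q', hq', hx⟩ | ⟨q, hq, hx⟩
    · exact absurd hpc' (special_unmatched h (Or.inl hx) p.1.val)
    · exact absurd hpc' (special_unmatched h (Or.inr ⟨q', hq', hx⟩) p.1.val)
    · have hqpc := cup_pc h hq
      have hval : q.2.val = p.2.val := congrArg Fin.val hx.symm
      rw [hval] at hqpc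
      have h11 : p.1.val = q.1.val := pc_left_unique hpc' hqpc
      have : p = q := Prod.ext (Fin.val_injective h11) hx
      exact this ▸ hq
  · intro hp
    exact cup_pc h hp

lemma Lset_eq (h : IsKL c k r) :
    Lset (Tset c k r) = k.biUnion (fun p => ({p.1, p.2} : Finset (Fin m))) ∪ r := by
  ext x
  rw [Lset, Finset.mem_filter]
  simp only [Finset.mem_union, Finset.mem_biUnion, Finset.mem_insert, Finset.mem_singleton]
  constructor
  · rintro ⟨hxW, hun⟩
    rcases mem_Tset.mp hxW with hx | ⟨q', hq', hx⟩ | ⟨q, hq, hx⟩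
    · exact Or.inr hx
    · exact Or.inl ⟨q', hq', hx⟩
    · exfalso
      have hqpc := cup_pc h hq
      have hval : q.2.val = x.val := congrArg Fin.val hx.symm
      rw [hval] at hqpc
      exact hun q.1.val hqpc
  · intro hx
    rcases hx with ⟨q', hq', hx⟩ | hx
    · exact ⟨mem_Tset.mpr (Or.inr (Or.inl ⟨q', hq', hx⟩)),
        special_unmatched h (Or.inr ⟨q', hq', hx⟩)⟩
    · exact ⟨mem_Tset.mpr (Or.inl hx), special_unmatched h (Or.inl hx)⟩

lemma pair_filter_card {a b : Fin m} (hab : a ≠ b) (P : Fin m → Prop) [DecidablePred P] :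
    ((({a, b} : Finset (Fin m))).filter P).card
      = (if P a then 1 else 0) + (if P b then 1 else 0) := by
  classical
  rw [Finset.filter_insert, Finset.filter_singleton]
  by_cases hPa : P a <;> by_cases hPb : P b <;>
    simp [hPa, hPb, hab]

lemma Lset_count (h : IsKL c k r) (P : Fin m → Prop) [DecidablePred P] :
    ((Lset (Tset c k r)).filter P).card
      = (∑ q ∈ k, (({q.1, q.2} : Finset (Fin m)).filter P).card)
        + (r.filter P).card := by
  classical
  obtain ⟨h1, h2, h3, h4, h5, h6, h7, h8⟩ := h
  rw [Lset_eq ⟨h1, h2, h3, h4, h5, h6, h7, h8⟩, Finset.filter_union]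
  have hdisj : Disjoint ((k.biUnion (fun p => ({p.1, p.2} : Finset (Fin m)))).filter P)
      (r.filter P) := by
    rw [Finset.disjoint_left]
    intro x hx hx'
    rw [Finset.mem_filter, Finset.mem_biUnion] at hx
    obtain ⟨⟨q, hq, hxq⟩, _⟩ := hx
    rw [Finset.mem_filter] at hx'
    have hray := (h7 x hx'.1).1
    rcases Finset.mem_insert.mp hxq with rfl | hxq
    · exact (hray q (h5 hq)).1 rfl
    · exact (hray q (h5 hq)).2 (Finset.mem_singleton.mp hxq).symm
  rw [Finset.card_union_of_disjoint hdisj, Finset.filter_biUnion, Finset.card_biUnion]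
  intro p hp q hq hpq
  rw [Function.onFun, Finset.disjoint_left]
  intro x hx hx'
  rw [Finset.mem_filter] at hx hx'
  obtain ⟨d1, d2, d3, d4⟩ := h2 p (h5 hp) q (h5 hq) hpq
  simp only [Finset.mem_insert, Finset.mem_singleton] at hx hx'
  rcases hx.1 with rfl | rfl <;> rcases hx'.1 with h' | h' <;> tauto

lemma count_lt_fst (h : IsKL c k r) {p : Fin m × Fin m} (hp : p ∈ k) :
    Even (((Lset (Tset c k r)).filter (· < p.1)).card) := by
  classical
  rw [Lset_count h]
  have hr0 : r.filter (· < p.1) = ∅ := by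
    rw [Finset.filter_eq_empty_iff]
    intro x hx
    have hgt := ray_gt_marked h hp (h.2.2.2.2.2.2.1 x hx).1
    have hlt := h.1 p (h.2.2.2.2.1 hp)
    intro hc
    exact absurd (hc.trans (hlt.trans hgt)) (lt_irrefl _)
  rw [hr0, Finset.card_empty, Nat.add_zero]
  apply Finset.even_sum
  intro q hq
  have hqlt := h.1 q (h.2.2.2.2.1 hq)
  rw [pair_filter_card hqlt.ne (· < p.1)]
  by_cases hqp : q = p
  · subst hqp
    have hn : ¬ q.2 < q.1 := fun hc => absurd (hqlt.trans hc) (lt_irrefl _)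
    simp [lt_irrefl, hn]
  · have hplt := h.1 p (h.2.2.2.2.1 hp)
    rcases kdisj h hp hq (Ne.symm hqp) with hlt | hlt
    · have hq1 : q.1 < p.1 := hqlt.trans hlt
      simp [hq1, hlt]
    · have hn1 : ¬ q.1 < p.1 := fun hc =>
        absurd ((hplt.trans hlt).trans hc) (lt_irrefl _)
      have hn2 : ¬ q.2 < p.1 := fun hc =>
        absurd (((hplt.trans hlt).trans hqlt).trans hc) (lt_irrefl _)
      simp [hn1, hn2]

lemma count_lt_snd (h : IsKL c k r) {p : Fin m × Fin m} (hp : p ∈ k) :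
    ¬ Even (((Lset (Tset c k r)).filter (· < p.2)).card) := by
  classical
  rw [Lset_count h]
  have hr0 : r.filter (· < p.2) = ∅ := by
    rw [Finset.filter_eq_empty_iff]
    intro x hx
    have hgt := ray_gt_marked h hp (h.2.2.2.2.2.2.1 x hx).1
    intro hc
    exact absurd (hc.trans hgt) (lt_irrefl _)
  rw [hr0, Finset.card_empty, Nat.add_zero]
  rw [← Finset.sum_erase_add _ _ hp]
  have hterm : (({p.1, p.2} : Finset (Fin m)).filter (· < p.2)).card = 1 := by
    have hplt := h.1 p (h.2.2.2.2.1 hp)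
    rw [pair_filter_card hplt.ne (· < p.2)]
    simp [hplt, lt_irrefl]
  rw [hterm]
  have hev : Even (∑ q ∈ k.erase p, (({q.1, q.2} : Finset (Fin m)).filter (· < p.2)).card) := by
    apply Finset.even_sum
    intro q hq
    have hqk := Finset.mem_of_mem_erase hq
    have hqp : q ≠ p := Finset.ne_of_mem_erase hq
    have hqlt := h.1 q (h.2.2.2.2.1 hqk)
    have hplt := h.1 p (h.2.2.2.2.1 hp)
    rw [pair_filter_card hqlt.ne (· < p.2)]
    rcases kdisj h hp hqk (Ne.symm hqp) with hlt | hlt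
    · have hq1 : q.1 < p.2 := (hqlt.trans hlt).trans hplt
      have hq2 : q.2 < p.2 := hlt.trans hplt
      simp [hq1, hq2]
    · have hn1 : ¬ q.1 < p.2 := fun hc => absurd (hlt.trans hc) (lt_irrefl _)
      have hn2 : ¬ q.2 < p.2 := fun hc => absurd (hlt.trans (hqlt.trans hc)) (lt_irrefl _)
      simp [hn1, hn2]
  rcases hev with ⟨w, hw⟩
  rw [hw]
  rintro ⟨v, hv⟩
  omega

lemma count_lt_ray (h : IsKL c k r) {x : Fin m} (hx : x ∈ r) :
    Even (((Lset (Tset c k r)).filter (· < x)).card) := by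
  classical
  rw [Lset_count h]
  have hr0 : r.filter (· < x) = ∅ := by
    rw [Finset.filter_eq_empty_iff]
    intro y hy
    rw [r_unique h hy hx]
    exact lt_irrefl _
  rw [hr0, Finset.card_empty, Nat.add_zero]
  apply Finset.even_sum
  intro q hq
  have hqlt := h.1 q (h.2.2.2.2.1 hq)
  have hgt := ray_gt_marked h hq (h.2.2.2.2.2.2.1 x hx).1
  rw [pair_filter_card hqlt.ne (· < x)]
  have hq1 : q.1 < x := hqlt.trans hgt
  simp [hq1, hgt]

lemma Kp_eq (h : IsKL c k r) : Kp (Tset c k r) = k := by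
  ext p'
  rw [mem_Kp]
  constructor
  · rintro ⟨a1, a2, a3, a4, a5⟩
    have hL := Lset_eq h
    have ha1 := a1
    rw [hL] at ha1
    rcases Finset.mem_union.mp ha1 with hend | hr1
    · rw [Finset.mem_biUnion] at hend
      obtain ⟨q, hq, hxq⟩ := hend
      simp only [Finset.mem_insert, Finset.mem_singleton] at hxq
      rcases hxq with h1' | h2'
      · -- p'.1 = q.1 : show p'.2 = q.2 and conclude p' = q
        have hq2L : q.2 ∈ Lset (Tset c k r) := by
          rw [hL, Finset.mem_union, Finset.mem_biUnion]
          exact Or.inl ⟨q, hq, by simp⟩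
        have hqlt := h.1 q (h.2.2.2.2.1 hq)
        have h22 : p'.2 = q.2 := by
          rcases lt_trichotomy p'.2 q.2 with hlt | heq | hlt
          · exfalso
            -- p'.2 ∈ Lset, q.1 < p'.2 < q.2 : impossible
            have hin1 : q.1 < p'.2 := h1' ▸ a3
            have ha2' := a2
            rw [hL] at ha2'
            rcases Finset.mem_union.mp ha2' with hend2 | hr2
            · rw [Finset.mem_biUnion] at hend2
              obtain ⟨q', hq', hxq'⟩ := hend2
              simp only [Finset.mem_insert, Finset.mem_singleton] at hxq'
              by_cases hqq : q' = q
              · subst hqq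
                rcases hxq' with h' | h'
                · rw [h'] at hin1
                  exact absurd hin1 (lt_irrefl _)
                · rw [h'] at hlt
                  exact absurd hlt (lt_irrefl _)
              · rcases kdisj h hq hq' (Ne.symm hqq) with hd | hd
                · have hq'lt := h.1 q' (h.2.2.2.2.1 hq')
                  rcases hxq' with h' | h'
                  · rw [h'] at hin1
                    exact absurd (hin1.trans (hq'lt.trans hd)) (lt_irrefl _)
                  · rw [h'] at hin1
                    exact absurd (hin1.trans hd) (lt_irrefl _)
                · have hq'lt := h.1 q' (h.2.2.2.2.1 hq')
                  rcases hxq' with h' | h'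
                  · rw [h'] at hlt
                    exact absurd (hd.trans hlt) (lt_irrefl _)
                  · rw [h'] at hlt
                    exact absurd ((hd.trans hq'lt).trans hlt) (lt_irrefl _)
            · -- p'.2 is a marked ray inside cup q : contradiction
              have hray := (h.2.2.2.2.2.2.1 p'.2 hr2).1
              exact h.2.2.2.1 q (h.2.2.2.2.1 hq) p'.2 hray ⟨hin1, hlt⟩
          · exact heq
          · exact absurd ⟨h1' ▸ hqlt, hlt⟩ (a4 q.2 hq2L)
        have : p' = q := Prod.ext h1' h22
        exact this ▸ hq
      · exfalso
        exact count_lt_snd h hq (h2' ▸ a5)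
    · exfalso
      have hray := (h.2.2.2.2.2.2.1 p'.1 hr1).1
      have ha2' := a2
      rw [hL] at ha2'
      rcases Finset.mem_union.mp ha2' with hend2 | hr2
      · rw [Finset.mem_biUnion] at hend2
        obtain ⟨q', hq', hxq'⟩ := hend2
        have hgt := ray_gt_marked h hq' hray
        have hq'lt := h.1 q' (h.2.2.2.2.1 hq')
        simp only [Finset.mem_insert, Finset.mem_singleton] at hxq'
        rcases hxq' with h' | h'
        · rw [h'] at a3
          exact absurd ((a3.trans hq'lt).trans hgt) (lt_irrefl _)
        · rw [h'] at a3
          exact absurd (a3.trans hgt) (lt_irrefl _)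
      · have : p'.1 = p'.2 := r_unique h hr1 hr2
        rw [this] at a3
        exact absurd a3 (lt_irrefl _)
  · intro hp
    have hL := Lset_eq h
    have hplt := h.1 p' (h.2.2.2.2.1 hp)
    refine ⟨?_, ?_, hplt, ?_, count_lt_fst h hp⟩
    · rw [hL, Finset.mem_union, Finset.mem_biUnion]
      exact Or.inl ⟨p', hp, by simp⟩
    · rw [hL, Finset.mem_union, Finset.mem_biUnion]
      exact Or.inl ⟨p', hp, by simp⟩
    · intro x hxL
      rintro ⟨hx1, hx2⟩
      rw [hL] at hxL
      rcases Finset.mem_union.mp hxL with hend | hr1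
      · rw [Finset.mem_biUnion] at hend
        obtain ⟨q', hq', hxq'⟩ := hend
        simp only [Finset.mem_insert, Finset.mem_singleton] at hxq'
        by_cases hqq : q' = p'
        · subst hqq
          rcases hxq' with h' | h'
          · rw [h'] at hx1
            exact absurd hx1 (lt_irrefl _)
          · rw [h'] at hx2
            exact absurd hx2 (lt_irrefl _)
        · have hq'lt := h.1 q' (h.2.2.2.2.1 hq')
          rcases kdisj h hp hq' (Ne.symm hqq) with hd | hd
          · rcases hxq' with h' | h'
            · rw [h'] at hx1
              exact absurd (hx1.trans (hq'lt.trans hd)) (lt_irrefl _)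
            · rw [h'] at hx1
              exact absurd (hx1.trans hd) (lt_irrefl _)
          · rcases hxq' with h' | h'
            · rw [h'] at hx2
              exact absurd (hd.trans hx2) (lt_irrefl _)
            · rw [h'] at hx2
              exact absurd ((hd.trans hq'lt).trans hx2) (lt_irrefl _)
      · have hray := (h.2.2.2.2.2.2.1 x hr1).1
        exact h.2.2.2.1 p' (h.2.2.2.2.1 hp) x hray ⟨hx1, hx2⟩

lemma Rm_eq (h : IsKL c k r) : Rm (Tset c k r) = r := by
  ext x
  rw [mem_Rm]
  constructor
  · rintro ⟨xL, xmax, xev⟩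
    have hL := Lset_eq h
    rw [hL] at xL
    rcases Finset.mem_union.mp xL with hend | hr1
    · exfalso
      rw [Finset.mem_biUnion] at hend
      obtain ⟨q, hq, hxq⟩ := hend
      simp only [Finset.mem_insert, Finset.mem_singleton] at hxq
      have hqlt := h.1 q (h.2.2.2.2.1 hq)
      rcases hxq with h' | h'
      · have hq2L : q.2 ∈ Lset (Tset c k r) := by
          rw [hL, Finset.mem_union, Finset.mem_biUnion]
          exact Or.inl ⟨q, hq, by simp⟩
        have := xmax q.2 hq2L
        rw [h'] at this
        exact absurd (hqlt.trans_le this) (lt_irrefl _)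
      · exact count_lt_snd h hq (h' ▸ xev)
    · exact hr1
  · intro hx
    have hL := Lset_eq h
    have hray := (h.2.2.2.2.2.2.1 x hx).1
    refine ⟨?_, ?_, count_lt_ray h hx⟩
    · rw [hL, Finset.mem_union]
      exact Or.inr hx
    · intro y hyL
      rw [hL] at hyL
      rcases Finset.mem_union.mp hyL with hend | hr1
      · rw [Finset.mem_biUnion] at hend
        obtain ⟨q, hq, hxq⟩ := hend
        have hgt := ray_gt_marked h hq hray
        have hqlt := h.1 q (h.2.2.2.2.1 hq)
        simp only [Finset.mem_insert, Finset.mem_singleton] at hxq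
        rcases hxq with h' | h'
        · exact h' ▸ le_of_lt (hqlt.trans hgt)
        · exact h' ▸ le_of_lt hgt
      · exact (r_unique h hr1 hx).le

end CKL


theorem thmC {c k : Finset (Fin m × Fin m)} {r : Finset (Fin m)} (h : IsKL c k r) :
    umc (Tset c k r) ∪ Kp (Tset c k r) = c ∧ Kp (Tset c k r) = k ∧
      Rm (Tset c k r) = r := by
  refine ⟨?_, Kp_eq h, Rm_eq h⟩
  rw [umc_eq h, Kp_eq h]
  exact Finset.sdiff_union_of_subset h.2.2.2.2.1

theorem thmE {c k : Finset (Fin m × Fin m)} {r : Finset (Fin m)} (h : IsKL c k r) :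
    Even (Tset c k r).card := by
  obtain ⟨h1, h2, h3, h4, h5, h6, h7, h8⟩ := h
  have hatoms : ∀ p ∈ k, p.1 ≠ p.2 := fun p hp => (h1 p (h5 hp)).ne
  have hBcard : (k.biUnion (fun p => ({p.1, p.2} : Finset (Fin m)))).card = 2 * k.card := by
    rw [Finset.card_biUnion]
    · rw [Finset.sum_congr rfl (fun p hp => Finset.card_pair (hatoms p hp))]
      rw [Finset.sum_const, smul_eq_mul, mul_comm]
    · intro p hp q hq hpq
      rw [Function.onFun, Finset.disjoint_left]
      intro x hx hx'
      simp only [Finset.mem_insert, Finset.mem_singleton] at hx hx'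
      obtain ⟨d1, d2, d3, d4⟩ := h2 p (h5 hp) q (h5 hq) hpq
      rcases hx with rfl | rfl <;> rcases hx' with h' | h' <;> tauto
  have hCcard : ((c \ k).image Prod.snd).card = (c \ k).card := by
    rw [Finset.card_image_of_injOn]
    intro q hq q' hq' hqq
    by_contra hne
    exact (h2 q (Finset.mem_sdiff.mp hq).1 q' (Finset.mem_sdiff.mp hq').1 hne).2.2.2 hqq
  have hray_r : ∀ x ∈ r, IsRay c x := fun x hx => (h7 x hx).1
  have hd1 : Disjoint r (k.biUnion (fun p => ({p.1, p.2} : Finset (Fin m)))) := by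
    rw [Finset.disjoint_left]
    intro x hx hx'
    simp only [Finset.mem_biUnion, Finset.mem_insert, Finset.mem_singleton] at hx'
    obtain ⟨p, hp, hxp⟩ := hx'
    have := hray_r x hx p (h5 hp)
    tauto
  have hd2 : Disjoint (r ∪ k.biUnion (fun p => ({p.1, p.2} : Finset (Fin m))))
      ((c \ k).image Prod.snd) := by
    rw [Finset.disjoint_left]
    intro x hx hx'
    simp only [Finset.mem_image] at hx'
    obtain ⟨q, hq, hxq⟩ := hx'
    have hqc := (Finset.mem_sdiff.mp hq).1
    have hqk := (Finset.mem_sdiff.mp hq).2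
    rcases Finset.mem_union.mp hx with hx | hx
    · exact (hray_r x hx q hqc).2 hxq
    · simp only [Finset.mem_biUnion, Finset.mem_insert, Finset.mem_singleton] at hx
      obtain ⟨p, hp, hxp⟩ := hx
      have hne : q ≠ p := fun hc => hqk (hc ▸ hp)
      obtain ⟨d1, d2, d3, d4⟩ := h2 q hqc p (h5 hp) hne
      rcases hxp with rfl | rfl <;> tauto
  have hcard : (Tset c k r).card = r.card + 2 * k.card + (c \ k).card := by
    rw [Tset, Finset.card_union_of_disjoint hd2, Finset.card_union_of_disjoint hd1,
      hBcard, hCcard]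
  rw [hcard]
  rcases h8 with ⟨w, hw⟩
  exact ⟨w + k.card, by omega⟩

/-- counting even-card subsets -/
theorem thmD (n : ℕ) :
    Nat.card {s : Finset (Fin (n+1)) // Even s.card} = 2 ^ n := by
  have e : {s : Finset (Fin (n+1)) // Even s.card} ≃ Finset (Fin n) := by
    refine
      { toFun := fun s => univ.filter (fun i : Fin n => i.castSucc ∈ s.1)
        invFun := fun t =>
          if ht : Even t.card then ⟨t.map Fin.castSuccEmb, by simpa using ht⟩
          else ⟨insert (Fin.last n) (t.map Fin.castSuccEmb), ?_⟩
        left_inv := ?_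
        right_inv := ?_ }
    · rw [card_insert_of_notMem (by
        simp only [mem_map, Fin.castSuccEmb_apply]
        rintro ⟨i, _, hi⟩
        exact (Fin.castSucc_lt_last i).ne hi)]
      rw [Finset.card_map]
      exact Nat.even_add_one.mpr ht
    · rintro ⟨s, hs⟩
      by_cases hl : Fin.last n ∈ s
      · have ht : (univ.filter (fun i : Fin n => i.castSucc ∈ s)).map Fin.castSuccEmb
            = s.erase (Fin.last n) := by
          ext x
          simp only [mem_map, mem_filter, mem_univ, true_and, Fin.castSuccEmb_apply,
            mem_erase]
          constructor
          · rintro ⟨i, hi, rfl⟩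
            exact ⟨(Fin.castSucc_lt_last i).ne, hi⟩
          · rintro ⟨hx, hxs⟩
            rcases Fin.exists_castSucc_eq.mpr hx with ⟨i, rfl⟩
            exact ⟨i, hxs, rfl⟩
        have hcard : ¬ Even (univ.filter (fun i : Fin n => i.castSucc ∈ s)).card := by
          have h1 : ((univ.filter (fun i : Fin n => i.castSucc ∈ s)).map
              Fin.castSuccEmb).card = s.card - 1 := by rw [ht, card_erase_of_mem hl]
          rw [Finset.card_map] at h1
          have hpos : 0 < s.card := card_pos.mpr ⟨_, hl⟩
          rw [h1]
          rcases hs with ⟨w, hw⟩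
          intro hcon
          rcases hcon with ⟨v, hv⟩
          have : s.card = w + w := hw
          omega
        simp only [hcard, dite_false]
        ext1
        simp only []
        rw [ht, insert_erase hl]
      · have ht : (univ.filter (fun i : Fin n => i.castSucc ∈ s)).map Fin.castSuccEmb
            = s := by
          ext x
          simp only [mem_map, mem_filter, mem_univ, true_and, Fin.castSuccEmb_apply]
          constructor
          · rintro ⟨i, hi, rfl⟩; exact hi
          · intro hx
            rcases Fin.exists_castSucc_eq.mpr (fun hc => hl (hc ▸ hx)) with ⟨i, rfl⟩
            exact ⟨i, hx, rfl⟩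
        have hcard : Even (univ.filter (fun i : Fin n => i.castSucc ∈ s)).card := by
          have := congrArg Finset.card ht
          rw [Finset.card_map] at this
          rw [this]; exact hs
        simp only [hcard, dite_true]
        ext1
        simp only []
        rw [ht]
    · intro t
      have hmm : ∀ i : Fin n, i.castSucc ∈ t.map Fin.castSuccEmb ↔ i ∈ t := by
        intro i
        exact Finset.mem_map' _
      by_cases htc : Even t.card <;> simp only [htc, dite_true, dite_false]
      · ext i
        simp only [mem_filter, mem_univ, true_and, hmm]
      · ext i
        simp only [mem_filter, mem_univ, true_and, mem_insert, hmm]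
        have : i.castSucc ≠ Fin.last n := (Fin.castSucc_lt_last i).ne
        simp [this]
  rw [Nat.card_congr e]
  simp [Nat.card_eq_fintype_card]


/-- The number of cup diagrams in `C_KL(m)` equals `2^(m-1)`. -/
theorem stmt2 (m : ℕ) (hm : 1 ≤ m) :
    Nat.card {d : Finset (Fin m × Fin m) × Finset (Fin m × Fin m) × Finset (Fin m) //
        IsKL d.1 d.2.1 d.2.2} = 2 ^ (m - 1) := by
  have e : {d : Finset (Fin m × Fin m) × Finset (Fin m × Fin m) × Finset (Fin m) //
      IsKL d.1 d.2.1 d.2.2} ≃ {s : Finset (Fin m) // Even s.card} :=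
    { toFun := fun d => ⟨Tset d.1.1 d.1.2.1 d.1.2.2, thmE d.2⟩
      invFun := fun s => ⟨(umc s.1 ∪ Kp s.1, Kp s.1, Rm s.1), thmA s.2⟩
      left_inv := by
        rintro ⟨⟨c, k, r⟩, hd⟩
        obtain ⟨h1, h2, h3⟩ := thmC hd
        simp only [Subtype.mk.injEq, Prod.mk.injEq]
        exact ⟨h1, h2, h3⟩
      right_inv := by
        rintro ⟨s, hs⟩
        simp only [Subtype.mk.injEq]
        exact thmB s }
  rw [Nat.card_congr e]
  obtain ⟨n, rfl⟩ : ∃ n, m = n + 1 := ⟨m - 1, by omega⟩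
  simpa using thmD n

end Skel
end

section
/- Consider the induced W_{D_m}-action on H_*((S²)^m) in the line-diagram basis: l_U·s_i^D = l_{τ_i U} for 1 ≤ i ≤ m−1, and l_U·s_0^D = (−1)^{χ(U)} l_{τ_1 U} where χ(U) = |{1,2} ∩ U|. If a is a cup diagram in which vertices i and i+1 are connected by a cup, then the vector L_a = ∑_{U∈𝒰_a} (−1)^{Λ_a(U)} l_U satisfies L_a·s_i^D = −L_a if the cup is unmarked and L_a·s_i^D = L_a if the cup is marked. -/
open scoped Classical

namespace CupDiagrams

variable {m : ℕ}

/-- `𝒰_a`: the subsets `U ⊆ {1,…,m}` containing exactly one endpoint of each cup of the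
diagram and no ray vertices. -/
noncomputable def CalU (cup : Finset (Fin m × Fin m)) : Finset (Finset (Fin m)) :=
  Finset.univ.filter fun U =>
    (∀ p ∈ cup, (p.1 ∈ U ↔ p.2 ∉ U)) ∧ ∀ i ∈ U, ∃ p ∈ cup, i = p.1 ∨ i = p.2

/-- `Λ_a(U)`: the number of right endpoints of unmarked cups in `U` plus the number of
endpoints of marked cups in `U`. -/
noncomputable def Lam (cup cupMarked : Finset (Fin m × Fin m)) (U : Finset (Fin m)) : ℕ :=
  ((cup \ cupMarked).filter fun p => p.2 ∈ U).card +
    ((cupMarked.filter fun p => p.1 ∈ U).card + (cupMarked.filter fun p => p.2 ∈ U).card)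

/-- `L_a = ∑_{U ∈ 𝒰_a} (−1)^{Λ_a(U)} l_U` in the free vector space with basis the
line diagrams `l_U`. -/
noncomputable def La (cup cupMarked : Finset (Fin m × Fin m)) : Finset (Fin m) →₀ ℂ :=
  ∑ U ∈ CalU cup, ((-1 : ℂ) ^ Lam cup cupMarked U) • Finsupp.single U (1 : ℂ)

end CupDiagrams

open CupDiagrams

/-!
The reflection acts on line diagrams by swapping the endpoints `v, w` of the cup, so it
permutes `𝒰_a`, and `L_a·s` is `L_a` with the coefficient of `l_U` replaced by that of
`l_{τ U}`. The sign `(-1)^{Λ_a(U)}` is a product of one factor per cup; the swap leaves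
the factors of all other cups alone. Since `U` contains exactly one of `v, w`, the factor of
the cup `(v, w)` is unchanged when it is marked (it counts both endpoints) and changes sign
when it is unmarked (it counts only `w`).
-/

open Finset

namespace CupDiagrams

section Swap

variable {α : Type*} [DecidableEq α]

lemma mem_image_swap {v w x : α} {U : Finset α} :
    x ∈ U.image (Equiv.swap v w) ↔ Equiv.swap v w x ∈ U := by
  simpa using (Equiv.swap v w).injective.mem_finset_image (a := Equiv.swap v w x) (s := U)

lemma image_swap_image_swap (v w : α) (U : Finset α) :
    (U.image (Equiv.swap v w)).image (Equiv.swap v w) = U := by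
  ext x
  simp only [mem_image_swap, Equiv.swap_apply_self]

end Swap

variable {m : ℕ} {cup cupMarked : Finset (Fin m × Fin m)} {v w : Fin m} {U : Finset (Fin m)}

lemma swap_apply_endpoints_of_ne
    (hdisj : ∀ p ∈ cup, ∀ q ∈ cup, p ≠ q → p.1 ≠ q.1 ∧ p.1 ≠ q.2 ∧ p.2 ≠ q.1 ∧ p.2 ≠ q.2)
    (hcup : (v, w) ∈ cup) {p : Fin m × Fin m} (hp : p ∈ cup) (hne : p ≠ (v, w)) :
    Equiv.swap v w p.1 = p.1 ∧ Equiv.swap v w p.2 = p.2 :=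
  have h := hdisj p hp (v, w) hcup hne
  ⟨Equiv.swap_apply_of_ne_of_ne h.1 h.2.1, Equiv.swap_apply_of_ne_of_ne h.2.2.1 h.2.2.2⟩

lemma mem_iff_notMem_of_mem_CalU (hU : U ∈ CalU cup) {p : Fin m × Fin m} (hp : p ∈ cup) :
    p.1 ∈ U ↔ p.2 ∉ U :=
  (mem_filter.1 hU).2.1 p hp

lemma image_swap_mem_CalU
    (hfix : ∀ p ∈ cup, p ≠ (v, w) → Equiv.swap v w p.1 = p.1 ∧ Equiv.swap v w p.2 = p.2)
    (hcup : (v, w) ∈ cup) (hU : U ∈ CalU cup) : U.image (Equiv.swap v w) ∈ CalU cup := by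
  simp only [CalU, mem_filter, mem_univ, true_and, mem_image_swap] at hU ⊢
  obtain ⟨hone, hend⟩ := hU
  refine ⟨fun p hp => ?_, fun i hi => ?_⟩
  · by_cases hpvw : p = (v, w)
    · subst hpvw
      simp only [Equiv.swap_apply_left, Equiv.swap_apply_right]
      have := hone _ hcup
      tauto
    · rw [(hfix p hp hpvw).1, (hfix p hp hpvw).2]
      exact hone p hp
  · obtain ⟨p, hp, hi⟩ := hend _ hi
    have hi' : i = Equiv.swap v w p.1 ∨ i = Equiv.swap v w p.2 := by
      rcases hi with hi | hi <;> [left; right] <;> rw [← hi, Equiv.swap_apply_self]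
    by_cases hpvw : p = (v, w)
    · subst hpvw
      exact ⟨(v, w), hcup, by simpa [or_comm] using hi'⟩
    · exact ⟨p, hp, by rwa [(hfix p hp hpvw).1, (hfix p hp hpvw).2] at hi'⟩

lemma image_swap_mem_CalU_iff
    (hfix : ∀ p ∈ cup, p ≠ (v, w) → Equiv.swap v w p.1 = p.1 ∧ Equiv.swap v w p.2 = p.2)
    (hcup : (v, w) ∈ cup) : U.image (Equiv.swap v w) ∈ CalU cup ↔ U ∈ CalU cup :=
  ⟨fun h => image_swap_image_swap v w U ▸ image_swap_mem_CalU hfix hcup h,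
    image_swap_mem_CalU hfix hcup⟩

variable (R : Type*) [CommRing R]

noncomputable def cupSign (cupMarked : Finset (Fin m × Fin m)) (p : Fin m × Fin m)
    (U : Finset (Fin m)) : R :=
  if p ∈ cupMarked then (if p.1 ∈ U then -1 else 1) * (if p.2 ∈ U then -1 else 1)
  else if p.2 ∈ U then -1 else 1

variable {R}

lemma neg_one_pow_Lam (hsub : cupMarked ⊆ cup) (U : Finset (Fin m)) :
    (-1 : R) ^ Lam cup cupMarked U = ∏ p ∈ cup, cupSign R cupMarked p U := by
  rw [← prod_sdiff hsub, Lam, pow_add, pow_add, ← prod_const, ← prod_const, ← prod_const,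
    prod_filter, prod_filter, prod_filter, ← prod_mul_distrib]
  congr 1 <;> refine prod_congr rfl fun p hp => ?_
  · simp [cupSign, (mem_sdiff.1 hp).2]
  · simp [cupSign, hp]

lemma cupSign_image_swap_of_fixed {p : Fin m × Fin m}
    (hp : Equiv.swap v w p.1 = p.1 ∧ Equiv.swap v w p.2 = p.2) :
    cupSign R cupMarked p (U.image (Equiv.swap v w)) = cupSign R cupMarked p U := by
  simp only [cupSign, mem_image_swap, hp.1, hp.2]

lemma cupSign_image_swap_self (hU : v ∈ U ↔ w ∉ U) :
    cupSign R cupMarked (v, w) (U.image (Equiv.swap v w)) =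
      (if (v, w) ∈ cupMarked then 1 else -1) * cupSign R cupMarked (v, w) U := by
  simp only [cupSign, mem_image_swap, Equiv.swap_apply_left, Equiv.swap_apply_right]
  by_cases hv : v ∈ U <;> by_cases hm : (v, w) ∈ cupMarked <;> simp_all

lemma neg_one_pow_Lam_image_swap (hsub : cupMarked ⊆ cup)
    (hfix : ∀ p ∈ cup, p ≠ (v, w) → Equiv.swap v w p.1 = p.1 ∧ Equiv.swap v w p.2 = p.2)
    (hcup : (v, w) ∈ cup) (hU : U ∈ CalU cup) :
    (-1 : R) ^ Lam cup cupMarked (U.image (Equiv.swap v w)) =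
      (if (v, w) ∈ cupMarked then 1 else -1) * (-1) ^ Lam cup cupMarked U := by
  rw [neg_one_pow_Lam hsub, neg_one_pow_Lam hsub, ← mul_prod_erase _ _ hcup,
    ← mul_prod_erase _ _ hcup, cupSign_image_swap_self (mem_iff_notMem_of_mem_CalU hU hcup),
    mul_assoc]
  congr 2
  exact prod_congr rfl fun p hp =>
    cupSign_image_swap_of_fixed (hfix p (mem_of_mem_erase hp) (ne_of_mem_erase hp))

lemma La_apply (U : Finset (Fin m)) :
    La cup cupMarked U = if U ∈ CalU cup then (-1) ^ Lam cup cupMarked U else 0 := by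
  simp [La, Finsupp.finsetSum_apply, Finsupp.single_apply]

lemma La_image_swap (hsub : cupMarked ⊆ cup)
    (hfix : ∀ p ∈ cup, p ≠ (v, w) → Equiv.swap v w p.1 = p.1 ∧ Equiv.swap v w p.2 = p.2)
    (hcup : (v, w) ∈ cup) (U : Finset (Fin m)) :
    La cup cupMarked (U.image (Equiv.swap v w)) =
      (if (v, w) ∈ cupMarked then 1 else -1) * La cup cupMarked U := by
  simp only [La_apply, image_swap_mem_CalU_iff hfix hcup]
  by_cases hU : U ∈ CalU cup
  · simp only [if_pos hU, neg_one_pow_Lam_image_swap hsub hfix hcup hU]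
  · simp only [if_neg hU, mul_zero]

end CupDiagrams

theorem stmt14_general (m : ℕ) (cup cupMarked : Finset (Fin m × Fin m)) (rayMarked : Finset (Fin m))
    (hKL : IsKL cup cupMarked rayMarked)
    (v w : Fin m) (hcup : (v, w) ∈ cup) :
    Finsupp.mapDomain (fun U : Finset (Fin m) => U.image (Equiv.swap v w))
        (La cup cupMarked) =
      if (v, w) ∈ cupMarked then La cup cupMarked else -La cup cupMarked := by
  obtain ⟨-, hdisj, -, -, hsub, -⟩ := hKL
  have hfix := fun p hp => swap_apply_endpoints_of_ne (p := p) hdisj hcup hp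
  ext U
  obtain ⟨X, rfl⟩ : ∃ X, U = X.image (Equiv.swap v w) :=
    ⟨U.image (Equiv.swap v w), (image_swap_image_swap v w U).symm⟩
  rw [Finsupp.mapDomain_apply (image_injective (Equiv.swap v w).injective)]
  split_ifs with hm <;> simp [La_image_swap hsub hfix hcup, hm]

/-- If vertices `i` and `i+1` of a cup diagram `a` are connected by a cup, then for the
induced `W_{D_m}`-action on `H_*((S²)^m)` (where the corresponding simple reflection acts
on line diagrams by `l_U ↦ l_{τ U}`, `τ` swapping the two vertices), one has
`L_a·s = −L_a` if the cup is unmarked and `L_a·s = L_a` if the cup is marked. -/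
theorem stmt14 (m : ℕ) (cup cupMarked : Finset (Fin m × Fin m)) (rayMarked : Finset (Fin m))
    (hKL : IsKL cup cupMarked rayMarked)
    (v w : Fin m) (hvw : (w : ℕ) = (v : ℕ) + 1) (hcup : (v, w) ∈ cup) :
    Finsupp.mapDomain (fun U : Finset (Fin m) => U.image (Equiv.swap v w))
        (La cup cupMarked) =
      if (v, w) ∈ cupMarked then La cup cupMarked else -La cup cupMarked :=
  stmt14_general m cup cupMarked rayMarked hKL v w hcup
end

section
/- Let m be even and let a be a cup diagram on m vertices consisting only of cups, with an even number of unmarked cups. Then for every U ∈ 𝒰_a, the complement M∖U (M = {1,…,m}) also lies in 𝒰_a and (−1)^{Λ_a(U)} = (−1)^{Λ_a(M∖U)}; consequently L_a = ∑_{U∈𝒰'_a} (−1)^{Λ_a(U)} (l_U + l_{M∖U}) where 𝒰'_a contains one representative from each pair {U, M∖U}. -/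
/-! Complementation swaps the two endpoints of every cup.  A marked cup contributes exactly one
endpoint to `U` and one to `M ∖ U`, while an unmarked cup contributes its right endpoint to
exactly one of them; hence `Λ_a(U) + Λ_a(M ∖ U)` is the number of unmarked cups plus twice the
number of marked ones, which is even.  Pairing each representative `U` with `M ∖ U` then
regroups the sum defining `L_a`. -/

open scoped Classical

open CupDiagrams

theorem Finset.sum_eq_sum_add_compl_of_reps {α M : Type*} [BooleanAlgebra α] [AddCommMonoid M]
    {S R : Finset α} (hRS : R ⊆ S) (hS : ∀ x ∈ S, xᶜ ∈ S) (hR : ∀ x ∈ S, x ∈ R ↔ xᶜ ∉ R)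
    (g : α → M) : ∑ x ∈ S, g x = ∑ x ∈ R, (g x + g xᶜ) := by
  have hin : ∑ x ∈ S with x ∈ R, g x = ∑ x ∈ R, g x := by
    rw [Finset.filter_mem_eq_inter, Finset.inter_eq_right.mpr hRS]
  have hout : ∑ x ∈ S with x ∉ R, g x = ∑ x ∈ R, g xᶜ := by
    refine Finset.sum_nbij' compl compl (fun x hx => ?_) (fun x hx => ?_)
      (fun x _ => compl_compl x) (fun x _ => compl_compl x) (fun x _ => by rw [compl_compl])
    · simp only [Finset.mem_filter] at hx
      simpa using mt (hR x hx.1).mpr hx.2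
    · have hxS := hRS hx
      simp only [Finset.mem_filter]
      exact ⟨hS x hxS, (hR xᶜ (hS x hxS)).not.mpr (by simpa using hx)⟩
  rw [← Finset.sum_filter_add_sum_filter_not S (· ∈ R), hin, hout, Finset.sum_add_distrib]

namespace CupDiagrams

variable {m : ℕ} {cup cupMarked : Finset (Fin m × Fin m)}

def SplitsCups (cup : Finset (Fin m × Fin m)) (U : Finset (Fin m)) : Prop :=
  ∀ p ∈ cup, (p.1 ∈ U ↔ p.2 ∉ U)

theorem SplitsCups.compl {U : Finset (Fin m)} (hU : SplitsCups cup U) : SplitsCups cup Uᶜ := by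
  intro p hp
  simp only [Finset.mem_compl, not_not]
  exact not_iff_comm.mp (hU p hp).symm

theorem mem_calU_iff (hall : ∀ v : Fin m, ∃ p ∈ cup, v = p.1 ∨ v = p.2) (U : Finset (Fin m)) :
    U ∈ CalU cup ↔ SplitsCups cup U := by
  simp only [CalU, SplitsCups, Finset.mem_filter, Finset.mem_univ, true_and]
  exact ⟨And.left, fun h => ⟨h, fun i _ => hall i⟩⟩

theorem compl_mem_calU (hall : ∀ v : Fin m, ∃ p ∈ cup, v = p.1 ∨ v = p.2)
    {U : Finset (Fin m)} (hU : U ∈ CalU cup) : Uᶜ ∈ CalU cup :=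
  (mem_calU_iff hall _).mpr ((mem_calU_iff hall U).mp hU).compl

theorem lam_add_lam_compl (hsub : cupMarked ⊆ cup) {U : Finset (Fin m)}
    (hU : SplitsCups cup U) :
    Lam cup cupMarked U + Lam cup cupMarked Uᶜ =
      (cup \ cupMarked).card + 2 * cupMarked.card := by
  have hunmarked : ((cup \ cupMarked).filter fun p => p.2 ∈ U).card
      + ((cup \ cupMarked).filter fun p => p.2 ∈ Uᶜ).card = (cup \ cupMarked).card := by
    simp only [Finset.mem_compl]
    exact Finset.card_filter_add_card_filter_not _
  have hmarked : ∀ V : Finset (Fin m), SplitsCups cup V →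
      (cupMarked.filter fun p => p.1 ∈ V).card + (cupMarked.filter fun p => p.2 ∈ V).card
        = cupMarked.card := by
    intro V hV
    rw [Finset.filter_congr fun p hp => hV p (hsub hp), add_comm]
    exact Finset.card_filter_add_card_filter_not _
  have := hmarked U hU
  have := hmarked Uᶜ hU.compl
  unfold Lam
  omega

theorem neg_one_pow_lam_compl (hall : ∀ v : Fin m, ∃ p ∈ cup, v = p.1 ∨ v = p.2)
    (hsub : cupMarked ⊆ cup) (heven : Even (cup \ cupMarked).card)
    {U : Finset (Fin m)} (hU : U ∈ CalU cup) :
    (-1 : ℂ) ^ Lam cup cupMarked U = (-1 : ℂ) ^ Lam cup cupMarked Uᶜ := by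
  have hsum : Even (Lam cup cupMarked U + Lam cup cupMarked Uᶜ) := by
    rw [lam_add_lam_compl hsub ((mem_calU_iff hall U).mp hU)]
    exact heven.add (even_two_mul _)
  exact neg_one_pow_congr (Nat.even_add.mp hsum)

end CupDiagrams

theorem stmt16_general (m : ℕ)
    (cup cupMarked : Finset (Fin m × Fin m))
    (hKL : IsKL cup cupMarked (∅ : Finset (Fin m)))
    (hall : ∀ v : Fin m, ∃ p ∈ cup, v = p.1 ∨ v = p.2)
    (heven : Even (cup \ cupMarked).card) :
    (∀ U ∈ CalU cup, Uᶜ ∈ CalU cup ∧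
      ((-1 : ℂ) ^ Lam cup cupMarked U = (-1 : ℂ) ^ Lam cup cupMarked Uᶜ)) ∧
    (∀ U' : Finset (Finset (Fin m)), U' ⊆ CalU cup →
      (∀ U ∈ CalU cup, (U ∈ U' ↔ Uᶜ ∉ U')) →
      La cup cupMarked =
        ∑ U ∈ U', ((-1 : ℂ) ^ Lam cup cupMarked U) •
          (Finsupp.single U (1 : ℂ) + Finsupp.single Uᶜ (1 : ℂ))) := by
  have hsub : cupMarked ⊆ cup := hKL.2.2.2.2.1
  have hsign := fun U (hU : U ∈ CalU cup) => neg_one_pow_lam_compl hall hsub heven hU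
  refine ⟨fun U hU => ⟨compl_mem_calU hall hU, hsign U hU⟩, fun U' hU' hrep => ?_⟩
  rw [La, Finset.sum_eq_sum_add_compl_of_reps hU' (fun U hU => compl_mem_calU hall hU) hrep]
  refine Finset.sum_congr rfl fun U hU => ?_
  rw [smul_add, hsign U (hU' hU)]

/-- Let `m` be even and let `a` be a cup diagram on `m` vertices consisting only of cups,
with an even number of unmarked cups.  Then `𝒰_a` is stable under complementation,
`(−1)^{Λ_a(U)} = (−1)^{Λ_a(M∖U)}`, and consequently
`L_a = ∑_{U ∈ 𝒰'_a} (−1)^{Λ_a(U)} (l_U + l_{M∖U})` for any set `𝒰'_a` of representatives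
of the pairs `{U, M∖U}`. -/
theorem stmt16 (m : ℕ) (hm : Even m)
    (cup cupMarked : Finset (Fin m × Fin m))
    (hKL : IsKL cup cupMarked (∅ : Finset (Fin m)))
    (hall : ∀ v : Fin m, ∃ p ∈ cup, v = p.1 ∨ v = p.2)
    (heven : Even (cup \ cupMarked).card) :
    (∀ U ∈ CalU cup, Uᶜ ∈ CalU cup ∧
      ((-1 : ℂ) ^ Lam cup cupMarked U = (-1 : ℂ) ^ Lam cup cupMarked Uᶜ)) ∧
    (∀ U' : Finset (Finset (Fin m)), U' ⊆ CalU cup →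
      (∀ U ∈ CalU cup, (U ∈ U' ↔ Uᶜ ∉ U')) →
      La cup cupMarked =
        ∑ U ∈ U', ((-1 : ℂ) ^ Lam cup cupMarked U) •
          (Finsupp.single U (1 : ℂ) + Finsupp.single Uᶜ (1 : ℂ))) :=
  stmt16_general m cup cupMarked hKL hall heven
end

section
/- For m odd and each 0 ≤ l ≤ ⌊m/2⌋, the set C_KL(m) of marked cup diagrams with exactly l cups decomposes under the involution of Theorem B (toggling markers on the cup at vertex 1 and the leftmost ray, identity when vertex 1 carries a ray) into |R₁| = C(m−1,l) − C(m−1,l−1) fixed points and |R₂| = C(m−1,l−1) two-element orbits, and C(m,l) = 2·C(m−1,l−1) + (C(m−1,l) − C(m−1,l−1)). -/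
open scoped Classical symmDiff

namespace CupDiagrams

variable {m : ℕ}

/-- A marked cup diagram: cups, marked cups, marked rays. -/
abbrev MCD (m : ℕ) :=
  Finset (Fin m × Fin m) × Finset (Fin m × Fin m) × Finset (Fin m)

/-- The involution of Theorem B: if the vertex `v0` carries a ray it is the identity;
otherwise it toggles the marker on the cup containing `v0` and the marker on the
leftmost ray. -/
noncomputable def invol (v0 : Fin m) (d : MCD m) : MCD m :=
  if IsRay d.1 v0 then d
  else (d.1,
    d.2.1 ∆ (d.1.filter fun p => p.1 = v0 ∨ p.2 = v0),
    d.2.2 ∆ ((Finset.univ.filter (IsRay d.1)).filter fun i => ∀ j, IsRay d.1 j → i ≤ j))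

end CupDiagrams

open CupDiagrams
section CupProofInternal
open Finset
namespace CupCount

def NRay (V : Finset ℕ) (s : Finset (ℕ × ℕ)) (i : ℕ) : Prop :=
  i ∈ V ∧ ∀ p ∈ s, p.1 ≠ i ∧ p.2 ≠ i

def Valid (V : Finset ℕ) (s : Finset (ℕ × ℕ)) : Prop :=
  (∀ p ∈ s, p.1 ∈ V ∧ p.2 ∈ V) ∧
  (∀ p ∈ s, p.1 < p.2) ∧
  (∀ p ∈ s, ∀ q ∈ s, p ≠ q → p.1 ≠ q.1 ∧ p.1 ≠ q.2 ∧ p.2 ≠ q.1 ∧ p.2 ≠ q.2) ∧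
  (∀ p ∈ s, ∀ q ∈ s, ¬(p.1 < q.1 ∧ q.1 < p.2 ∧ p.2 < q.2)) ∧
  (∀ p ∈ s, ∀ i, NRay V s i → ¬(p.1 < i ∧ i < p.2))

def Markable (V : Finset ℕ) (s : Finset (ℕ × ℕ)) (p : ℕ × ℕ) : Prop :=
  p ∈ s ∧ (∀ q ∈ s, ¬(q.1 < p.1 ∧ p.2 < q.2)) ∧ (∀ i, NRay V s i → ¬ i < p.1)

noncomputable def validF (V : Finset ℕ) (l : ℕ) : Finset (Finset (ℕ × ℕ)) :=
  (V ×ˢ V).powerset.filter fun s => Valid V s ∧ s.card = l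

noncomputable def mvalidF (V : Finset ℕ) (l : ℕ) :
    Finset (Finset (ℕ × ℕ) × Finset (ℕ × ℕ)) :=
  ((V ×ˢ V).powerset ×ˢ (V ×ˢ V).powerset).filter fun x =>
    Valid V x.1 ∧ x.1.card = l ∧ ∀ p ∈ x.2, Markable V x.1 p

lemma subset_prod {V : Finset ℕ} {s : Finset (ℕ × ℕ)} (h : ∀ p ∈ s, p.1 ∈ V ∧ p.2 ∈ V) :
    s ⊆ V ×ˢ V := fun p hp => mem_product.2 (h p hp)

@[simp] lemma mem_validF {V : Finset ℕ} {l : ℕ} {s : Finset (ℕ × ℕ)} :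
    s ∈ validF V l ↔ Valid V s ∧ s.card = l := by
  simp only [validF, mem_filter, mem_powerset, and_iff_right_iff_imp]
  exact fun h => subset_prod h.1.1

@[simp] lemma mem_mvalidF {V : Finset ℕ} {l : ℕ} {x : Finset (ℕ × ℕ) × Finset (ℕ × ℕ)} :
    x ∈ mvalidF V l ↔ Valid V x.1 ∧ x.1.card = l ∧ ∀ p ∈ x.2, Markable V x.1 p := by
  simp only [mvalidF, mem_filter, mem_product, mem_powerset, and_iff_right_iff_imp]
  exact fun h => ⟨subset_prod h.1.1, fun p hp => subset_prod h.1.1 ((h.2.2 p hp).1)⟩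

def Ends (s : Finset (ℕ × ℕ)) : Finset ℕ := s.image Prod.fst ∪ s.image Prod.snd

lemma mem_ends {s : Finset (ℕ × ℕ)} {i : ℕ} :
    i ∈ Ends s ↔ ∃ p ∈ s, p.1 = i ∨ p.2 = i := by
  simp only [Ends, mem_union, mem_image]
  constructor
  · rintro (⟨p, hp, rfl⟩ | ⟨p, hp, rfl⟩)
    exacts [⟨p, hp, Or.inl rfl⟩, ⟨p, hp, Or.inr rfl⟩]
  · rintro ⟨p, hp, (rfl | rfl)⟩
    exacts [Or.inl ⟨p, hp, rfl⟩, Or.inr ⟨p, hp, rfl⟩]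

lemma nray_iff {V : Finset ℕ} {s : Finset (ℕ × ℕ)} {i : ℕ} :
    NRay V s i ↔ i ∈ V ∧ i ∉ Ends s := by
  simp only [NRay, mem_ends]
  constructor
  · rintro ⟨h1, h2⟩
    refine ⟨h1, ?_⟩
    rintro ⟨p, hp, (h | h)⟩
    exacts [(h2 p hp).1 h, (h2 p hp).2 h]
  · rintro ⟨h1, h2⟩
    refine ⟨h1, fun p hp => ⟨fun h => h2 ⟨p, hp, Or.inl h⟩, fun h => h2 ⟨p, hp, Or.inr h⟩⟩⟩

lemma ends_card {s : Finset (ℕ × ℕ)} (hlt : ∀ p ∈ s, p.1 < p.2)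
    (hd : ∀ p ∈ s, ∀ q ∈ s, p ≠ q → p.1 ≠ q.1 ∧ p.1 ≠ q.2 ∧ p.2 ≠ q.1 ∧ p.2 ≠ q.2) :
    (Ends s).card = 2 * s.card := by
  induction s using Finset.induction with
  | empty => simp [Ends]
  | @insert p s hnot ih =>
    have hE : Ends (insert p s) = insert p.1 (insert p.2 (Ends s)) := by
      ext i; simp only [mem_ends, mem_insert]
      constructor
      · rintro ⟨q, (rfl | hq), hor⟩
        · rcases hor with rfl | rfl; exacts [Or.inl rfl, Or.inr (Or.inl rfl)]
        · exact Or.inr (Or.inr ⟨q, hq, hor⟩)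
      · rintro (rfl | rfl | ⟨q, hq, hor⟩)
        exacts [⟨p, Or.inl rfl, Or.inl rfl⟩, ⟨p, Or.inl rfl, Or.inr rfl⟩,
          ⟨q, Or.inr hq, hor⟩]
    have hp1 : p.1 ∉ insert p.2 (Ends s) := by
      simp only [mem_insert, mem_ends]
      rintro (h | ⟨q, hq, h⟩)
      · exact absurd h (hlt p (mem_insert_self _ _)).ne
      · have := hd p (mem_insert_self _ _) q (mem_insert_of_mem hq)
          (by rintro rfl; exact hnot hq)
        rcases h with h | h
        exacts [this.1 h.symm, this.2.1 h.symm]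
    have hp2 : p.2 ∉ Ends s := by
      simp only [mem_ends]
      rintro ⟨q, hq, h⟩
      have := hd p (mem_insert_self _ _) q (mem_insert_of_mem hq)
        (by rintro rfl; exact hnot hq)
      rcases h with h | h
      exacts [this.2.2.1 h.symm, this.2.2.2 h.symm]
    rw [hE, card_insert_of_notMem hp1, card_insert_of_notMem hp2,
      ih (fun q hq => hlt q (mem_insert_of_mem hq))
        (fun q hq r hr => hd q (mem_insert_of_mem hq) r (mem_insert_of_mem hr)),
      card_insert_of_notMem hnot]
    ring

lemma valid_card_le {V : Finset ℕ} {s : Finset (ℕ × ℕ)} (h : Valid V s) :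
    2 * s.card ≤ V.card := by
  rw [← ends_card h.2.1 h.2.2.1]
  exact card_le_card fun i hi => by
    rcases mem_ends.1 hi with ⟨p, hp, (rfl | rfl)⟩
    exacts [(h.1 p hp).1, (h.1 p hp).2]

lemma exists_nray {V : Finset ℕ} {s : Finset (ℕ × ℕ)} (h : Valid V s)
    (hlt : 2 * s.card < V.card) : ∃ i, NRay V s i := by
  have hsub : Ends s ⊆ V := fun i hi => by
    rcases mem_ends.1 hi with ⟨p, hp, (rfl | rfl)⟩
    exacts [(h.1 p hp).1, (h.1 p hp).2]
  have : (Ends s).card < V.card := by rw [ends_card h.2.1 h.2.2.1]; exact hlt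
  obtain ⟨i, hiV, hiE⟩ := exists_of_ssubset (ssubset_of_subset_of_ne hsub (by rintro rfl; omega))
  exact ⟨i, nray_iff.2 ⟨hiV, hiE⟩⟩


section Erase
variable {V : Finset ℕ} {v : ℕ}

lemma nray_erase_iff {s : Finset (ℕ × ℕ)} {i : ℕ} :
    NRay (V.erase v) s i ↔ NRay V s i ∧ i ≠ v := by
  simp only [NRay, mem_erase]; tauto

lemma valid_erase_iff (hext : ∀ a ∈ V, ∀ b ∈ V, ¬(a < v ∧ v < b))
    (s : Finset (ℕ × ℕ)) :
    Valid (V.erase v) s ↔ Valid V s ∧ ∀ p ∈ s, p.1 ≠ v ∧ p.2 ≠ v := by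
  constructor
  · intro h
    have h1 : ∀ p ∈ s, p.1 ∈ V ∧ p.2 ∈ V :=
      fun p hp => ⟨mem_of_mem_erase (h.1 p hp).1, mem_of_mem_erase (h.1 p hp).2⟩
    have hne : ∀ p ∈ s, p.1 ≠ v ∧ p.2 ≠ v :=
      fun p hp => ⟨ne_of_mem_erase (h.1 p hp).1, ne_of_mem_erase (h.1 p hp).2⟩
    refine ⟨⟨h1, h.2.1, h.2.2.1, h.2.2.2.1, fun p hp i hi => ?_⟩, hne⟩
    by_cases hiv : i = v
    · subst hiv
      intro hc
      exact hext p.1 (h1 p hp).1 p.2 (h1 p hp).2 hc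
    · exact h.2.2.2.2 p hp i (nray_erase_iff.2 ⟨hi, hiv⟩)
  · rintro ⟨h, hne⟩
    refine ⟨fun p hp => ⟨mem_erase.2 ⟨(hne p hp).1, (h.1 p hp).1⟩,
      mem_erase.2 ⟨(hne p hp).2, (h.1 p hp).2⟩⟩, h.2.1, h.2.2.1, h.2.2.2.1,
      fun p hp i hi => h.2.2.2.2 p hp i (nray_erase_iff.1 hi).1⟩

lemma markable_erase_max_iff (hmax : ∀ b ∈ V, b ≤ v)
    {s : Finset (ℕ × ℕ)} (hs' : ∀ p ∈ s, p.1 ∈ V.erase v ∧ p.2 ∈ V.erase v)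
    (q : ℕ × ℕ) :
    Markable (V.erase v) s q ↔ Markable V s q := by
  constructor
  · rintro ⟨hqs, hout, hrays⟩
    refine ⟨hqs, hout, fun i hi => ?_⟩
    by_cases hiv : i = v
    · subst hiv
      have : q.1 ≤ i := hmax q.1 (mem_of_mem_erase (hs' q hqs).1)
      omega
    · exact hrays i (nray_erase_iff.2 ⟨hi, hiv⟩)
  · rintro ⟨hqs, hout, hrays⟩
    exact ⟨hqs, hout, fun i hi => hrays i (nray_erase_iff.1 hi).1⟩

lemma filter_ray_valid (hext : ∀ a ∈ V, ∀ b ∈ V, ¬(a < v ∧ v < b)) (l : ℕ) :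
    (validF V l).filter (fun s => ∀ p ∈ s, p.1 ≠ v ∧ p.2 ≠ v) = validF (V.erase v) l := by
  ext s
  simp only [mem_filter, mem_validF, valid_erase_iff hext]
  tauto

lemma filter_ray_mvalid (hmax : ∀ b ∈ V, b ≤ v) (l : ℕ) :
    (mvalidF V l).filter (fun x => ∀ p ∈ x.1, p.1 ≠ v ∧ p.2 ≠ v) = mvalidF (V.erase v) l := by
  have hext : ∀ a ∈ V, ∀ b ∈ V, ¬(a < v ∧ v < b) := by
    intro a _ b hb hc
    exact absurd (hmax b hb) (by omega)
  ext x
  simp only [mem_filter, mem_mvalidF, valid_erase_iff hext]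
  constructor
  · rintro ⟨⟨hval, hcard, hM⟩, hne⟩
    refine ⟨⟨hval, hne⟩, hcard, fun p hp => ?_⟩
    have := (valid_erase_iff hext x.1).2 ⟨hval, hne⟩
    exact (markable_erase_max_iff hmax this.1 p).2 (hM p hp)
  · rintro ⟨hval, hcard, hM⟩
    refine ⟨⟨hval.1, hcard, fun p hp => ?_⟩, hval.2⟩
    have := (valid_erase_iff hext x.1).2 hval
    exact (markable_erase_max_iff hmax this.1 p).1 (hM p hp)

end Erase

section Cup
variable {V : Finset ℕ} {v : ℕ}

/-- rays of `insert (a,v) t` over `V` are rays of `t` over `V.erase v` other than `a`. -/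
lemma nray_insert_iff (hv : v ∈ V) {t : Finset (ℕ × ℕ)}
    (ht1 : ∀ p ∈ t, p.1 ∈ V.erase v ∧ p.2 ∈ V.erase v) {a i : ℕ} :
    NRay V (insert (a, v) t) i ↔ NRay (V.erase v) t i ∧ i ≠ a := by
  constructor
  · rintro ⟨hiV, hi⟩
    have hv' := hi (a, v) (mem_insert_self _ _)
    refine ⟨⟨mem_erase.2 ⟨fun h => hv'.2 h.symm, hiV⟩, fun p hp => hi p (mem_insert_of_mem hp)⟩, fun h => hv'.1 h.symm⟩
  · rintro ⟨⟨hiV, hi⟩, hia⟩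
    refine ⟨mem_of_mem_erase hiV, fun p hp => ?_⟩
    rcases mem_insert.1 hp with rfl | hp
    · exact ⟨fun h => hia h.symm, fun h => (ne_of_mem_erase hiV) h.symm⟩
    · exact hi p hp

lemma cup_step (hmax : ∀ b ∈ V, b ≤ v) {s : Finset (ℕ × ℕ)}
    (hs : Valid V s) {a : ℕ} (ha : (a, v) ∈ s) :
    Valid (V.erase v) (s.filter (fun p => p.2 ≠ v)) ∧
    NRay (V.erase v) (s.filter (fun p => p.2 ≠ v)) a ∧
    (∀ i, NRay (V.erase v) (s.filter (fun p => p.2 ≠ v)) i → i ≤ a) ∧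
    s = insert (a, v) (s.filter (fun p => p.2 ≠ v)) ∧
    (a, v) ∉ s.filter (fun p => p.2 ≠ v) := by
  set s' := s.filter (fun p => p.2 ≠ v) with hs'def
  have hsub : s' ⊆ s := filter_subset _ _
  have hav1 : a < v := hs.2.1 _ ha
  have haV : a ∈ V := (hs.1 _ ha).1
  have hvV : v ∈ V := (hs.1 _ ha).2
  -- endpoints of s' differ from a and v
  have hne_av : ∀ p ∈ s', p.1 ≠ a ∧ p.1 ≠ v ∧ p.2 ≠ a ∧ p.2 ≠ v := by
    intro p hp
    have hp2v : p.2 ≠ v := (mem_filter.1 hp).2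
    have hps : p ∈ s := hsub hp
    have hpav : p ≠ (a, v) := fun h => hp2v (by rw [h])
    have hd := hs.2.2.1 p hps (a, v) ha hpav
    have hp1v : p.1 ≠ v := by
      intro h
      have := hs.2.1 p hps
      have := hmax p.2 (hs.1 p hps).2
      omega
    exact ⟨hd.1, hp1v, hd.2.2.1, hp2v⟩
  have hray_lift : ∀ i, NRay (V.erase v) s' i → i ≠ a → NRay V s i := by
    rintro i ⟨hiV, hi⟩ hia
    refine ⟨mem_of_mem_erase hiV, fun p hp => ?_⟩
    by_cases hp2 : p.2 = v
    · have : p = (a, v) := by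
        by_contra hne
        exact (hs.2.2.1 p hp (a, v) ha hne).2.2.2 (by simpa using hp2)
      subst this
      exact ⟨fun h => hia h.symm, fun h => (ne_of_mem_erase hiV) h.symm⟩
    · exact hi p (mem_filter.2 ⟨hp, hp2⟩)
  have hvalid' : Valid (V.erase v) s' := by
    rw [valid_erase_iff (by intro x _ b hb hc; exact absurd (hmax b hb) (by omega))]
    constructor
    · refine ⟨fun p hp => hs.1 p (hsub hp), fun p hp => hs.2.1 p (hsub hp),
        fun p hp q hq h => hs.2.2.1 p (hsub hp) q (hsub hq) h,
        fun p hp q hq => hs.2.2.2.1 p (hsub hp) q (hsub hq), ?_⟩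
      intro p hp i hi
      -- i is a ray of (V, s'), i.e. i ∈ V and not endpoint of s'
      by_cases hia : i = a
      · intro hc
        rw [hia] at hc
        have hp2v : p.2 ≠ v := (mem_filter.1 hp).2
        have : p.2 < v := lt_of_le_of_ne (hmax p.2 (hs.1 p (hsub hp)).2) hp2v
        exact hs.2.2.2.1 p (hsub hp) (a, v) ha ⟨hc.1, hc.2, this⟩
      · by_cases hiv : i = v
        · subst hiv
          intro hc
          have : p.2 ≤ i := hmax p.2 (hs.1 p (hsub hp)).2
          omega
        · refine hs.2.2.2.2 p (hsub hp) i ?_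
          refine ⟨hi.1, fun q hq => ?_⟩
          by_cases hq2 : q.2 = v
          · have : q = (a, v) := by
              by_contra hne
              exact (hs.2.2.1 q hq (a, v) ha hne).2.2.2 (by simpa using hq2)
            subst this
            exact ⟨fun h => hia h.symm, fun h => hiv h.symm⟩
          · exact hi.2 q (mem_filter.2 ⟨hq, hq2⟩)
    · intro p hp
      exact ⟨(hne_av p hp).2.1, (hne_av p hp).2.2.2⟩
  have hray_a : NRay (V.erase v) s' a := by
    refine ⟨mem_erase.2 ⟨by omega, haV⟩, fun p hp => ?_⟩
    exact ⟨(hne_av p hp).1, (hne_av p hp).2.2.1⟩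
  have hray_max : ∀ i, NRay (V.erase v) s' i → i ≤ a := by
    intro i hi
    by_cases hia : i = a
    · omega
    have hrs : NRay V s i := hray_lift i hi hia
    have := hs.2.2.2.2 (a, v) ha i hrs
    have hiv : i < v := lt_of_le_of_ne (hmax i (mem_of_mem_erase hi.1)) (mem_erase.1 hi.1).1
    simp only at this
    omega
  have hseq : s = insert (a, v) s' := by
    ext q
    simp only [mem_insert, hs'def, mem_filter]
    constructor
    · intro hq
      by_cases hq2 : q.2 = v
      · left
        by_contra hne
        exact (hs.2.2.1 q hq (a, v) ha hne).2.2.2 (by simpa using hq2)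
      · exact Or.inr ⟨hq, hq2⟩
    · rintro (rfl | ⟨hq, _⟩)
      exacts [ha, hq]
  have hnotin : (a, v) ∉ s' := by
    intro h
    exact ((mem_filter.1 h).2) rfl
  exact ⟨hvalid', hray_a, hray_max, hseq, hnotin⟩

lemma cup_glue (hv : v ∈ V) (hmax : ∀ b ∈ V, b ≤ v) {t : Finset (ℕ × ℕ)}
    (ht : Valid (V.erase v) t) {a : ℕ} (hra : NRay (V.erase v) t a)
    (hmaxr : ∀ i, NRay (V.erase v) t i → i ≤ a) :
    Valid V (insert (a, v) t) ∧ (a, v) ∉ t := by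
  have haV : a ∈ V := mem_of_mem_erase hra.1
  have hav : a < v := lt_of_le_of_ne (hmax a haV) (mem_erase.1 hra.1).1
  have hend : ∀ p ∈ t, p.1 ∈ V.erase v ∧ p.2 ∈ V.erase v := ht.1
  have hnotin : (a, v) ∉ t := by
    intro h
    exact (mem_erase.1 (hend _ h).2).1 rfl
  have hlt' : ∀ p ∈ t, p.2 < v :=
    fun p hp => lt_of_le_of_ne (hmax p.2 (mem_of_mem_erase (hend p hp).2))
      (mem_erase.1 (hend p hp).2).1
  have hne_end : ∀ p ∈ t, p.1 ≠ a ∧ p.2 ≠ a :=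
    fun p hp => hra.2 p hp
  refine ⟨⟨?_, ?_, ?_, ?_, ?_⟩, hnotin⟩
  · intro p hp
    rcases mem_insert.1 hp with rfl | hp
    · exact ⟨haV, hv⟩
    · exact ⟨mem_of_mem_erase (hend p hp).1, mem_of_mem_erase (hend p hp).2⟩
  · intro p hp
    rcases mem_insert.1 hp with rfl | hp
    · exact hav
    · exact ht.2.1 p hp
  · intro p hp q hq hne
    rcases mem_insert.1 hp with rfl | hp <;> rcases mem_insert.1 hq with rfl | hq
    · exact absurd rfl hne
    · refine ⟨fun h => (hne_end q hq).1 h.symm, fun h => (hne_end q hq).2 h.symm,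
        fun h => (mem_erase.1 (hend q hq).1).1 h.symm, fun h => (mem_erase.1 (hend q hq).2).1 h.symm⟩
    · refine ⟨(hne_end p hp).1, fun h => (mem_erase.1 (hend p hp).1).1 h,
        (hne_end p hp).2, fun h => (mem_erase.1 (hend p hp).2).1 h⟩
    · exact ht.2.2.1 p hp q hq hne
  · intro p hp q hq
    rcases mem_insert.1 hp with rfl | hp <;> rcases mem_insert.1 hq with rfl | hq
    · simp
    · intro hc
      exact absurd (hlt' q hq) (by omega)
    · intro hc
      exact ht.2.2.2.2 p hp a hra ⟨hc.1, hc.2.1⟩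
    · exact ht.2.2.2.1 p hp q hq
  · intro p hp i hi
    have hi' : NRay (V.erase v) t i ∧ i ≠ a := (nray_insert_iff hv hend).1 hi
    rcases mem_insert.1 hp with rfl | hp
    · have := hmaxr i hi'.1
      simp only
      omega
    · exact ht.2.2.2.2 p hp i hi'.1

lemma markable_insert_iff (hv : v ∈ V) (hmax : ∀ b ∈ V, b ≤ v) {t : Finset (ℕ × ℕ)}
    (ht : Valid (V.erase v) t) {a : ℕ} (hra : NRay (V.erase v) t a)
    {q : ℕ × ℕ} (hq : q ∈ t) :
    Markable V (insert (a, v) t) q ↔ Markable (V.erase v) t q := by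
  have hend := ht.1
  have hq2v : q.2 < v := lt_of_le_of_ne (hmax q.2 (mem_of_mem_erase (hend q hq).2))
    (mem_erase.1 (hend q hq).2).1
  constructor
  · rintro ⟨_, hout, hrays⟩
    refine ⟨hq, fun r hr => hout r (mem_insert_of_mem hr), fun i hi => ?_⟩
    by_cases hia : i = a
    · have := hout (a, v) (mem_insert_self _ _)
      simp only at this
      omega
    · exact hrays i ((nray_insert_iff hv hend).2 ⟨hi, hia⟩)
  · rintro ⟨_, hout, hrays⟩
    refine ⟨mem_insert_of_mem hq, fun r hr => ?_, fun i hi => ?_⟩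
    · rcases mem_insert.1 hr with rfl | hr
      · have := hrays a hra
        simp only
        omega
      · exact hout r hr
    · exact hrays i ((nray_insert_iff hv hend).1 hi).1

lemma markable_new_cup (hv : v ∈ V) (hmax : ∀ b ∈ V, b ≤ v) {t : Finset (ℕ × ℕ)}
    (ht : Valid (V.erase v) t) {a : ℕ} (hra : NRay (V.erase v) t a)
    (hmaxr : ∀ i, NRay (V.erase v) t i → i ≤ a) :
    Markable V (insert (a, v) t) (a, v) ↔ ∀ i, ¬ NRay V (insert (a, v) t) i := by
  have hend := ht.1
  constructor
  · rintro ⟨_, _, hrays⟩ i hi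
    have hi' := (nray_insert_iff hv hend).1 hi
    have h1 : i ≤ a := hmaxr i hi'.1
    have h2 : i < a := lt_of_le_of_ne h1 hi'.2
    exact hrays i hi (by simpa using h2)
  · intro hnone
    refine ⟨mem_insert_self _ _, fun r hr => ?_, fun i hi => absurd hi (hnone i)⟩
    rcases mem_insert.1 hr with rfl | hr
    · simp
    · have : r.2 < v := lt_of_le_of_ne (hmax r.2 (mem_of_mem_erase (hend r hr).2))
        (mem_erase.1 (hend r hr).2).1
      simp only
      omega

end Cup

section CardStep
variable {V : Finset ℕ} {v : ℕ} {l : ℕ}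

noncomputable def raysF (W : Finset ℕ) (t : Finset (ℕ × ℕ)) : Finset ℕ :=
  W.filter (fun i => ∀ p ∈ t, p.1 ≠ i ∧ p.2 ≠ i)

lemma mem_raysF {W : Finset ℕ} {t : Finset (ℕ × ℕ)} {i : ℕ} :
    i ∈ raysF W t ↔ NRay W t i := by simp [raysF, NRay]

lemma raysF_nonempty {W : Finset ℕ} {t : Finset (ℕ × ℕ)} (ht : Valid W t)
    (h2 : 2 * t.card < W.card) : (raysF W t).Nonempty := by
  obtain ⟨i, hi⟩ := exists_nray ht h2
  exact ⟨i, mem_raysF.2 hi⟩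

lemma exists_cup_v (hmax : ∀ b ∈ V, b ≤ v) {s : Finset (ℕ × ℕ)} (hs : Valid V s)
    (h : ¬ ∀ p ∈ s, p.1 ≠ v ∧ p.2 ≠ v) : ∃ a, (a, v) ∈ s := by
  push_neg at h
  obtain ⟨p, hp, hor⟩ := h
  have h1 : p.1 ≠ v := by
    intro he
    have := hs.2.1 p hp
    have := hmax p.2 (hs.1 p hp).2
    omega
  have h2 : p.2 = v := by tauto
  exact ⟨p.1, by rwa [show (p.1, v) = p from Prod.ext rfl h2.symm]⟩

lemma cup_v_unique {s : Finset (ℕ × ℕ)} (hs : Valid V s) {a b : ℕ}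
    (h1 : (a, v) ∈ s) (h2 : (b, v) ∈ s) : a = b := by
  by_contra hne
  exact (hs.2.2.1 _ h1 _ h2 (by simp [hne])).2.2.2 rfl

/-- the maximal ray of `t` in `V.erase v`, as needed for reattaching the cup. -/
noncomputable def mray (V : Finset ℕ) (v : ℕ) (t : Finset (ℕ × ℕ)) : ℕ :=
  ((raysF (V.erase v) t).max).getD 0

lemma mray_spec {t : Finset (ℕ × ℕ)} (hne : (raysF (V.erase v) t).Nonempty) :
    NRay (V.erase v) t (mray V v t) ∧ ∀ i, NRay (V.erase v) t i → i ≤ mray V v t := by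
  have h1 : mray V v t = (raysF (V.erase v) t).max' hne := by
    rw [mray, ← Finset.coe_max' hne]
    rfl
  rw [h1]
  exact ⟨mem_raysF.1 (Finset.max'_mem _ hne),
    fun i hi => Finset.le_max' _ i (mem_raysF.2 hi)⟩

lemma mray_eq {t : Finset (ℕ × ℕ)} {a : ℕ} (ha : NRay (V.erase v) t a)
    (hmaxr : ∀ i, NRay (V.erase v) t i → i ≤ a) : mray V v t = a := by
  have hne : (raysF (V.erase v) t).Nonempty := ⟨a, mem_raysF.2 ha⟩
  have h := mray_spec (V := V) (v := v) hne
  exact le_antisymm (hmaxr _ h.1) (h.2 a ha)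

end CardStep

section Bijections
variable {V : Finset ℕ} {v : ℕ} {l : ℕ}

lemma erase_card_rays {t : Finset (ℕ × ℕ)} (hv : v ∈ V)
    (ht : Valid (V.erase v) t) (htc : t.card = l - 1) (hl : 1 ≤ l)
    (hcard : 2 * l ≤ V.card) : (raysF (V.erase v) t).Nonempty := by
  refine raysF_nonempty ht ?_
  rw [htc, card_erase_of_mem hv]
  omega

/-- the cup-at-max part of `validF` is counted by `validF (V.erase v) (l-1)`. -/
lemma validF_cup_card (hv : v ∈ V) (hmax : ∀ b ∈ V, b ≤ v) (hl : 1 ≤ l)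
    (hcard : 2 * l ≤ V.card) :
    ((validF V l).filter (fun s => ¬ ∀ p ∈ s, p.1 ≠ v ∧ p.2 ≠ v)).card
      = (validF (V.erase v) (l - 1)).card := by
  refine card_bij' (fun s _ => s.filter (fun p => p.2 ≠ v))
    (fun t ht => insert (mray V v t, v) t) ?_ ?_ ?_ ?_
  · intro s hs
    rw [mem_filter, mem_validF] at hs
    obtain ⟨⟨hval, hcd⟩, htouch⟩ := hs
    obtain ⟨a, ha⟩ := exists_cup_v hmax hval htouch
    obtain ⟨h1, _, _, h4, h5⟩ := cup_step hmax hval ha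
    rw [mem_validF]
    refine ⟨h1, ?_⟩
    have := card_insert_of_notMem h5
    rw [← h4, hcd] at this
    omega
  · intro t ht
    rw [mem_validF] at ht
    have hne := erase_card_rays hv ht.1 ht.2 hl hcard
    have hspec := mray_spec (V := V) (v := v) hne
    obtain ⟨hval, hnotin⟩ := cup_glue hv hmax ht.1 hspec.1 hspec.2
    rw [mem_filter, mem_validF]
    refine ⟨⟨hval, ?_⟩, ?_⟩
    · rw [card_insert_of_notMem hnotin, ht.2]
      omega
    · push_neg
      exact ⟨(mray V v t, v), mem_insert_self _ _, fun _ => rfl⟩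
  · intro s hs
    rw [mem_filter, mem_validF] at hs
    obtain ⟨⟨hval, hcd⟩, htouch⟩ := hs
    obtain ⟨a, ha⟩ := exists_cup_v hmax hval htouch
    obtain ⟨h1, h2, h3, h4, h5⟩ := cup_step hmax hval ha
    rw [mray_eq h2 h3, ← h4]
  · intro t ht
    rw [mem_validF] at ht
    rw [filter_insert]
    simp only [ne_eq, not_true_eq_false, if_false, if_neg (not_not_intro rfl)]
    exact filter_true_of_mem fun p hp => (mem_erase.1 (ht.1.1 p hp).2).1

/-- cup at max, not marked: counted by `mvalidF (V.erase v) (l-1)`. -/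
lemma mvalidF_cupA_card (hv : v ∈ V) (hmax : ∀ b ∈ V, b ≤ v) (hl : 1 ≤ l)
    (hcard : 2 * l ≤ V.card) :
    ((mvalidF V l).filter (fun x =>
        (¬ ∀ p ∈ x.1, p.1 ≠ v ∧ p.2 ≠ v) ∧ ∀ p ∈ x.2, p.2 ≠ v)).card
      = (mvalidF (V.erase v) (l - 1)).card := by
  refine card_bij' (fun x _ => (x.1.filter (fun p => p.2 ≠ v), x.2))
    (fun y hy => (insert (mray V v y.1, v) y.1, y.2)) ?_ ?_ ?_ ?_
  · intro x hx
    rw [mem_filter, mem_mvalidF] at hx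
    obtain ⟨⟨hval, hcd, hM⟩, htouch, hMv⟩ := hx
    obtain ⟨a, ha⟩ := exists_cup_v hmax hval htouch
    obtain ⟨h1, h2, h3, h4, h5⟩ := cup_step hmax hval ha
    rw [mem_mvalidF]
    have hcd' : (x.1.filter (fun p => p.2 ≠ v)).card = l - 1 := by
      have := card_insert_of_notMem h5
      rw [← h4, hcd] at this
      omega
    refine ⟨h1, hcd', fun p hp => ?_⟩
    have hmem : p ∈ x.1.filter (fun p => p.2 ≠ v) :=
      mem_filter.2 ⟨(hM p hp).1, hMv p hp⟩
    have hMk := hM p hp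
    rw [h4] at hMk
    exact (markable_insert_iff hv hmax h1 h2 hmem).1 hMk
  · intro y hy
    rw [mem_mvalidF] at hy
    obtain ⟨hval, hcd, hN⟩ := hy
    have hne := erase_card_rays hv hval hcd hl hcard
    have hspec := mray_spec (V := V) (v := v) hne
    obtain ⟨hvalid, hnotin⟩ := cup_glue hv hmax hval hspec.1 hspec.2
    rw [mem_filter, mem_mvalidF]
    refine ⟨⟨hvalid, by rw [card_insert_of_notMem hnotin, hcd]; omega, fun p hp => ?_⟩, ?_, ?_⟩
    · exact (markable_insert_iff hv hmax hval hspec.1 (hN p hp).1).2 (hN p hp)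
    · push_neg
      exact ⟨(mray V v y.1, v), mem_insert_self _ _, fun _ => rfl⟩
    · intro p hp
      exact (mem_erase.1 (hval.1 p (hN p hp).1).2).1
  · intro x hx
    dsimp only
    rw [mem_filter, mem_mvalidF] at hx
    obtain ⟨⟨hval, hcd, hM⟩, htouch, hMv⟩ := hx
    obtain ⟨a, ha⟩ := exists_cup_v hmax hval htouch
    obtain ⟨h1, h2, h3, h4, h5⟩ := cup_step hmax hval ha
    rw [Prod.mk.injEq]
    exact ⟨by rw [mray_eq h2 h3, ← h4], rfl⟩
  · intro y hy
    dsimp only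
    rw [mem_mvalidF] at hy
    rw [Prod.mk.injEq]
    refine ⟨?_, rfl⟩
    rw [filter_insert]
    simp only [ne_eq, not_true_eq_false, if_false, if_neg (not_not_intro rfl)]
    exact filter_true_of_mem fun p hp => (mem_erase.1 (hy.1.1 p hp).2).1

end Bijections

section BijB
variable {V : Finset ℕ} {v : ℕ} {l : ℕ}

lemma no_nray_of_full {s : Finset (ℕ × ℕ)} (hs : Valid V s)
    (hcd : 2 * s.card = V.card) : ∀ i, ¬ NRay V s i := by
  intro i hi
  have hsub : Ends s ⊆ V := fun j hj => by
    rcases mem_ends.1 hj with ⟨p, hp, (rfl | rfl)⟩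
    exacts [(hs.1 p hp).1, (hs.1 p hp).2]
  have hEq : Ends s = V := eq_of_subset_of_card_le hsub
    (by rw [ends_card hs.2.1 hs.2.2.1]; omega)
  have := (nray_iff.1 hi)
  rw [hEq] at this
  exact this.2 this.1

lemma marked_cup_eq {s M : Finset (ℕ × ℕ)} (hval : Valid V s)
    (hM : ∀ p ∈ M, Markable V s p) {a : ℕ} (ha : (a, v) ∈ s)
    (h : ¬ ∀ p ∈ M, p.2 ≠ v) : (a, v) ∈ M := by
  push_neg at h
  obtain ⟨p, hp, hp2⟩ := h
  have hps : p ∈ s := (hM p hp).1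
  have : (p.1, v) ∈ s := by rwa [show (p.1, v) = p from Prod.ext rfl hp2.symm]
  have h1 := cup_v_unique hval this ha
  exact (Prod.ext h1 hp2 : p = (a, v)) ▸ hp

lemma mvalidF_cupB_empty (hmax : ∀ b ∈ V, b ≤ v) (hcard : 2 * l < V.card) :
    (mvalidF V l).filter (fun x =>
        (¬ ∀ p ∈ x.1, p.1 ≠ v ∧ p.2 ≠ v) ∧ ¬ ∀ p ∈ x.2, p.2 ≠ v) = ∅ := by
  rw [eq_empty_iff_forall_notMem]
  intro x hx
  rw [mem_filter, mem_mvalidF] at hx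
  obtain ⟨⟨hval, hcd, hM⟩, htouch, hMv⟩ := hx
  obtain ⟨a, ha⟩ := exists_cup_v hmax hval htouch
  have hmem : (a, v) ∈ x.2 := marked_cup_eq hval hM ha hMv
  have hMk := hM _ hmem
  obtain ⟨h1, h2, h3, h4, h5⟩ := cup_step hmax hval ha
  rw [h4] at hMk
  have hnone := (markable_new_cup (hval.1 _ ha).2 hmax h1 h2 h3).1 hMk
  obtain ⟨i, hi⟩ := exists_nray hval (by omega)
  rw [h4] at hi
  exact hnone i hi

lemma mvalidF_cupB_card (hv : v ∈ V) (hmax : ∀ b ∈ V, b ≤ v) (hl : 1 ≤ l)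
    (hcard : 2 * l = V.card) :
    ((mvalidF V l).filter (fun x =>
        (¬ ∀ p ∈ x.1, p.1 ≠ v ∧ p.2 ≠ v) ∧ ¬ ∀ p ∈ x.2, p.2 ≠ v)).card
      = (mvalidF (V.erase v) (l - 1)).card := by
  refine card_bij' (fun x _ => (x.1.filter (fun p => p.2 ≠ v), x.2.filter (fun p => p.2 ≠ v)))
    (fun y hy => (insert (mray V v y.1, v) y.1, insert (mray V v y.1, v) y.2)) ?_ ?_ ?_ ?_
  · intro x hx
    rw [mem_filter, mem_mvalidF] at hx
    obtain ⟨⟨hval, hcd, hM⟩, htouch, hMv⟩ := hx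
    obtain ⟨a, ha⟩ := exists_cup_v hmax hval htouch
    obtain ⟨h1, h2, h3, h4, h5⟩ := cup_step hmax hval ha
    rw [mem_mvalidF]
    have hcd' : (x.1.filter (fun p => p.2 ≠ v)).card = l - 1 := by
      have h6 := card_insert_of_notMem h5
      rw [← h4, hcd] at h6
      omega
    refine ⟨h1, hcd', fun p hp => ?_⟩
    rw [mem_filter] at hp
    have hMk := hM p hp.1
    have hmem : p ∈ x.1.filter (fun p => p.2 ≠ v) :=
      mem_filter.2 ⟨hMk.1, hp.2⟩
    rw [h4] at hMk
    exact (markable_insert_iff hv hmax h1 h2 hmem).1 hMk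
  · intro y hy
    rw [mem_mvalidF] at hy
    obtain ⟨hval, hcd, hN⟩ := hy
    have hne := erase_card_rays hv hval hcd hl (le_of_eq hcard)
    have hspec := mray_spec (V := V) (v := v) hne
    obtain ⟨hvalid, hnotin⟩ := cup_glue hv hmax hval hspec.1 hspec.2
    have hcdfull : (insert (mray V v y.1, v) y.1).card = l := by
      rw [card_insert_of_notMem hnotin, hcd]; omega
    rw [mem_filter, mem_mvalidF]
    have hnone : ∀ i, ¬ NRay V (insert (mray V v y.1, v) y.1) i :=
      no_nray_of_full hvalid (by rw [hcdfull]; omega)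
    refine ⟨⟨hvalid, hcdfull, fun p hp => ?_⟩, ?_, ?_⟩
    · dsimp only at hp ⊢
      rcases mem_insert.1 hp with rfl | hp
      · exact (markable_new_cup hv hmax hval hspec.1 hspec.2).2 hnone
      · exact (markable_insert_iff hv hmax hval hspec.1 (hN p hp).1).2 (hN p hp)
    · dsimp only
      push_neg
      exact ⟨(mray V v y.1, v), mem_insert_self _ _, fun _ => rfl⟩
    · dsimp only
      push_neg
      exact ⟨(mray V v y.1, v), mem_insert_self _ _, rfl⟩
  · intro x hx
    dsimp only
    rw [mem_filter, mem_mvalidF] at hx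
    obtain ⟨⟨hval, hcd, hM⟩, htouch, hMv⟩ := hx
    obtain ⟨a, ha⟩ := exists_cup_v hmax hval htouch
    obtain ⟨h1, h2, h3, h4, h5⟩ := cup_step hmax hval ha
    have hmem : (a, v) ∈ x.2 := marked_cup_eq hval hM ha hMv
    rw [Prod.mk.injEq]
    constructor
    · rw [mray_eq h2 h3, ← h4]
    · rw [mray_eq h2 h3]
      ext q
      simp only [mem_insert, mem_filter]
      constructor
      · rintro (rfl | ⟨hq, _⟩)
        exacts [hmem, hq]
      · intro hq
        by_cases hq2 : q.2 = v
        · left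
          have hqs : q ∈ x.1 := (hM q hq).1
          have : (q.1, v) ∈ x.1 := by rwa [show (q.1, v) = q from Prod.ext rfl hq2.symm]
          have := cup_v_unique hval this ha
          exact Prod.ext this hq2
        · exact Or.inr ⟨hq, hq2⟩
  · intro y hy
    dsimp only
    rw [mem_mvalidF] at hy
    rw [Prod.mk.injEq]
    constructor
    · rw [filter_insert]
      simp only [ne_eq, not_true_eq_false, if_false, if_neg (not_not_intro rfl)]
      exact filter_true_of_mem fun p hp => (mem_erase.1 (hy.1.1 p hp).2).1
    · rw [filter_insert]
      simp only [ne_eq, not_true_eq_false, if_false, if_neg (not_not_intro rfl)]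
      exact filter_true_of_mem fun p hp => (mem_erase.1 (hy.1.1 p (hy.2.2 p hp).1).2).1

end BijB

section Formulas
variable {V : Finset ℕ} {v : ℕ} {l : ℕ}

lemma valid_empty : Valid V (∅ : Finset (ℕ × ℕ)) := by
  refine ⟨?_, ?_, ?_, ?_, ?_⟩ <;> intro p hp <;> simp at hp

lemma validF_zero : validF V 0 = {(∅ : Finset (ℕ × ℕ))} := by
  ext s
  simp only [mem_validF, mem_singleton, card_eq_zero]
  constructor
  · rintro ⟨_, rfl⟩; rfl
  · rintro rfl; exact ⟨valid_empty, rfl⟩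

lemma mvalidF_zero : mvalidF V 0 = {((∅ : Finset (ℕ × ℕ)), (∅ : Finset (ℕ × ℕ)))} := by
  ext x
  simp only [mem_mvalidF, mem_singleton, card_eq_zero]
  constructor
  · rintro ⟨_, h1, h2⟩
    have : x.2 = ∅ := by
      rw [eq_empty_iff_forall_notMem]
      intro p hp
      have := (h2 p hp).1
      rw [h1] at this
      simp at this
    exact Prod.ext h1 this
  · rintro rfl
    exact ⟨valid_empty, rfl, by simp⟩

lemma validF_empty (h : V.card < 2 * l) : validF V l = ∅ := by
  rw [eq_empty_iff_forall_notMem]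
  intro s hs
  rw [mem_validF] at hs
  have := valid_card_le hs.1
  rw [hs.2] at this
  omega

lemma mvalidF_empty (h : V.card < 2 * l) : mvalidF V l = ∅ := by
  rw [eq_empty_iff_forall_notMem]
  intro x hx
  rw [mem_mvalidF] at hx
  have := valid_card_le hx.1
  rw [hx.2.1] at this
  omega

lemma validF_rec (hv : v ∈ V) (hmax : ∀ b ∈ V, b ≤ v) (hl : 1 ≤ l)
    (hcard : 2 * l ≤ V.card) :
    (validF V l).card
      = (validF (V.erase v) l).card + (validF (V.erase v) (l - 1)).card := by
  have hext : ∀ a ∈ V, ∀ b ∈ V, ¬(a < v ∧ v < b) := by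
    intro a _ b hb hc; exact absurd (hmax b hb) (by omega)
  rw [← card_filter_add_card_filter_not
    (p := fun s => ∀ p ∈ s, p.1 ≠ v ∧ p.2 ≠ v) (s := validF V l),
    filter_ray_valid hext, validF_cup_card hv hmax hl hcard]

lemma mvalidF_rec (hv : v ∈ V) (hmax : ∀ b ∈ V, b ≤ v) (hl : 1 ≤ l)
    (hcard : 2 * l ≤ V.card) :
    (mvalidF V l).card
      = (mvalidF (V.erase v) l).card + (mvalidF (V.erase v) (l - 1)).card
        + (if 2 * l = V.card then (mvalidF (V.erase v) (l - 1)).card else 0) := by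
  have hsplit := card_filter_add_card_filter_not
    (p := fun x : Finset (ℕ × ℕ) × Finset (ℕ × ℕ) => ∀ p ∈ x.1, p.1 ≠ v ∧ p.2 ≠ v)
    (s := mvalidF V l)
  have hsplit2 := card_filter_add_card_filter_not
    (p := fun x : Finset (ℕ × ℕ) × Finset (ℕ × ℕ) => ∀ p ∈ x.2, p.2 ≠ v)
    (s := (mvalidF V l).filter (fun x => ¬ ∀ p ∈ x.1, p.1 ≠ v ∧ p.2 ≠ v))
  rw [filter_filter, filter_filter] at hsplit2
  rw [filter_ray_mvalid hmax] at hsplit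
  have hA : ((mvalidF V l).filter (fun x =>
      (¬ ∀ p ∈ x.1, p.1 ≠ v ∧ p.2 ≠ v) ∧ ∀ p ∈ x.2, p.2 ≠ v)).card
      = (mvalidF (V.erase v) (l - 1)).card := mvalidF_cupA_card hv hmax hl hcard
  by_cases hfull : 2 * l = V.card
  · have hB := mvalidF_cupB_card hv hmax hl hfull
    rw [if_pos hfull]
    omega
  · have hB : ((mvalidF V l).filter (fun x =>
        (¬ ∀ p ∈ x.1, p.1 ≠ v ∧ p.2 ≠ v) ∧ ¬ ∀ p ∈ x.2, p.2 ≠ v)).card = 0 := by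
      rw [mvalidF_cupB_empty hmax (by omega), card_empty]
    rw [if_neg hfull]
    omega

lemma pascal {n k : ℕ} (hn : 1 ≤ n) (hk : 1 ≤ k) :
    n.choose k = (n - 1).choose (k - 1) + (n - 1).choose k := by
  obtain ⟨nn, rfl⟩ : ∃ nn, n = nn + 1 := ⟨n - 1, by omega⟩
  obtain ⟨kk, rfl⟩ : ∃ kk, k = kk + 1 := ⟨k - 1, by omega⟩
  simp [Nat.choose_succ_succ]

lemma choose_symm_half {k : ℕ} (hk : 1 ≤ k) :
    (2 * k - 1).choose k = (2 * k - 1).choose (k - 1) := by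
  have h := Nat.choose_symm (n := 2 * k - 1) (k := k) (by omega)
  rw [show 2 * k - 1 - k = k - 1 by omega] at h
  exact h.symm

lemma mvalidF_formula : ∀ n (V : Finset ℕ) (l : ℕ), V.card = n → 2 * l ≤ n →
    (mvalidF V l).card = n.choose l := by
  intro n
  induction n using Nat.strong_induction_on with
  | _ n IH =>
    intro V l hVn hln
    rcases Nat.eq_zero_or_pos l with rfl | hl
    · rw [mvalidF_zero]
      simp
    have hVne : V.Nonempty := by
      rw [← card_pos, hVn]; omega
    set v := V.max' hVne with hvdef
    have hv : v ∈ V := max'_mem _ _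
    have hmax : ∀ b ∈ V, b ≤ v := fun b hb => le_max' _ _ hb
    have hVc : (V.erase v).card = n - 1 := by rw [card_erase_of_mem hv, hVn]
    have hrec := mvalidF_rec hv hmax hl (by omega)
    rw [hVn] at hrec
    have hIH1 : (mvalidF (V.erase v) (l - 1)).card = (n - 1).choose (l - 1) :=
      IH (n - 1) (by omega) _ _ hVc (by omega)
    have hP := pascal (n := n) (k := l) (by omega) hl
    by_cases hfull : 2 * l = n
    · have h0 : (mvalidF (V.erase v) l).card = 0 := by
        rw [mvalidF_empty (by omega), card_empty]
      rw [if_pos hfull] at hrec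
      have hsym : (n - 1).choose l = (n - 1).choose (l - 1) := by
        rw [show n - 1 = 2 * l - 1 by omega]
        exact choose_symm_half hl
      omega
    · have hIH2 : (mvalidF (V.erase v) l).card = (n - 1).choose l :=
        IH (n - 1) (by omega) _ _ hVc (by omega)
      rw [if_neg hfull] at hrec
      omega

lemma validF_formula : ∀ n (V : Finset ℕ) (l : ℕ), V.card = n → 2 * l ≤ n →
    (validF V l).card + (if l = 0 then 0 else n.choose (l - 1)) = n.choose l := by
  intro n
  induction n using Nat.strong_induction_on with
  | _ n IH =>
    intro V l hVn hln
    rcases Nat.eq_zero_or_pos l with rfl | hl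
    · rw [validF_zero]
      simp
    rw [if_neg (by omega)]
    have hVne : V.Nonempty := by
      rw [← card_pos, hVn]; omega
    set v := V.max' hVne with hvdef
    have hv : v ∈ V := max'_mem _ _
    have hmax : ∀ b ∈ V, b ≤ v := fun b hb => le_max' _ _ hb
    have hVc : (V.erase v).card = n - 1 := by rw [card_erase_of_mem hv, hVn]
    have hrec := validF_rec hv hmax hl (by omega)
    have hP := pascal (n := n) (k := l) (by omega) hl
    rcases Nat.lt_or_ge l 2 with hl1 | hl2
    · -- l = 1
      have hleq : l = 1 := by omega
      subst hleq
      have hz : (validF (V.erase v) (1 - 1)).card = 1 := by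
        norm_num [validF_zero]
      have hc1 : n.choose 1 = n := Nat.choose_one_right n
      have hc0 : n.choose (1 - 1) = 1 := Nat.choose_zero_right n
      have hc0'' : (n - 1).choose (1 - 1) = 1 := Nat.choose_zero_right _
      by_cases hfull : 2 * 1 = n
      · have h0 : (validF (V.erase v) 1).card = 0 := by
          rw [validF_empty (by omega), card_empty]
        omega
      · have hIH2 := IH (n - 1) (by omega) (V.erase v) 1 hVc (by omega)
        rw [if_neg one_ne_zero] at hIH2
        have hc1' : (n - 1).choose 1 = n - 1 := Nat.choose_one_right _
        have hc0' : (n - 1).choose (1 - 1) = 1 := Nat.choose_zero_right _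
        omega
    · -- l ≥ 2
      have hIH1 := IH (n - 1) (by omega) (V.erase v) (l - 1) hVc (by omega)
      rw [if_neg (by omega), show l - 1 - 1 = l - 2 by omega] at hIH1
      have hPl : n.choose (l - 1) = (n - 1).choose (l - 2) + (n - 1).choose (l - 1) := by
        have := pascal (n := n) (k := l - 1) (by omega) (by omega)
        rwa [show l - 1 - 1 = l - 2 by omega] at this
      by_cases hfull : 2 * l = n
      · have h0 : (validF (V.erase v) l).card = 0 := by
          rw [validF_empty (by omega), card_empty]
        have hsym : (n - 1).choose l = (n - 1).choose (l - 1) := by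
          rw [show n - 1 = 2 * l - 1 by omega]
          exact choose_symm_half (by omega)
        omega
      · have hIH2 := IH (n - 1) (by omega) (V.erase v) l hVc (by omega)
        rw [if_neg (by omega)] at hIH2
        omega

end Formulas

section MinVertex
variable {m l : ℕ}

lemma hext_zero {V : Finset ℕ} : ∀ a ∈ V, ∀ b ∈ V, ¬(a < 0 ∧ 0 < b) := by
  intro a _ b _ hc
  omega

/-- diagrams whose vertex `0` is a ray, with marking data: counted by plain valid
diagrams on the remaining vertices. -/
lemma mvalidF_zero_ray_card (hm : 0 < m) :
    ((mvalidF (range m) l).filter (fun x => ∀ p ∈ x.1, p.1 ≠ 0 ∧ p.2 ≠ 0)).card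
      = (validF ((range m).erase 0) l).card := by
  have h0m : (0 : ℕ) ∈ range m := mem_range.2 hm
  refine card_bij' (fun x _ => x.1) (fun s hs => (s, ∅)) ?_ ?_ ?_ ?_
  · intro x hx
    rw [mem_filter, mem_mvalidF] at hx
    rw [mem_validF]
    exact ⟨(valid_erase_iff hext_zero x.1).2 ⟨hx.1.1, hx.2⟩, hx.1.2.1⟩
  · intro s hs
    rw [mem_validF] at hs
    have hs' := (valid_erase_iff hext_zero s).1 hs.1
    rw [mem_filter, mem_mvalidF]
    exact ⟨⟨hs'.1, hs.2, by simp⟩, hs'.2⟩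
  · intro x hx
    rw [mem_filter, mem_mvalidF] at hx
    obtain ⟨⟨hval, hcd, hM⟩, hne⟩ := hx
    have hray0 : NRay (range m) x.1 0 := ⟨h0m, hne⟩
    have hM0 : x.2 = ∅ := by
      rw [eq_empty_iff_forall_notMem]
      intro p hp
      have hMk := hM p hp
      have hp1 : p.1 ≠ 0 := (hne p hMk.1).1
      exact hMk.2.2 0 hray0 (by omega)
    exact Prod.ext rfl hM0.symm
  · intro s hs
    rfl

lemma validF_zero_ray (hm : 0 < m) :
    ((validF (range m) l).filter (fun s => ∀ p ∈ s, p.1 ≠ 0 ∧ p.2 ≠ 0))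
      = validF ((range m).erase 0) l :=
  filter_ray_valid hext_zero l

lemma range_erase_card (hm : 0 < m) : ((range m).erase 0).card = m - 1 := by
  rw [card_erase_of_mem (mem_range.2 hm), card_range]

/-- the two final counting facts in the ℕ world -/
lemma count_zero_ray (hm : 0 < m) (hml : 2 * l ≤ m - 1) :
    (validF ((range m).erase 0) l).card
      = (m - 1).choose l - (if l = 0 then 0 else (m - 1).choose (l - 1)) := by
  have := validF_formula (m - 1) ((range m).erase 0) l (range_erase_card hm) hml
  omega

lemma count_nonzero_ray (hm : 0 < m) (hml : 2 * l ≤ m - 1) :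
    ((mvalidF (range m) l).filter (fun x => ¬ ∀ p ∈ x.1, p.1 ≠ 0 ∧ p.2 ≠ 0)).card
      = 2 * (if l = 0 then 0 else (m - 1).choose (l - 1)) := by
  have htot := mvalidF_formula m (range m) l (card_range m) (by omega)
  have hsplit := card_filter_add_card_filter_not
    (p := fun x : Finset (ℕ × ℕ) × Finset (ℕ × ℕ) => ∀ p ∈ x.1, p.1 ≠ 0 ∧ p.2 ≠ 0)
    (s := mvalidF (range m) l)
  rw [mvalidF_zero_ray_card hm] at hsplit
  have hz := count_zero_ray hm hml
  have hfor := validF_formula (m - 1) ((range m).erase 0) l (range_erase_card hm) hml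
  rcases Nat.eq_zero_or_pos l with rfl | hl
  · rw [if_pos rfl] at hz ⊢
    have : (m - 1).choose 0 = 1 := Nat.choose_zero_right _
    have h1 : m.choose 0 = 1 := Nat.choose_zero_right _
    omega
  · rw [if_neg (by omega)] at hz hfor ⊢
    have hP : m.choose l = (m - 1).choose (l - 1) + (m - 1).choose l :=
      pascal (by omega) hl
    omega

end MinVertex
end CupCount
namespace CupTransfer
open CupCount
variable {m : ℕ}





def toN (F : Finset (Fin m × Fin m)) : Finset (ℕ × ℕ) :=
  F.image (fun p => ((p.1 : ℕ), (p.2 : ℕ)))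

noncomputable def toF (hm : 0 < m) (G : Finset (ℕ × ℕ)) : Finset (Fin m × Fin m) :=
  G.image (fun q => (⟨q.1 % m, Nat.mod_lt _ hm⟩, ⟨q.2 % m, Nat.mod_lt _ hm⟩))

lemma val_inj : Function.Injective (fun p : Fin m × Fin m => ((p.1 : ℕ), (p.2 : ℕ))) := by
  rintro ⟨a, b⟩ ⟨c, d⟩ h
  simp only [Prod.mk.injEq] at h
  exact Prod.ext (Fin.val_injective h.1) (Fin.val_injective h.2)

lemma toN_card (F : Finset (Fin m × Fin m)) : (toN F).card = F.card :=
  card_image_of_injective _ val_inj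

lemma mem_toN {F : Finset (Fin m × Fin m)} {q : ℕ × ℕ} :
    q ∈ toN F ↔ ∃ p ∈ F, (p.1 : ℕ) = q.1 ∧ (p.2 : ℕ) = q.2 := by
  simp [toN, Prod.ext_iff]

lemma mem_toN_self {F : Finset (Fin m × Fin m)} {p : Fin m × Fin m} (hp : p ∈ F) :
    ((p.1 : ℕ), (p.2 : ℕ)) ∈ toN F := mem_toN.2 ⟨p, hp, rfl, rfl⟩

lemma toN_lt {F : Finset (Fin m × Fin m)} {q : ℕ × ℕ} (hq : q ∈ toN F) :
    q.1 < m ∧ q.2 < m := by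
  obtain ⟨p, _, h1, h2⟩ := mem_toN.1 hq
  exact ⟨h1 ▸ p.1.isLt, h2 ▸ p.2.isLt⟩

lemma toF_toN (hm : 0 < m) (F : Finset (Fin m × Fin m)) : toF hm (toN F) = F := by
  rw [toN, toF, image_image]
  refine (image_congr ?_).trans image_id
  intro p _
  simp only [Function.comp]
  exact Prod.ext (Fin.val_injective (by simp [Nat.mod_eq_of_lt p.1.isLt]))
    (Fin.val_injective (by simp [Nat.mod_eq_of_lt p.2.isLt]))

lemma toN_toF (hm : 0 < m) {G : Finset (ℕ × ℕ)} (hG : ∀ q ∈ G, q.1 < m ∧ q.2 < m) :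
    toN (toF hm G) = G := by
  rw [toN, toF, image_image]
  refine (image_congr ?_).trans image_id
  intro q hq
  simp only [Function.comp]
  exact Prod.ext (Nat.mod_eq_of_lt (hG q hq).1) (Nat.mod_eq_of_lt (hG q hq).2)

lemma toF_card (hm : 0 < m) {G : Finset (ℕ × ℕ)} (hG : ∀ q ∈ G, q.1 < m ∧ q.2 < m) :
    (toF hm G).card = G.card := by
  conv_rhs => rw [← toN_toF hm hG]
  exact (toN_card _).symm

lemma isray_iff (hm : 0 < m) {F : Finset (Fin m × Fin m)} {i : Fin m} :
    IsRay F i ↔ NRay (range m) (toN F) (i : ℕ) := by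
  constructor
  · intro h
    refine ⟨mem_range.2 i.isLt, fun q hq => ?_⟩
    obtain ⟨p, hp, h1, h2⟩ := mem_toN.1 hq
    have := h p hp
    exact ⟨by rw [← h1]; exact fun he => this.1 (Fin.val_injective he),
      by rw [← h2]; exact fun he => this.2 (Fin.val_injective he)⟩
  · intro h p hp
    have := h.2 _ (mem_toN_self hp)
    exact ⟨fun he => this.1 (by rw [he]), fun he => this.2 (by rw [he])⟩

/-- the first four `IsKL` conditions are equivalent to ℕ-validity of the image. -/
lemma valid_iff (hm : 0 < m) {F : Finset (Fin m × Fin m)} :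
    ((∀ p ∈ F, p.1 < p.2) ∧
     (∀ p ∈ F, ∀ q ∈ F, p ≠ q → p.1 ≠ q.1 ∧ p.1 ≠ q.2 ∧ p.2 ≠ q.1 ∧ p.2 ≠ q.2) ∧
     (∀ p ∈ F, ∀ q ∈ F, ¬(p.1 < q.1 ∧ q.1 < p.2 ∧ p.2 < q.2)) ∧
     (∀ p ∈ F, ∀ i : Fin m, IsRay F i → ¬(p.1 < i ∧ i < p.2)))
    ↔ Valid (range m) (toN F) := by
  constructor
  · rintro ⟨h1, h2, h3, h4⟩
    refine ⟨fun q hq => by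
        have := toN_lt hq
        exact ⟨mem_range.2 this.1, mem_range.2 this.2⟩, ?_, ?_, ?_, ?_⟩
    · intro q hq
      obtain ⟨p, hp, e1, e2⟩ := mem_toN.1 hq
      rw [← e1, ← e2]
      exact h1 p hp
    · intro q hq r hr hne
      obtain ⟨p, hp, e1, e2⟩ := mem_toN.1 hq
      obtain ⟨p', hp', f1, f2⟩ := mem_toN.1 hr
      have hpp : p ≠ p' := by
        rintro rfl
        exact hne (Prod.ext (by omega) (by omega))
      have hd := h2 p hp p' hp' hpp
      refine ⟨?_, ?_, ?_, ?_⟩ <;> intro he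
      · exact hd.1 (Fin.val_injective (by omega))
      · exact hd.2.1 (Fin.val_injective (by omega))
      · exact hd.2.2.1 (Fin.val_injective (by omega))
      · exact hd.2.2.2 (Fin.val_injective (by omega))
    · intro q hq r hr
      obtain ⟨p, hp, e1, e2⟩ := mem_toN.1 hq
      obtain ⟨p', hp', f1, f2⟩ := mem_toN.1 hr
      have := h3 p hp p' hp'
      simp only [Fin.lt_def] at this
      omega
    · intro q hq i hi
      obtain ⟨p, hp, e1, e2⟩ := mem_toN.1 hq
      have him : i < m := mem_range.1 hi.1
      have : IsRay F ⟨i, him⟩ := (isray_iff hm).2 (by simpa using hi)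
      have := h4 p hp ⟨i, him⟩ this
      simp only [Fin.lt_def] at this
      omega
  · rintro ⟨h1, h2, h3, h4, h5⟩
    refine ⟨?_, ?_, ?_, ?_⟩
    · intro p hp
      have := h2 _ (mem_toN_self hp)
      rwa [Fin.lt_def]
    · intro p hp q hq hne
      have := h3 _ (mem_toN_self hp) _ (mem_toN_self hq)
        (fun he => hne (val_inj he))
      refine ⟨?_, ?_, ?_, ?_⟩ <;> intro he
      · exact this.1 (by rw [he])
      · exact this.2.1 (by rw [he])
      · exact this.2.2.1 (by rw [he])
      · exact this.2.2.2 (by rw [he])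
    · intro p hp q hq
      have := h4 _ (mem_toN_self hp) _ (mem_toN_self hq)
      simp only [Fin.lt_def]
      omega
    · intro p hp i hi
      have := h5 _ (mem_toN_self hp) (i : ℕ) ((isray_iff hm).1 hi)
      simp only [Fin.lt_def]
      omega







lemma markable_iff (hm : 0 < m) {F : Finset (Fin m × Fin m)} {p : Fin m × Fin m}
    (hp : p ∈ F) :
    ((∀ q ∈ F, ¬(q.1 < p.1 ∧ p.2 < q.2)) ∧ (∀ i : Fin m, IsRay F i → ¬(i < p.1)))
    ↔ Markable (range m) (toN F) ((p.1 : ℕ), (p.2 : ℕ)) := by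
  constructor
  · rintro ⟨hout, hrays⟩
    refine ⟨mem_toN_self hp, ?_, ?_⟩
    · intro q hq
      obtain ⟨r, hr, e1, e2⟩ := mem_toN.1 hq
      have := hout r hr
      simp only [Fin.lt_def] at this
      simp only
      omega
    · intro i hi
      have him : i < m := mem_range.1 hi.1
      have hra : IsRay F ⟨i, him⟩ := (isray_iff hm).2 (by simpa using hi)
      have := hrays ⟨i, him⟩ hra
      simp only [Fin.lt_def] at this
      simpa using this
  · rintro ⟨_, hout, hrays⟩
    constructor
    · intro q hq
      have := hout _ (mem_toN_self hq)
      simp only [Fin.lt_def]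
      simp only at this
      omega
    · intro i hi
      have := hrays (i : ℕ) ((isray_iff hm).1 hi)
      simp only [Fin.lt_def]
      simpa using this

/-- the set appearing in `invol`: the leftmost-ray singleton. -/
lemma rays_filter_nonempty {l : ℕ} {F : Finset (Fin m × Fin m)}
    (h1 : ∀ p ∈ F, p.1 < p.2)
    (h2 : ∀ p ∈ F, ∀ q ∈ F, p ≠ q → p.1 ≠ q.1 ∧ p.1 ≠ q.2 ∧ p.2 ≠ q.1 ∧ p.2 ≠ q.2)
    (hcd : F.card = l) (hlt : 2 * l < m) :
    (univ.filter (IsRay F)).Nonempty := by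
  have hm : 0 < m := by omega
  have hend : Ends (toN F) ⊆ range m := by
    intro i hi
    rcases mem_ends.1 hi with ⟨q, hq, (rfl | rfl)⟩
    exacts [mem_range.2 (toN_lt hq).1, mem_range.2 (toN_lt hq).2]
  have hcard : (Ends (toN F)).card = 2 * l := by
    rw [ends_card _ _, toN_card, hcd]
    · intro q hq
      obtain ⟨p, hp, e1, e2⟩ := mem_toN.1 hq
      have := h1 p hp
      rw [Fin.lt_def] at this
      omega
    · intro q hq r hr hne
      obtain ⟨p, hp, e1, e2⟩ := mem_toN.1 hq
      obtain ⟨p', hp', f1, f2⟩ := mem_toN.1 hr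
      have hpp : p ≠ p' := by
        rintro rfl
        exact hne (Prod.ext (by omega) (by omega))
      have hd := h2 p hp p' hp' hpp
      refine ⟨?_, ?_, ?_, ?_⟩ <;> intro he
      · exact hd.1 (Fin.val_injective (by omega))
      · exact hd.2.1 (Fin.val_injective (by omega))
      · exact hd.2.2.1 (Fin.val_injective (by omega))
      · exact hd.2.2.2 (Fin.val_injective (by omega))
  obtain ⟨i, hiV, hiE⟩ := exists_of_ssubset
    (ssubset_of_subset_of_ne hend (by
      intro he
      rw [he, card_range] at hcard
      omega))
  refine ⟨⟨i, mem_range.1 hiV⟩, mem_filter.2 ⟨mem_univ _, ?_⟩⟩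
  intro p hp
  constructor
  · intro he
    exact hiE (mem_ends.2 ⟨_, mem_toN_self hp, Or.inl (by rw [he])⟩)
  · intro he
    exact hiE (mem_ends.2 ⟨_, mem_toN_self hp, Or.inr (by rw [he])⟩)

/-- `Gset F` is the filter set used in `invol` for the leftmost ray. -/
noncomputable def Gset (F : Finset (Fin m × Fin m)) : Finset (Fin m) :=
  (univ.filter (IsRay F)).filter (fun i => ∀ j, IsRay F j → i ≤ j)

lemma Gset_eq {F : Finset (Fin m × Fin m)} (hne : (univ.filter (IsRay F)).Nonempty) :
    Gset F = {(univ.filter (IsRay F)).min' hne} := by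
  set r0 := (univ.filter (IsRay F)).min' hne with hr0
  have hr0ray : IsRay F r0 := (mem_filter.1 (min'_mem _ hne)).2
  have hr0min : ∀ j, IsRay F j → r0 ≤ j := fun j hj =>
    min'_le _ _ (mem_filter.2 ⟨mem_univ _, hj⟩)
  ext i
  simp only [Gset, mem_filter, mem_univ, true_and, mem_singleton]
  constructor
  · rintro ⟨hray, hmin⟩
    exact le_antisymm (hmin r0 hr0ray) (hr0min i hray)
  · rintro rfl
    exact ⟨hr0ray, hr0min⟩

lemma gset_card {F : Finset (Fin m × Fin m)} (hne : (univ.filter (IsRay F)).Nonempty) :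
    (Gset F).card = 1 := by rw [Gset_eq hne, card_singleton]

/-- forced marked rays. -/
lemma rM_forced {d : MCD m} (hKL : IsKL d.1 d.2.1 d.2.2)
    (hne : (univ.filter (IsRay d.1)).Nonempty) :
    d.2.2 = if Even ((d.1 \ d.2.1).card) then ∅ else Gset d.1 := by
  set r0 := (univ.filter (IsRay d.1)).min' hne with hr0
  have hsub : d.2.2 ⊆ {r0} := by
    intro i hi
    have h := hKL.2.2.2.2.2.2.1 i hi
    have h1 : i ≤ r0 := not_lt.1 (h.2 r0 (mem_filter.1 (min'_mem _ hne)).2)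
    have h2 : r0 ≤ i := min'_le _ _ (mem_filter.2 ⟨mem_univ _, h.1⟩)
    rw [mem_singleton]
    exact le_antisymm h1 h2
  have hpar := hKL.2.2.2.2.2.2.2
  rw [Gset_eq hne]
  rcases (subset_singleton_iff.1 hsub) with he | he <;> rw [he] <;> rw [he] at hpar
  · rw [if_pos]
    simpa using hpar
  · rw [if_neg]
    rw [card_singleton] at hpar
    rw [Nat.even_iff] at hpar ⊢
    omega

lemma cM_forced {d : MCD m} (hm : 0 < m) (hKL : IsKL d.1 d.2.1 d.2.2)
    (hray : IsRay d.1 (⟨0, hm⟩ : Fin m)) : d.2.1 = ∅ := by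
  rw [eq_empty_iff_forall_notMem]
  intro p hp
  have hps : p ∈ d.1 := hKL.2.2.2.2.1 hp
  have h := (hKL.2.2.2.2.2.1 p hp).2 _ hray
  have hp1 : p.1 ≠ ⟨0, hm⟩ := (hray p hps).1
  refine h ?_
  rw [Fin.lt_def]
  simp only [Fin.val_zero]
  have : (p.1 : ℕ) ≠ 0 := fun he => hp1 (Fin.val_injective (by simpa using he))
  omega







lemma card_symmDiff_singleton {α : Type*} [DecidableEq α] (A : Finset α) (x : α) :
    (A ∆ {x}).card = if x ∈ A then A.card - 1 else A.card + 1 := by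
  by_cases h : x ∈ A
  · rw [if_pos h]
    have : A ∆ {x} = A.erase x := by
      ext y
      simp only [mem_symmDiff, mem_singleton, mem_erase]
      constructor
      · rintro (⟨h1, h2⟩ | ⟨rfl, h2⟩)
        exacts [⟨h2, h1⟩, absurd h h2]
      · rintro ⟨h1, h2⟩
        exact Or.inl ⟨h2, h1⟩
    rw [this, card_erase_of_mem h]
  · rw [if_neg h]
    have : A ∆ {x} = insert x A := by
      ext y
      simp only [mem_symmDiff, mem_singleton, mem_insert]
      constructor
      · rintro (⟨h1, h2⟩ | ⟨rfl, h2⟩)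
        exacts [Or.inr h1, Or.inl rfl]
      · rintro (rfl | h1)
        exacts [Or.inr ⟨rfl, h⟩, Or.inl ⟨h1, fun he => h (he ▸ h1)⟩]
    rw [this, card_insert_of_notMem h]

lemma symmDiff_singleton_subset {α : Type*} [DecidableEq α] {A B : Finset α} {x : α}
    (hA : A ⊆ B) (hx : x ∈ B) : A ∆ {x} ⊆ B := by
  intro y hy
  rcases mem_symmDiff.1 hy with ⟨h1, _⟩ | ⟨h1, _⟩
  · exact hA h1
  · exact (mem_singleton.1 h1) ▸ hx

lemma zero_lt_iff_fin {i : Fin m} (hm : 0 < m) : (⟨0, hm⟩ : Fin m) < i ↔ i ≠ ⟨0, hm⟩ := by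
  rw [Fin.lt_def]
  simp only [Fin.val_zero]
  constructor
  · intro h he
    rw [he] at h
    simp at h
  · intro h
    have : (i : ℕ) ≠ 0 := fun he => h (Fin.val_injective (by simpa using he))
    omega

lemma not_lt_zero_fin {i : Fin m} (hm : 0 < m) : ¬ i < (⟨0, hm⟩ : Fin m) := by
  rw [Fin.lt_def]
  simp

lemma exists_zero_cup {d : MCD m} (hm : 0 < m) (hKL : IsKL d.1 d.2.1 d.2.2)
    (hray : ¬ IsRay d.1 (⟨0, hm⟩ : Fin m)) :
    ∃ c ∈ d.1, c.1 = (⟨0, hm⟩ : Fin m) := by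
  unfold IsRay at hray
  push_neg at hray
  obtain ⟨p, hp, hor⟩ := hray
  refine ⟨p, hp, ?_⟩
  by_cases h1 : p.1 = (⟨0, hm⟩ : Fin m)
  · exact h1
  · exfalso
    have h2 : p.2 = (⟨0, hm⟩ : Fin m) := hor h1
    have := hKL.1 p hp
    rw [h2] at this
    exact not_lt_zero_fin hm this

lemma filter_zero_cup {d : MCD m} (hm : 0 < m) (hKL : IsKL d.1 d.2.1 d.2.2)
    {c : Fin m × Fin m} (hc : c ∈ d.1) (hc1 : c.1 = (⟨0, hm⟩ : Fin m)) :
    d.1.filter (fun p => p.1 = (⟨0, hm⟩ : Fin m) ∨ p.2 = (⟨0, hm⟩ : Fin m)) = {c} := by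
  ext q
  simp only [mem_filter, mem_singleton]
  constructor
  · rintro ⟨hq, hor⟩
    have hq1 : q.1 = (⟨0, hm⟩ : Fin m) := by
      rcases hor with h | h
      · exact h
      · exfalso
        have := hKL.1 q hq
        rw [h] at this
        exact not_lt_zero_fin hm this
    by_contra hne
    exact (hKL.2.1 q hq c hc hne).1 (hq1.trans hc1.symm)
  · rintro rfl
    exact ⟨hc, Or.inl hc1⟩

lemma part1 {l : ℕ} (hm : 0 < m) (hlt : 2 * l < m) (d : MCD m)
    (hd : IsKL d.1 d.2.1 d.2.2 ∧ d.1.card = l) :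
    (IsKL (invol (⟨0, hm⟩ : Fin m) d).1 (invol (⟨0, hm⟩ : Fin m) d).2.1
        (invol (⟨0, hm⟩ : Fin m) d).2.2 ∧ (invol (⟨0, hm⟩ : Fin m) d).1.card = l) ∧
    invol (⟨0, hm⟩ : Fin m) (invol (⟨0, hm⟩ : Fin m) d) = d ∧
    (invol (⟨0, hm⟩ : Fin m) d = d ↔ IsRay d.1 (⟨0, hm⟩ : Fin m)) := by
  obtain ⟨hKL, hcd⟩ := hd
  set z := (⟨0, hm⟩ : Fin m) with hz
  by_cases hray : IsRay d.1 z
  · have he : invol z d = d := by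
      rw [invol, if_pos hray]
    rw [he]
    exact ⟨⟨hKL, hcd⟩, by rw [he], iff_of_true rfl hray⟩
  · obtain ⟨c, hc, hc1⟩ := exists_zero_cup hm hKL hray
    have hF := filter_zero_cup hm hKL hc hc1
    have hne : (univ.filter (IsRay d.1)).Nonempty :=
      rays_filter_nonempty hKL.1 hKL.2.1 hcd hlt
    set r0 := (univ.filter (IsRay d.1)).min' hne with hr0
    have hG' : (univ.filter (IsRay d.1)).filter (fun i => ∀ j, IsRay d.1 j → i ≤ j)
        = {r0} := Gset_eq hne
    have hr0ray : IsRay d.1 r0 := (mem_filter.1 (min'_mem _ hne)).2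
    have hr0min : ∀ j, IsRay d.1 j → r0 ≤ j := fun j hj =>
      min'_le _ _ (mem_filter.2 ⟨mem_univ _, hj⟩)
    have he : invol z d = (d.1, d.2.1 ∆ {c}, d.2.2 ∆ {r0}) := by
      rw [invol, if_neg hray, hF, hG']
    have hsubc : d.2.1 ⊆ d.1 := hKL.2.2.2.2.1
    have hsubc' : d.2.1 ∆ {c} ⊆ d.1 := symmDiff_singleton_subset hsubc hc
    have hucard : d.2.1.card ≤ l := hcd ▸ card_le_card hsubc
    have hucard' : (d.2.1 ∆ {c}).card ≤ l := hcd ▸ card_le_card hsubc'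
    have hKL' : IsKL d.1 (d.2.1 ∆ {c}) (d.2.2 ∆ {r0}) := by
      refine ⟨hKL.1, hKL.2.1, hKL.2.2.1, hKL.2.2.2.1, hsubc', ?_, ?_, ?_⟩
      · intro p hp
        rcases mem_symmDiff.1 hp with ⟨h1, _⟩ | ⟨h1, _⟩
        · exact hKL.2.2.2.2.2.1 p h1
        · rw [mem_singleton.1 h1]
          constructor
          · intro q hq hcon
            rw [hc1] at hcon
            exact not_lt_zero_fin hm hcon.1
          · intro i _ hcon
            rw [hc1] at hcon
            exact not_lt_zero_fin hm hcon
      · intro i hi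
        rcases mem_symmDiff.1 hi with ⟨h1, _⟩ | ⟨h1, _⟩
        · exact hKL.2.2.2.2.2.2.1 i h1
        · rw [mem_singleton.1 h1]
          exact ⟨hr0ray, fun j hj => not_lt.2 (hr0min j hj)⟩
      · have hpar := hKL.2.2.2.2.2.2.2
        have e1 : (d.1 \ d.2.1).card = l - d.2.1.card := by
          rw [card_sdiff_of_subset hsubc, hcd]
        have e2 : (d.1 \ (d.2.1 ∆ {c})).card = l - (d.2.1 ∆ {c}).card := by
          rw [card_sdiff_of_subset hsubc', hcd]
        have e3 := card_symmDiff_singleton d.2.1 c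
        have e4 := card_symmDiff_singleton d.2.2 r0
        rw [e1] at hpar
        rw [e2, e4]
        rw [Nat.even_iff] at hpar ⊢
        by_cases h5 : c ∈ d.2.1 <;> by_cases h6 : r0 ∈ d.2.2
        · rw [if_pos h5] at e3
          rw [if_pos h6]
          have hp1 : 1 ≤ d.2.1.card := card_pos.2 ⟨c, h5⟩
          have hp2 : 1 ≤ d.2.2.card := card_pos.2 ⟨r0, h6⟩
          omega
        · rw [if_pos h5] at e3
          rw [if_neg h6]
          have hp1 : 1 ≤ d.2.1.card := card_pos.2 ⟨c, h5⟩
          omega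
        · rw [if_neg h5] at e3
          rw [if_pos h6]
          have hp2 : 1 ≤ d.2.2.card := card_pos.2 ⟨r0, h6⟩
          omega
        · rw [if_neg h5] at e3
          rw [if_neg h6]
          omega
    refine ⟨⟨by rw [he]; exact hKL', by rw [he]; exact hcd⟩, ?_, ?_⟩
    · have h1 : (invol z d).1 = d.1 := by rw [he]
      have hray2 : ¬ IsRay (invol z d).1 z := by rw [h1]; exact hray
      have he2 : invol z (invol z d)
          = ((invol z d).1, (invol z d).2.1 ∆ {c}, (invol z d).2.2 ∆ {r0}) := by
        rw [invol, if_neg hray2]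
        rw [h1, hF, hG']
      rw [he2, he]
      simp only
      rw [symmDiff_symmDiff_cancel_right, symmDiff_symmDiff_cancel_right]
    · refine iff_of_false ?_ hray
      intro heq
      have : (invol z d).2.1 = d.2.1 := by rw [heq]
      rw [he] at this
      simp only at this
      have hc' : c ∈ d.1.filter (fun p => p.1 = z ∨ p.2 = z) := by
        rw [hF]; exact mem_singleton_self c
      have : ({c} : Finset (Fin m × Fin m)) = ∅ := by
        have h7 := symmDiff_eq_left.1 this
        exact h7
      exact (singleton_ne_empty c) this


lemma val_ne_zero {m : ℕ} (hm : 0 < m) {a : Fin m} (h : a ≠ (⟨0, hm⟩ : Fin m)) :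
    (a : ℕ) ≠ 0 := fun he => h (Fin.val_injective (by simpa using he))

lemma fixed_card {m l : ℕ} (hm : 0 < m) (hml : 2 * l ≤ m - 1) :
    (univ.filter (fun d : MCD m => (IsKL d.1 d.2.1 d.2.2 ∧ d.1.card = l) ∧
        IsRay d.1 (⟨0, hm⟩ : Fin m))).card
      = (validF ((range m).erase 0) l).card := by
  refine card_bij' (fun d _ => toN d.1)
    (fun s hs => (toF hm s, ∅, if Even l then ∅ else Gset (toF hm s))) ?_ ?_ ?_ ?_
  · intro d hd
    rw [mem_filter] at hd
    obtain ⟨-, ⟨hKL, hcd⟩, hray⟩ := hd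
    rw [mem_validF]
    constructor
    · rw [valid_erase_iff hext_zero]
      refine ⟨(valid_iff hm).1 ⟨hKL.1, hKL.2.1, hKL.2.2.1, hKL.2.2.2.1⟩, ?_⟩
      intro q hq
      obtain ⟨p, hp, e1, e2⟩ := mem_toN.1 hq
      have := hray p hp
      exact ⟨e1 ▸ val_ne_zero hm this.1, e2 ▸ val_ne_zero hm this.2⟩
    · rw [toN_card, hcd]
  · intro s hs
    rw [mem_validF] at hs
    have hsV := (valid_erase_iff hext_zero s).1 hs.1
    have hlt : ∀ q ∈ s, q.1 < m ∧ q.2 < m := fun q hq =>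
      ⟨mem_range.1 (hsV.1.1 q hq).1, mem_range.1 (hsV.1.1 q hq).2⟩
    have htn : toN (toF hm s) = s := toN_toF hm hlt
    have hconds := (valid_iff hm (F := toF hm s)).2 (by rw [htn]; exact hsV.1)
    have hray0 : IsRay (toF hm s) (⟨0, hm⟩ : Fin m) := by
      refine (isray_iff hm).2 ?_
      rw [htn]
      exact ⟨mem_range.2 hm, fun p hp => hsV.2 p hp⟩
    have hcup : (toF hm s).card = l := by rw [toF_card hm hlt, hs.2]
    have hrayne : (univ.filter (IsRay (toF hm s))).Nonempty :=
      ⟨_, mem_filter.2 ⟨mem_univ _, hray0⟩⟩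
    rw [mem_filter]
    refine ⟨mem_univ _, ⟨⟨hconds.1, hconds.2.1, hconds.2.2.1, hconds.2.2.2, ?_, ?_, ?_, ?_⟩,
      hcup⟩, hray0⟩
    · exact empty_subset _
    · intro p hp
      simp at hp
    · intro i hi
      by_cases hev : Even l
      · rw [if_pos hev] at hi
        simp at hi
      · rw [if_neg hev] at hi
        simp only [Gset, mem_filter, mem_univ, true_and] at hi
        exact ⟨hi.1, fun j hj => not_lt.2 (hi.2 j hj)⟩
    · rw [sdiff_empty, hcup]
      by_cases hev : Even l
      · rw [if_pos hev, card_empty]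
        simpa using hev
      · rw [if_neg hev, gset_card hrayne]
        rw [Nat.even_iff] at hev ⊢
        omega
  · intro d hd
    rw [mem_filter] at hd
    obtain ⟨-, ⟨hKL, hcd⟩, hray⟩ := hd
    have hne : (univ.filter (IsRay d.1)).Nonempty :=
      ⟨_, mem_filter.2 ⟨mem_univ _, hray⟩⟩
    have h8 := rM_forced hKL hne
    rw [cM_forced hm hKL hray, sdiff_empty, hcd] at h8
    refine Prod.ext (toF_toN hm d.1) (Prod.ext ?_ ?_) <;> dsimp only
    · exact (cM_forced hm hKL hray).symm
    · rw [toF_toN hm d.1]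
      exact h8.symm
  · intro s hs
    dsimp only
    rw [mem_validF] at hs
    have hsV := (valid_erase_iff hext_zero s).1 hs.1
    exact toN_toF hm (fun q hq =>
      ⟨mem_range.1 (hsV.1.1 q hq).1, mem_range.1 (hsV.1.1 q hq).2⟩)

lemma nonfixed_card {m l : ℕ} (hm : 0 < m) (hml : 2 * l ≤ m - 1) :
    (univ.filter (fun d : MCD m => (IsKL d.1 d.2.1 d.2.2 ∧ d.1.card = l) ∧
        ¬ IsRay d.1 (⟨0, hm⟩ : Fin m))).card
      = ((mvalidF (range m) l).filter
          (fun x => ¬ ∀ p ∈ x.1, p.1 ≠ 0 ∧ p.2 ≠ 0)).card := by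
  refine card_bij' (fun d _ => (toN d.1, toN d.2.1))
    (fun x hx => (toF hm x.1, toF hm x.2,
      if Even (l - x.2.card) then ∅ else Gset (toF hm x.1))) ?_ ?_ ?_ ?_
  · intro d hd
    rw [mem_filter] at hd
    obtain ⟨-, ⟨hKL, hcd⟩, hray⟩ := hd
    have hsubc : d.2.1 ⊆ d.1 := hKL.2.2.2.2.1
    rw [mem_filter, mem_mvalidF]
    refine ⟨⟨(valid_iff hm).1 ⟨hKL.1, hKL.2.1, hKL.2.2.1, hKL.2.2.2.1⟩,
      by rw [toN_card, hcd], ?_⟩, ?_⟩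
    · intro q hq
      obtain ⟨p, hp, e1, e2⟩ := mem_toN.1 hq
      have hmk := (markable_iff hm (hsubc hp)).1 (hKL.2.2.2.2.2.1 p hp)
      have : q = ((p.1 : ℕ), (p.2 : ℕ)) := Prod.ext e1.symm e2.symm
      rw [this]
      exact hmk
    · obtain ⟨c, hc, hc1⟩ := exists_zero_cup hm hKL hray
      push_neg
      refine ⟨((c.1 : ℕ), (c.2 : ℕ)), mem_toN_self hc, fun h => absurd ?_ h⟩
      rw [hc1]
  · intro x hx
    rw [mem_filter, mem_mvalidF] at hx
    obtain ⟨⟨hval, hcd, hM⟩, htouch⟩ := hx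
    have hlt1 : ∀ q ∈ x.1, q.1 < m ∧ q.2 < m := fun q hq =>
      ⟨mem_range.1 (hval.1 q hq).1, mem_range.1 (hval.1 q hq).2⟩
    have hsub2 : x.2 ⊆ x.1 := fun p hp => (hM p hp).1
    have hlt2 : ∀ q ∈ x.2, q.1 < m ∧ q.2 < m := fun q hq => hlt1 q (hsub2 hq)
    have htn1 : toN (toF hm x.1) = x.1 := toN_toF hm hlt1
    have htn2 : toN (toF hm x.2) = x.2 := toN_toF hm hlt2
    have hconds := (valid_iff hm (F := toF hm x.1)).2 (by rw [htn1]; exact hval)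
    have hcup : (toF hm x.1).card = l := by rw [toF_card hm hlt1, hcd]
    have hrayne : (univ.filter (IsRay (toF hm x.1))).Nonempty :=
      rays_filter_nonempty hconds.1 hconds.2.1 hcup (by omega)
    have hsubF : toF hm x.2 ⊆ toF hm x.1 := image_subset_image hsub2
    have hcup2 : (toF hm x.2).card = x.2.card := toF_card hm hlt2
    rw [mem_filter]
    refine ⟨mem_univ _, ⟨⟨hconds.1, hconds.2.1, hconds.2.2.1, hconds.2.2.2,
      hsubF, ?_, ?_, ?_⟩, hcup⟩, ?_⟩
    · intro p hp
      obtain ⟨q, hq, he⟩ := mem_image.1 hp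
      have hmem : p ∈ toF hm x.1 := hsubF hp
      have hv1 : ((p.1 : ℕ), (p.2 : ℕ)) = q := by
        rw [← he]
        exact Prod.ext (Nat.mod_eq_of_lt (hlt2 q hq).1) (Nat.mod_eq_of_lt (hlt2 q hq).2)
      refine (markable_iff hm hmem).2 ?_
      rw [htn1, hv1]
      exact hM q hq
    · intro i hi
      by_cases hev : Even (l - x.2.card)
      · rw [if_pos hev] at hi
        simp at hi
      · rw [if_neg hev] at hi
        simp only [Gset, mem_filter, mem_univ, true_and] at hi
        exact ⟨hi.1, fun j hj => not_lt.2 (hi.2 j hj)⟩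
    · rw [card_sdiff_of_subset hsubF, hcup, hcup2]
      by_cases hev : Even (l - x.2.card)
      · rw [if_pos hev, card_empty]
        simpa using hev
      · rw [if_neg hev, gset_card hrayne]
        rw [Nat.even_iff] at hev ⊢
        omega
    · push_neg at htouch
      obtain ⟨q, hq, hor⟩ := htouch
      have hq1 : q.1 = 0 := by
        by_cases h1 : q.1 = 0
        · exact h1
        · exfalso
          have h2 : q.2 = 0 := hor h1
          have := hval.2.1 q hq
          omega
      intro hIsRay
      have hp' : (⟨q.1 % m, Nat.mod_lt _ hm⟩, (⟨q.2 % m, Nat.mod_lt _ hm⟩ : Fin m)) ∈ toF hm x.1 :=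
        mem_image.2 ⟨q, hq, rfl⟩
      refine (hIsRay _ hp').1 ?_
      simp only
      apply Fin.val_injective
      simp [hq1]
  · intro d hd
    dsimp only
    rw [mem_filter] at hd
    obtain ⟨-, ⟨hKL, hcd⟩, hray⟩ := hd
    have hsubc : d.2.1 ⊆ d.1 := hKL.2.2.2.2.1
    have hne : (univ.filter (IsRay d.1)).Nonempty :=
      rays_filter_nonempty hKL.1 hKL.2.1 hcd (by omega)
    have h8 := rM_forced hKL hne
    rw [card_sdiff_of_subset hsubc, hcd] at h8
    refine Prod.ext (toF_toN hm d.1) (Prod.ext ?_ ?_) <;> dsimp only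
    · exact toF_toN hm d.2.1
    · rw [toN_card, toF_toN hm d.1]
      exact h8.symm
  · intro x hx
    dsimp only
    rw [mem_filter, mem_mvalidF] at hx
    obtain ⟨⟨hval, hcd, hM⟩, -⟩ := hx
    have hlt1 : ∀ q ∈ x.1, q.1 < m ∧ q.2 < m := fun q hq =>
      ⟨mem_range.1 (hval.1 q hq).1, mem_range.1 (hval.1 q hq).2⟩
    have hsub2 : x.2 ⊆ x.1 := fun p hp => (hM p hp).1
    exact Prod.ext (toN_toF hm hlt1) (toN_toF hm (fun q hq => hlt1 q (hsub2 hq)))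

lemma final_fixed {m l : ℕ} (hm : 0 < m) (hml : 2 * l ≤ m - 1) :
    Nat.card {d : MCD m //
        (IsKL d.1 d.2.1 d.2.2 ∧ d.1.card = l) ∧ IsRay d.1 (⟨0, hm⟩ : Fin m)} =
      (m - 1).choose l - (if l = 0 then 0 else (m - 1).choose (l - 1)) := by
  rw [Nat.card_eq_fintype_card, Fintype.card_subtype]
  rw [fixed_card hm hml, count_zero_ray hm hml]

lemma final_nonfixed {m l : ℕ} (hm : 0 < m) (hml : 2 * l ≤ m - 1) :
    Nat.card {d : MCD m //
        (IsKL d.1 d.2.1 d.2.2 ∧ d.1.card = l) ∧ ¬IsRay d.1 (⟨0, hm⟩ : Fin m)} =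
      2 * (if l = 0 then 0 else (m - 1).choose (l - 1)) := by
  rw [Nat.card_eq_fintype_card, Fintype.card_subtype]
  rw [nonfixed_card hm hml, count_nonzero_ray hm hml]

lemma final_arith {m l : ℕ} (hm : 0 < m) (hml : 2 * l ≤ m - 1) :
    m.choose l =
      2 * (if l = 0 then 0 else (m - 1).choose (l - 1)) +
        ((m - 1).choose l - (if l = 0 then 0 else (m - 1).choose (l - 1))) := by
  rcases Nat.eq_zero_or_pos l with rfl | hl
  · simp
  · rw [if_neg (by omega)]
    have hP : m.choose l = (m - 1).choose (l - 1) + (m - 1).choose l :=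
      CupCount.pascal (by omega) hl
    have hle : (m - 1).choose (l - 1) ≤ (m - 1).choose l := by
      have := Nat.choose_le_succ_of_lt_half_left (r := l - 1) (n := m - 1)
        (by omega)
      rwa [show l - 1 + 1 = l by omega] at this
    omega
end CupTransfer
end CupProofInternal

/-- For `m` odd and `0 ≤ l ≤ ⌊m/2⌋`, the set of diagrams in `C_KL(m)` with exactly `l`
cups decomposes under the involution of Theorem B into `C(m−1,l) − C(m−1,l−1)` fixed
points (exactly the diagrams with a ray at the first vertex) and `C(m−1,l−1)` two-element
orbits; moreover `C(m,l) = 2·C(m−1,l−1) + (C(m−1,l) − C(m−1,l−1))`. -/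
theorem stmt19 (m l : ℕ) (hodd : Odd m) (hm : 0 < m) (hl : l ≤ m / 2) :
    (∀ d : MCD m, (IsKL d.1 d.2.1 d.2.2 ∧ d.1.card = l) →
      (IsKL (invol (⟨0, hm⟩ : Fin m) d).1 (invol (⟨0, hm⟩ : Fin m) d).2.1
          (invol (⟨0, hm⟩ : Fin m) d).2.2 ∧ (invol (⟨0, hm⟩ : Fin m) d).1.card = l) ∧
      invol (⟨0, hm⟩ : Fin m) (invol (⟨0, hm⟩ : Fin m) d) = d ∧
      (invol (⟨0, hm⟩ : Fin m) d = d ↔ IsRay d.1 (⟨0, hm⟩ : Fin m))) ∧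
    Nat.card {d : MCD m //
        (IsKL d.1 d.2.1 d.2.2 ∧ d.1.card = l) ∧ IsRay d.1 (⟨0, hm⟩ : Fin m)} =
      (m - 1).choose l - (if l = 0 then 0 else (m - 1).choose (l - 1)) ∧
    Nat.card {d : MCD m //
        (IsKL d.1 d.2.1 d.2.2 ∧ d.1.card = l) ∧ ¬IsRay d.1 (⟨0, hm⟩ : Fin m)} =
      2 * (if l = 0 then 0 else (m - 1).choose (l - 1)) ∧
    m.choose l =
      2 * (if l = 0 then 0 else (m - 1).choose (l - 1)) +
        ((m - 1).choose l - (if l = 0 then 0 else (m - 1).choose (l - 1))) := by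
  have hml : 2 * l ≤ m - 1 := by
    obtain ⟨k, hk⟩ := hodd
    omega
  exact ⟨fun d hd => CupTransfer.part1 hm (by omega) d hd,
    CupTransfer.final_fixed hm hml,
    CupTransfer.final_nonfixed hm hml,
    CupTransfer.final_arith hm hml⟩
end
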